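/- arXiv:2201.05219 — 10 statements merged into one kernel-verified Lean document; each statement's English description precedes it below -/
import Mathlib

section
/- Let n, m ≥ 1, let (c_{ij}) (1 ≤ i ≤ n, 1 ≤ j ≤ m) be nonnegative reals, let (k_{iℓ}) (1 ≤ i,ℓ ≤ n) and (h_{jℓ}) (1 ≤ j,ℓ ≤ m) be nonnegative reals, and let g^P, g^A : ℝ → ℝ be locally Lipschitz functions bounded above by constants M^P and M^A respectively. Then for every initial condition (P_0, A_0) ∈ ℝ_{≥0}^n × ℝ_{≥0}^m there exists a unique continuously differentiable function (P, A) : [0,∞) → ℝ^n × ℝ^m with (P(0), A(0)) = (P_0, A_0) satisfying, for all t ≥ 0 and all i, j: P_i'(t) = (g^P(Σ_{j=1}^m c_{ij} A_j(t)) − (1/n) Σ_{ℓ=1}^n k_{iℓ} P_ℓ(t)) P_i(t) and A_j'(t) = (g^A(Σ_{i=1}^n c_{ij} P_i(t)) − (1/m) Σ_{ℓ=1}^m h_{jℓ} A_ℓ(t)) A_j(t); moreover this solution satisfies P_i(t) ≥ 0 and A_j(t) ≥ 0 for all t ≥ 0. -/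
open Set Metric

theorem LocallyLipschitz.lipschitzOnWith_of_compact_convex
    {E F : Type*} [NormedAddCommGroup E] [NormedSpace ℝ E] [PseudoMetricSpace F]
    {f : E → F} (hf : LocallyLipschitz f) {s : Set E} (hs : IsCompact s)
    (hconv : Convex ℝ s) : ∃ K : NNReal, LipschitzOnWith K f s := by
  rcases s.eq_empty_or_nonempty with rfl | ⟨z0, hz0⟩
  · exact ⟨1, by simp⟩
  have hloc : ∀ x : E, ∃ (K : NNReal) (r : ℝ), 0 < r ∧ LipschitzOnWith K f (ball x r) := by
    intro x
    obtain ⟨K, t, ht, hK⟩ := hf x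
    obtain ⟨r, hr, hball⟩ := Metric.mem_nhds_iff.mp ht
    exact ⟨K, r, hr, hK.mono hball⟩
  choose Kx rx hrx hlip using hloc
  obtain ⟨τ, hτs, hcover⟩ := hs.elim_nhds_subcover (fun x => ball x (rx x / 2))
      (fun x _ => ball_mem_nhds x (by have := hrx x; linarith))
  have hτne : τ.Nonempty := by
    rcases Set.mem_iUnion₂.mp (hcover hz0) with ⟨x, hx, -⟩
    exact ⟨x, hx⟩
  set r0 : ℝ := τ.inf' hτne (fun x => rx x / 2) with hr0def
  set K0 : NNReal := τ.sup Kx with hK0def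
  have hr0pos : 0 < r0 := by
    rw [hr0def, Finset.lt_inf'_iff]
    intro x _
    have := hrx x; linarith
  have step : ∀ z ∈ s, ∀ w ∈ s, dist z w < r0 → dist (f z) (f w) ≤ K0 * dist z w := by
    intro z hz w hw hd
    obtain ⟨x, hxτ, hzx⟩ := Set.mem_iUnion₂.mp (hcover hz)
    have hr0le : r0 ≤ rx x / 2 := Finset.inf'_le _ hxτ
    have hzx' : dist z x < rx x / 2 := mem_ball.mp hzx
    have hz' : z ∈ ball x (rx x) := mem_ball.mpr (by have := hrx x; linarith)
    have hw' : w ∈ ball x (rx x) := by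
      rw [mem_ball]
      calc dist w x ≤ dist w z + dist z x := dist_triangle _ _ _
        _ < r0 + rx x / 2 := by rw [dist_comm w z]; linarith
        _ ≤ rx x := by linarith
    have hK : (Kx x : ℝ) ≤ K0 := by
      exact_mod_cast Finset.le_sup (f := Kx) hxτ
    calc dist (f z) (f w) ≤ Kx x * dist z w := (hlip x).dist_le_mul z hz' w hw'
      _ ≤ K0 * dist z w := mul_le_mul_of_nonneg_right hK dist_nonneg
  refine ⟨K0, LipschitzOnWith.of_dist_le_mul fun x hx y hy => ?_⟩
  set d := dist x y with hddef
  have hd0 : 0 ≤ d := dist_nonneg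
  set N : ℕ := ⌊d / r0⌋₊ + 1 with hNdef
  have hNpos : 0 < (N : ℝ) := by positivity
  have hdN : d / N < r0 := by
    rw [div_lt_iff₀ hNpos]
    have h1 : d / r0 < (N : ℝ) := by
      rw [hNdef]; push_cast; exact Nat.lt_floor_add_one _
    rw [mul_comm]; exact (div_lt_iff₀ hr0pos).mp h1
  set g : ℕ → E := fun j => x + ((j : ℝ) / N) • (y - x) with hgdef
  have hgs : ∀ j : ℕ, j ≤ N → g j ∈ s := by
    intro j hj
    have h01 : (0:ℝ) ≤ (j : ℝ) / N := by positivity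
    have h1 : (j : ℝ) / N ≤ 1 := by
      rw [div_le_one hNpos]; exact_mod_cast hj
    have heq : g j = (1 - (j:ℝ)/N) • x + ((j:ℝ)/N) • y := by
      simp only [hgdef, smul_sub, sub_smul, one_smul]; abel
    rw [heq]
    exact hconv hx hy (by linarith) h01 (by ring)
  have hdist : ∀ j : ℕ, dist (g j) (g (j+1)) = d / N := by
    intro j
    have hsub : g j - g (j + 1) = (-(1 / (N:ℝ))) • (y - x) := by
      simp only [hgdef]
      push_cast
      module
    rw [dist_eq_norm, hsub, norm_smul, Real.norm_eq_abs, abs_neg,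
      abs_of_pos (by positivity : (0:ℝ) < 1/(N:ℝ)), ← dist_eq_norm, dist_comm y x, ← hddef]
    ring
  have hg0 : g 0 = x := by simp [hgdef]
  have hgN : g N = y := by
    simp only [hgdef]
    rw [div_self (ne_of_gt hNpos), one_smul]
    abel
  calc dist (f x) (f y) = dist (f (g 0)) (f (g N)) := by rw [hg0, hgN]
    _ ≤ ∑ j ∈ Finset.range N, dist (f (g j)) (f (g (j+1))) :=
        dist_le_range_sum_dist (fun j => f (g j)) N
    _ ≤ ∑ j ∈ Finset.range N, (K0 : ℝ) * (d / N) := by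
        refine Finset.sum_le_sum fun j hj => ?_
        have hjN := Finset.mem_range.mp hj
        have h1 : g j ∈ s := hgs j (le_of_lt hjN)
        have h2 : g (j+1) ∈ s := hgs (j+1) hjN
        have h3 : dist (g j) (g (j+1)) < r0 := by rw [hdist]; exact hdN
        have := step _ h1 _ h2 h3
        rwa [hdist] at this
    _ = K0 * d := by
        rw [Finset.sum_const, Finset.card_range, nsmul_eq_mul]
        field_simp


theorem LocallyLipschitz.mul' {α : Type*} [PseudoMetricSpace α] {f g : α → ℝ}
    (hf : LocallyLipschitz f) (hg : LocallyLipschitz g) :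
    LocallyLipschitz fun x => f x * g x :=
  ((contDiff_fst.mul contDiff_snd : ContDiff ℝ 1 fun p : ℝ × ℝ => p.1 * p.2).locallyLipschitz).comp
    (hf.prodMk hg)

theorem LocallyLipschitz.sub' {α : Type*} [PseudoMetricSpace α] {f g : α → ℝ}
    (hf : LocallyLipschitz f) (hg : LocallyLipschitz g) :
    LocallyLipschitz fun x => f x - g x :=
  ((contDiff_fst.sub contDiff_snd : ContDiff ℝ 1 fun p : ℝ × ℝ => p.1 - p.2).locallyLipschitz).comp
    (hf.prodMk hg)

theorem LocallyLipschitz.add' {α : Type*} [PseudoMetricSpace α] {f g : α → ℝ}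
    (hf : LocallyLipschitz f) (hg : LocallyLipschitz g) :
    LocallyLipschitz fun x => f x + g x :=
  ((contDiff_fst.add contDiff_snd : ContDiff ℝ 1 fun p : ℝ × ℝ => p.1 + p.2).locallyLipschitz).comp
    (hf.prodMk hg)

theorem LocallyLipschitz.sum' {α : Type*} [PseudoMetricSpace α] {ι : Type*} (s : Finset ι)
    {f : ι → α → ℝ} (hf : ∀ i ∈ s, LocallyLipschitz (f i)) :
    LocallyLipschitz fun x => ∑ i ∈ s, f i x := by
  classical
  induction s using Finset.induction_on with
  | empty => simpa using LocallyLipschitz.const (0:ℝ)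
  | insert a s hnotmem ih =>
    simp only [Finset.sum_insert hnotmem]
    exact (hf a (Finset.mem_insert_self a s)).add'
      (ih fun i hi => hf i (Finset.mem_insert_of_mem hi))

theorem LocallyLipschitz.pi' {α : Type*} [PseudoMetricSpace α] {ι : Type*} [Fintype ι]
    {f : α → ι → ℝ} (h : ∀ i, LocallyLipschitz fun x => f x i) : LocallyLipschitz f := by
  intro x
  choose K t ht hK using fun i => h i x
  refine ⟨Finset.univ.sup K, ⋂ i, t i, (Filter.iInter_mem).mpr ht, ?_⟩
  intro y hy z hz
  rw [edist_pi_def]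
  refine Finset.sup_le fun i _ => ?_
  calc edist (f y i) (f z i) ≤ K i * edist y z :=
        hK i (Set.mem_iInter.mp hy i) (Set.mem_iInter.mp hz i)
    _ ≤ Finset.univ.sup K * edist y z := by
        gcongr
        exact_mod_cast ENNReal.coe_le_coe.mpr (Finset.le_sup (Finset.mem_univ i))

theorem locallyLipschitz_eval {ι : Type*} [Fintype ι] (i : ι) :
    LocallyLipschitz fun v : ι → ℝ => v i :=
  (LipschitzWith.of_dist_le_mul (K := 1) fun x y => by
    simpa using dist_le_pi_dist x y i).locallyLipschitz

theorem expRep {u β : ℝ → ℝ} (hβ : Continuous β)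
    (hu : ∀ t ∈ Ici (0:ℝ), HasDerivWithinAt u (β t * u t) (Ici 0) t) :
    ∀ t ∈ Ici (0:ℝ), u t = u 0 * Real.exp (∫ s in (0:ℝ)..t, β s) := by
  set Bf : ℝ → ℝ := fun t => ∫ s in (0:ℝ)..t, β s with hBfdef
  have hB : ∀ t, HasDerivAt Bf (β t) t := fun t =>
    intervalIntegral.integral_hasDerivAt_right (hβ.intervalIntegrable _ _)
      (hβ.stronglyMeasurableAtFilter _ _) hβ.continuousAt
  set w : ℝ → ℝ := fun t => u t * Real.exp (-Bf t) with hwdef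
  have hwd : ∀ t ∈ Ici (0:ℝ), HasDerivWithinAt w 0 (Ici 0) t := by
    intro t ht
    have h1 : HasDerivAt (fun s => Real.exp (-Bf s)) (Real.exp (-Bf t) * (-β t)) t :=
      (hB t).neg.exp
    have h2 : HasDerivWithinAt (fun s => u s * Real.exp (-Bf s))
        (β t * u t * Real.exp (-Bf t) + u t * (Real.exp (-Bf t) * -β t)) (Ici 0) t :=
      (hu t ht).mul h1.hasDerivWithinAt
    convert h2 using 1
    ring
  have key : ∀ t ∈ Ici (0:ℝ), w t = w 0 := by
    intro T hT
    have := constant_of_has_deriv_right_zero (f := w) (a := 0) (b := T)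
      (fun t ht => ((hwd t ht.1).continuousWithinAt).mono Icc_subset_Ici_self)
      (fun x hx => (hwd x hx.1).mono (Ici_subset_Ici.mpr hx.1))
    exact this T ⟨hT, le_refl T⟩
  intro t ht
  have hw0 : w 0 = u 0 := by
    simp [hwdef, hBfdef, intervalIntegral.integral_same]
  have hwt := key t ht
  rw [hw0] at hwt
  calc u t = (u t * Real.exp (-Bf t)) * Real.exp (Bf t) := by
        rw [mul_assoc, ← Real.exp_add]; simp
    _ = u 0 * Real.exp (Bf t) := by rw [show u t * Real.exp (-Bf t) = u 0 from hwt]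

section Aux
variable {E : Type*} [NormedAddCommGroup E] [NormedSpace ℝ E] [FiniteDimensional ℝ E]

theorem hasDerivWithinAt_singleton' (f : ℝ → E) (x : ℝ) (d : E) :
    HasDerivWithinAt f d {x} x := by
  have h : HasFDerivWithinAt f (ContinuousLinearMap.smulRight (1 : ℝ →L[ℝ] ℝ) d) {x} x := by
    simp only [HasFDerivWithinAt, nhdsWithin_singleton, hasFDerivAtFilter_iff_isLittleO,
      Asymptotics.isLittleO_pure, sub_self]
    simp
  simpa using h.hasDerivWithinAt

theorem uniq_on_Icc {vf : E → E} (hv : LocallyLipschitz vf) {f g : ℝ → E} {b : ℝ}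
    (hf : ∀ t ∈ Icc (0:ℝ) b, HasDerivWithinAt f (vf (f t)) (Icc 0 b) t)
    (hg : ∀ t ∈ Icc (0:ℝ) b, HasDerivWithinAt g (vf (g t)) (Icc 0 b) t)
    (h0 : f 0 = g 0) : EqOn f g (Icc 0 b) := by
  rcases lt_or_ge b 0 with hb | hb
  · rw [Icc_eq_empty (by linarith)]
    exact fun t ht => absurd ht (notMem_empty t)
  have hfc : ContinuousOn f (Icc 0 b) := fun t ht => (hf t ht).continuousWithinAt
  have hgc : ContinuousOn g (Icc 0 b) := fun t ht => (hg t ht).continuousWithinAt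
  obtain ⟨ρ, hρ⟩ := ((isCompact_Icc.image_of_continuousOn hfc).union
      (isCompact_Icc.image_of_continuousOn hgc)).isBounded.subset_closedBall 0
  obtain ⟨K, hK⟩ := hv.lipschitzOnWith_of_compact_convex (isCompact_closedBall 0 ρ)
      (convex_closedBall 0 ρ)
  have derivmem : ∀ (F : ℝ → E), (∀ t ∈ Icc (0:ℝ) b, HasDerivWithinAt F (vf (F t)) (Icc 0 b) t) →
      ∀ t ∈ Ico (0:ℝ) b, HasDerivWithinAt F (vf (F t)) (Ici t) t := by
    intro F hF t ht
    refine (hF t ⟨ht.1, le_of_lt ht.2⟩).mono_of_mem_nhdsWithin ?_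
    refine Filter.mem_of_superset (inter_mem_nhdsWithin (Ici t) (Iio_mem_nhds ht.2)) ?_
    rintro s ⟨hs1, hs2⟩
    exact ⟨le_trans ht.1 hs1, le_of_lt hs2⟩
  exact ODE_solution_unique_of_mem_Icc_right (v := fun _ x => vf x)
    (s := fun _ => closedBall 0 ρ) (fun _ _ => hK) hfc (derivmem f hf)
    (fun t ht => hρ (Set.mem_union_left _ (mem_image_of_mem f ⟨ht.1, ht.2.le⟩)))
    hgc (derivmem g hg)
    (fun t ht => hρ (Set.mem_union_right _ (mem_image_of_mem g ⟨ht.1, ht.2.le⟩))) h0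

theorem exists_sol_Icc {vf : E → E} (hv : LocallyLipschitz vf) {B : ℝ} (hB : 0 ≤ B)
    (hgrow : ∀ x, ‖vf x‖ ≤ B * ‖x‖ + B) (x₀ : E) (b : ℝ) :
    ∃ f : ℝ → E, f 0 = x₀ ∧ ∀ t ∈ Icc (0:ℝ) b, HasDerivWithinAt f (vf (f t)) (Icc 0 b) t := by
  set δ : ℝ := 1/(2*B+2) with hδdef
  have hδpos : 0 < δ := by positivity
  have main : ∀ j : ℕ, ∃ f : ℝ → E, f 0 = x₀ ∧
      ∀ t ∈ Icc (0:ℝ) (j*δ), HasDerivWithinAt f (vf (f t)) (Icc 0 (j*δ)) t := by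
    intro j
    induction j with
    | zero =>
      refine ⟨fun _ => x₀, rfl, ?_⟩
      intro t ht
      simp only [Nat.cast_zero, zero_mul] at ht ⊢
      rw [Icc_self] at ht ⊢
      rcases ht with rfl
      exact hasDerivWithinAt_singleton' _ _ _
    | succ j ih =>
      obtain ⟨f, hf0, hf⟩ := ih
      set a : ℝ := j * δ with hadef
      have ha0 : 0 ≤ a := by positivity
      set Q : ℝ := ‖f a‖ with hQdef
      have hQ0 : 0 ≤ Q := norm_nonneg _
      set ρ : ℝ := Q + 1 with hρdef
      obtain ⟨K, hK⟩ := hv.lipschitzOnWith_of_compact_convex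
        (isCompact_closedBall (f a) ρ) (convex_closedBall _ _)
      set C : ℝ := B * (2*Q+1) + B with hCdef
      have hPL : IsPicardLindelof (fun _ x => vf x) (⟨a, le_refl a, by linarith⟩ : Icc a (a+δ))
          (f a) ⟨ρ, by positivity⟩ 0 ⟨C, by positivity⟩ K := by
        constructor
        · exact fun t _ => hK
        · exact fun x _ => continuousOn_const
        · intro t _ x hx
          have hxn : ‖x‖ ≤ 2*Q+1 := by
            have h1 : ‖x - f a‖ ≤ ρ := mem_closedBall_iff_norm.mp hx
            calc ‖x‖ = ‖x - f a + f a‖ := by rw [sub_add_cancel]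
              _ ≤ ‖x - f a‖ + ‖f a‖ := norm_add_le _ _
              _ ≤ ρ + Q := by rw [← hQdef]; linarith
              _ = 2*Q+1 := by rw [hρdef]; ring
          calc ‖vf x‖ ≤ B * ‖x‖ + B := hgrow x
            _ ≤ B * (2*Q+1) + B := by gcongr
        · show C * max (a+δ-a) (a-a) ≤ ρ - ((0:NNReal):ℝ)
          rw [NNReal.coe_zero, sub_zero]
          have hmax : max (a+δ-a) (a-a) = δ := by
            rw [show a+δ-a = δ by ring, show a-a = 0 by ring]
            exact max_eq_left hδpos.le
          rw [hmax, hδdef, hCdef, mul_one_div, div_le_iff₀ (by positivity : (0:ℝ) < 2*B+2)]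
          nlinarith
      obtain ⟨g, hga, hgd⟩ := hPL.exists_eq_forall_mem_Icc_hasDerivWithinAt₀
      have hga : g a = f a := hga
      set F : ℝ → E := fun t => if t ≤ a then f t else g t with hFdef
      have hcast : ((j+1 : ℕ) : ℝ) * δ = a + δ := by push_cast; ring
      refine ⟨F, ?_, ?_⟩
      · show F 0 = x₀
        rw [hFdef]
        simp only [if_pos ha0]
        exact hf0
      intro t ht
      rw [hcast] at ht ⊢
      have hFf : EqOn F f (Icc 0 a) := fun s hs => if_pos hs.2
      have hFg : EqOn F g (Icc a (a+δ)) := by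
        intro s hs
        by_cases hsa : s ≤ a
        · have hseq : s = a := le_antisymm hsa hs.1
          show (if s ≤ a then f s else g s) = g s
          rw [if_pos hsa, hseq, hga]
        · exact if_neg hsa
      rcases lt_trichotomy t a with htlt | hteq | htgt
      · have hmem : Icc (0:ℝ) a ∈ nhdsWithin t (Icc 0 (a+δ)) :=
          Filter.mem_of_superset (inter_mem_nhdsWithin (Icc 0 (a+δ)) (Iio_mem_nhds htlt))
            (fun s hs => ⟨hs.1.1, le_of_lt hs.2⟩)
        have h1 := (hf t ⟨ht.1, le_of_lt htlt⟩).mono_of_mem_nhdsWithin hmem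
        have heq : F =ᶠ[nhdsWithin t (Icc 0 (a+δ))] f :=
          Filter.eventually_of_mem hmem (fun s hs => hFf hs)
        have hFt : F t = f t := if_pos htlt.le
        rw [show vf (F t) = vf (f t) from by rw [hFt]]
        exact h1.congr_of_eventuallyEq heq hFt
      · rw [hteq] at ht ⊢
        have hfa : HasDerivWithinAt f (vf (f a)) (Icc 0 a) a := hf a ⟨ht.1, le_refl a⟩
        have hga' : HasDerivWithinAt g (vf (g a)) (Icc a (a+δ)) a := hgd a ⟨le_refl a, by linarith⟩
        have hFt : F a = f a := if_pos (le_refl a)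
        have h1 : HasDerivWithinAt F (vf (F a)) (Icc 0 a) a := by
          rw [show vf (F a) = vf (f a) from by rw [hFt]]
          exact hfa.congr hFf hFt
        have h2 : HasDerivWithinAt F (vf (F a)) (Icc a (a+δ)) a := by
          rw [show vf (F a) = vf (g a) from by rw [hFt, ← hga]]
          exact hga'.congr hFg (by rw [hFt, ← hga])
        have h3 := h1.union h2
        rwa [Icc_union_Icc_eq_Icc ht.1 (by linarith)] at h3
      · have hmem : Icc a (a+δ) ∈ nhdsWithin t (Icc 0 (a+δ)) :=
          Filter.mem_of_superset (inter_mem_nhdsWithin (Icc 0 (a+δ)) (Ioi_mem_nhds htgt))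
            (fun s hs => ⟨le_of_lt hs.2, hs.1.2⟩)
        have h1 := (hgd t ⟨le_of_lt htgt, ht.2⟩).mono_of_mem_nhdsWithin hmem
        have heq : F =ᶠ[nhdsWithin t (Icc 0 (a+δ))] g :=
          Filter.eventually_of_mem hmem (fun s hs => hFg hs)
        have hFt : F t = g t := if_neg (not_le.mpr htgt)
        rw [show vf (F t) = vf (g t) from by rw [hFt]]
        exact h1.congr_of_eventuallyEq heq hFt
  obtain ⟨j, hj⟩ := exists_nat_ge (b/δ)
  have hjb : b ≤ j * δ := by
    rw [div_le_iff₀ hδpos] at hj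
    linarith
  obtain ⟨f, hf0, hf⟩ := main j
  exact ⟨f, hf0, fun t ht => (hf t ⟨ht.1, le_trans ht.2 hjb⟩).mono
    (Icc_subset_Icc le_rfl hjb)⟩

theorem glue_global {vf : E → E} (hv : LocallyLipschitz vf) (x₀ : E)
    (hex : ∀ N : ℕ, ∃ f : ℝ → E, f 0 = x₀ ∧
      ∀ t ∈ Icc (0:ℝ) (N:ℝ), HasDerivWithinAt f (vf (f t)) (Icc 0 (N:ℝ)) t) :
    ∃ f : ℝ → E, f 0 = x₀ ∧ Continuous f ∧
      (∀ t ∈ Ici (0:ℝ), HasDerivWithinAt f (vf (f t)) (Ici 0) t) ∧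
      ∀ (g : ℝ → E) (b : ℝ), g 0 = x₀ →
        (∀ t ∈ Icc (0:ℝ) b, HasDerivWithinAt g (vf (g t)) (Icc 0 b) t) →
        EqOn f g (Icc 0 b) := by
  choose F hF0 hFd using hex
  have agree : ∀ (N M : ℕ) (t : ℝ), 0 ≤ t → t ≤ (N:ℝ) → t ≤ (M:ℝ) → F N t = F M t := by
    have key : ∀ (N M : ℕ), N ≤ M → ∀ (t : ℝ), 0 ≤ t → t ≤ (N:ℝ) → F N t = F M t := by
      intro N M hNM t ht hN
      have hcast : (N:ℝ) ≤ (M:ℝ) := by exact_mod_cast hNM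
      exact uniq_on_Icc hv (hFd N)
        (fun s hs => (hFd M s (Icc_subset_Icc le_rfl hcast hs)).mono (Icc_subset_Icc le_rfl hcast))
        ((hF0 N).trans (hF0 M).symm) ⟨ht, hN⟩
    intro N M t ht hN hM
    rcases le_total N M with hNM | hNM
    · exact key N M hNM t ht hN
    · exact (key M N hNM t ht hM).symm
  set f : ℝ → E := fun t => F (⌊t⌋₊ + 1) (max t 0) with hfdef
  have floor_lt : ∀ t : ℝ, 0 ≤ t → t ≤ ((⌊t⌋₊ + 1 : ℕ) : ℝ) := by
    intro t ht
    push_cast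
    exact (Nat.lt_floor_add_one t).le
  have fagree : ∀ (N : ℕ) (t : ℝ), 0 ≤ t → t ≤ (N:ℝ) → f t = F N t := by
    intro N t ht hN
    rw [hfdef]
    dsimp only
    rw [max_eq_left ht]
    exact agree _ N t ht (floor_lt t ht) hN
  have hf0 : f 0 = x₀ := by
    rw [hfdef]
    dsimp only
    rw [max_self]
    exact hF0 _
  have hfneg : ∀ s : ℝ, s ≤ 0 → f s = x₀ := by
    intro s hs
    rw [hfdef]
    dsimp only
    rw [max_eq_right hs]
    exact hF0 _
  have hFcont : ∀ N : ℕ, ContinuousOn (F N) (Icc 0 (N:ℝ)) :=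
    fun N s hs => (hFd N s hs).continuousWithinAt
  have hNbig : ∀ t : ℝ, t + 1 ≤ ((⌊t⌋₊ + 2 : ℕ) : ℝ) := by
    intro t
    push_cast
    rcases le_or_gt 0 t with ht | ht
    · have := Nat.lt_floor_add_one t; linarith
    · have : (0:ℝ) ≤ ⌊t⌋₊ := by positivity
      linarith
  have hcont : Continuous f := by
    rw [continuous_iff_continuousAt]
    intro t
    rcases lt_or_ge t 0 with ht | ht
    · refine ContinuousAt.congr_of_eventuallyEq (continuousAt_const (y := x₀)) ?_
      exact Filter.eventually_of_mem (Iio_mem_nhds ht) (fun s hs => hfneg s (le_of_lt hs))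
    · set N : ℕ := ⌊t⌋₊ + 2 with hNdef
      have htN : t + 1 ≤ (N:ℝ) := hNbig t
      have hN0 : (0:ℝ) ≤ (N:ℝ) := by positivity
      have heq : ∀ s ∈ Ioo (t-1) (t+1), f s = F N (max s 0) := by
        intro s hs
        rcases le_or_gt 0 s with hs0 | hs0
        · rw [max_eq_left hs0]
          exact fagree N s hs0 (by linarith [hs.2])
        · rw [max_eq_right hs0.le]
          exact (hfneg s hs0.le).trans (hF0 N).symm
      have hmax : ContinuousWithinAt (fun s : ℝ => max s 0) (Ioo (t-1) (t+1)) t :=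
        ((continuous_id.max continuous_const).continuousAt).continuousWithinAt
      have hmemt : max t 0 ∈ Icc (0:ℝ) (N:ℝ) :=
        ⟨le_max_right _ _, by rw [max_eq_left ht]; linarith⟩
      have hFN : ContinuousWithinAt (F N) (Icc 0 (N:ℝ)) (max t 0) := hFcont N _ hmemt
      have hcomp : ContinuousWithinAt (fun s => F N (max s 0)) (Ioo (t-1) (t+1)) t := by
        refine ContinuousWithinAt.comp hFN hmax ?_
        intro s hs
        exact ⟨le_max_right _ _, max_le (by linarith [hs.2]) hN0⟩
      have hca := hcomp.continuousAt (Ioo_mem_nhds (by linarith) (by linarith))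
      exact hca.congr_of_eventuallyEq (Filter.eventually_of_mem
        (Ioo_mem_nhds (by linarith) (by linarith)) (fun s hs => heq s hs))
  have hderiv : ∀ t ∈ Ici (0:ℝ), HasDerivWithinAt f (vf (f t)) (Ici 0) t := by
    intro t ht
    set N : ℕ := ⌊t⌋₊ + 2 with hNdef
    have htN : t + 1 ≤ (N:ℝ) := hNbig t
    have h1 : HasDerivWithinAt (F N) (vf (F N t)) (Icc 0 (N:ℝ)) t :=
      hFd N t ⟨ht, by linarith⟩
    have hmem : Icc (0:ℝ) (N:ℝ) ∈ nhdsWithin t (Ici 0) :=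
      Filter.mem_of_superset (inter_mem_nhdsWithin (Ici 0) (Iio_mem_nhds (by linarith : t < (N:ℝ))))
        (fun s hs => ⟨hs.1, le_of_lt hs.2⟩)
    have h2 := h1.mono_of_mem_nhdsWithin hmem
    have heq : f =ᶠ[nhdsWithin t (Ici 0)] F N :=
      Filter.eventually_of_mem hmem (fun s hs => fagree N s hs.1 hs.2)
    have hft : f t = F N t := fagree N t ht (by linarith)
    rw [show vf (f t) = vf (F N t) from by rw [hft]]
    exact h2.congr_of_eventuallyEq heq hft
  refine ⟨f, hf0, hcont, hderiv, ?_⟩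
  intro g b hg0 hgd s hs
  set N : ℕ := ⌈b⌉₊ with hNdef
  have hbN : b ≤ (N:ℝ) := Nat.le_ceil b
  have hFNb : ∀ t ∈ Icc (0:ℝ) b, HasDerivWithinAt (F N) (vf (F N t)) (Icc 0 b) t :=
    fun t htb => (hFd N t (Icc_subset_Icc le_rfl hbN htb)).mono (Icc_subset_Icc le_rfl hbN)
  have huniq := uniq_on_Icc hv hFNb hgd ((hF0 N).trans hg0.symm)
  rw [fagree N s hs.1 (le_trans hs.2 hbN)]
  exact huniq hs

end Aux
set_option maxHeartbeats 2000000 in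
/-- Existence, uniqueness and nonnegativity of the solution of the
plant–pollinator ODE system on `[0,∞)`. -/
theorem stmt_0 (n m : ℕ) (hn : 1 ≤ n) (hm : 1 ≤ m)
    (c : Fin n → Fin m → ℝ) (hc : ∀ i j, 0 ≤ c i j)
    (k : Fin n → Fin n → ℝ) (hk : ∀ i l, 0 ≤ k i l)
    (h : Fin m → Fin m → ℝ) (hh : ∀ j l, 0 ≤ h j l)
    (gP gA : ℝ → ℝ) (hgPlip : LocallyLipschitz gP) (hgAlip : LocallyLipschitz gA)
    (MP MA : ℝ) (hMP : ∀ x, gP x ≤ MP) (hMA : ∀ x, gA x ≤ MA)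
    (P0 : Fin n → ℝ) (A0 : Fin m → ℝ)
    (hP0 : ∀ i, 0 ≤ P0 i) (hA0 : ∀ j, 0 ≤ A0 j) :
    ∃ (P : ℝ → Fin n → ℝ) (A : ℝ → Fin m → ℝ),
      (P 0 = P0 ∧ A 0 = A0
        ∧ (∀ t ∈ Ici (0:ℝ), ∀ i, HasDerivWithinAt (fun s => P s i)
            ((gP (∑ j, c i j * A t j) - (1 / (n:ℝ)) * ∑ l, k i l * P t l) * P t i)
            (Ici 0) t)
        ∧ (∀ t ∈ Ici (0:ℝ), ∀ j, HasDerivWithinAt (fun s => A s j)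
            ((gA (∑ i, c i j * P t i) - (1 / (m:ℝ)) * ∑ l, h j l * A t l) * A t j)
            (Ici 0) t)
        ∧ (∀ t ∈ Ici (0:ℝ), (∀ i, 0 ≤ P t i) ∧ (∀ j, 0 ≤ A t j)))
      ∧ ∀ (P' : ℝ → Fin n → ℝ) (A' : ℝ → Fin m → ℝ),
          (P' 0 = P0 ∧ A' 0 = A0
            ∧ (∀ t ∈ Ici (0:ℝ), ∀ i, HasDerivWithinAt (fun s => P' s i)
                ((gP (∑ j, c i j * A' t j) - (1 / (n:ℝ)) * ∑ l, k i l * P' t l) * P' t i)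
                (Ici 0) t)
            ∧ (∀ t ∈ Ici (0:ℝ), ∀ j, HasDerivWithinAt (fun s => A' s j)
                ((gA (∑ i, c i j * P' t i) - (1 / (m:ℝ)) * ∑ l, h j l * A' t l) * A' t j)
                (Ici 0) t)) →
          ∀ t ∈ Ici (0:ℝ), (∀ i, P' t i = P t i) ∧ (∀ j, A' t j = A t j) := by
  classical
  set x₀ : (Fin n → ℝ) × (Fin m → ℝ) := (P0, A0) with hx₀def
  set M : ℝ := max (max MP MA) 0 with hMdef
  have hM0 : 0 ≤ M := le_max_right _ _
  have hMPM : MP ≤ M := le_trans (le_max_left _ _) (le_max_left _ _)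
  have hMAM : MA ≤ M := le_trans (le_max_right _ _) (le_max_left _ _)
  have hn0 : (0:ℝ) < (n:ℝ) := by exact_mod_cast hn
  have hm0 : (0:ℝ) < (m:ℝ) := by exact_mod_cast hm
  set q : ℝ → ℝ → ℝ := fun R t => max 0 (min t R) with hqdef
  have hq0 : ∀ R t, 0 ≤ q R t := fun R t => le_max_left _ _
  have hqid : ∀ R t, 0 ≤ t → t ≤ R → q R t = t := by
    intro R t h1 h2
    simp only [hqdef]
    rw [min_eq_left h2, max_eq_right h1]
  have hqle : ∀ R t, 0 ≤ R → q R t ≤ R := fun R t hR => max_le hR (min_le_right _ _)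
  set βP : ℝ → ((Fin n → ℝ) × (Fin m → ℝ)) → Fin n → ℝ := fun R x i =>
    gP (∑ j, c i j * q R (x.2 j)) - (1 / (n:ℝ)) * ∑ l, k i l * q R (x.1 l) with hβPdef
  set βA : ℝ → ((Fin n → ℝ) × (Fin m → ℝ)) → Fin m → ℝ := fun R x j =>
    gA (∑ i, c i j * q R (x.1 i)) - (1 / (m:ℝ)) * ∑ l, h j l * q R (x.2 l) with hβAdef
  set vR : ℝ → ((Fin n → ℝ) × (Fin m → ℝ)) → ((Fin n → ℝ) × (Fin m → ℝ)) := fun R x =>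
    (fun i => βP R x i * x.1 i, fun j => βA R x j * x.2 j) with hvRdef
  set vtrue : ((Fin n → ℝ) × (Fin m → ℝ)) → ((Fin n → ℝ) × (Fin m → ℝ)) := fun x =>
    (fun i => (gP (∑ j, c i j * x.2 j) - (1 / (n:ℝ)) * ∑ l, k i l * x.1 l) * x.1 i,
     fun j => (gA (∑ i, c i j * x.1 i) - (1 / (m:ℝ)) * ∑ l, h j l * x.2 l) * x.2 j) with hvdef
  -- locally Lipschitz infrastructure
  have hco1 : ∀ i, LocallyLipschitz (fun x : (Fin n → ℝ) × (Fin m → ℝ) => x.1 i) :=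
    fun i => (locallyLipschitz_eval i).comp LipschitzWith.prod_fst.locallyLipschitz
  have hco2 : ∀ j, LocallyLipschitz (fun x : (Fin n → ℝ) × (Fin m → ℝ) => x.2 j) :=
    fun j => (locallyLipschitz_eval j).comp LipschitzWith.prod_snd.locallyLipschitz
  have hqLL : ∀ R, LocallyLipschitz (q R) := fun R =>
    (LocallyLipschitz.id.min_const R).const_max 0
  have hβPLL : ∀ R i, LocallyLipschitz (fun x => βP R x i) := by
    intro R i
    simp only [hβPdef]
    apply LocallyLipschitz.sub'
    · exact hgPlip.comp (LocallyLipschitz.sum' Finset.univ (fun j _ =>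
        (LocallyLipschitz.const (c i j)).mul' ((hqLL R).comp (hco2 j))))
    · exact (LocallyLipschitz.const (1/(n:ℝ))).mul' (LocallyLipschitz.sum' Finset.univ
        (fun l _ => (LocallyLipschitz.const (k i l)).mul' ((hqLL R).comp (hco1 l))))
  have hβALL : ∀ R j, LocallyLipschitz (fun x => βA R x j) := by
    intro R j
    simp only [hβAdef]
    apply LocallyLipschitz.sub'
    · exact hgAlip.comp (LocallyLipschitz.sum' Finset.univ (fun i _ =>
        (LocallyLipschitz.const (c i j)).mul' ((hqLL R).comp (hco1 i))))
    · exact (LocallyLipschitz.const (1/(m:ℝ))).mul' (LocallyLipschitz.sum' Finset.univ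
        (fun l _ => (LocallyLipschitz.const (h j l)).mul' ((hqLL R).comp (hco2 l))))
  have hvRLL : ∀ R, LocallyLipschitz (vR R) := by
    intro R
    simp only [hvRdef]
    apply LocallyLipschitz.prodMk
    · exact LocallyLipschitz.pi' (fun i => (hβPLL R i).mul' (hco1 i))
    · exact LocallyLipschitz.pi' (fun j => (hβALL R j).mul' (hco2 j))
  have hvLL : LocallyLipschitz vtrue := by
    simp only [hvdef]
    apply LocallyLipschitz.prodMk
    · refine LocallyLipschitz.pi' (fun i => LocallyLipschitz.mul' ?_ (hco1 i))
      apply LocallyLipschitz.sub'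
      · exact hgPlip.comp (LocallyLipschitz.sum' Finset.univ (fun j _ =>
          (LocallyLipschitz.const (c i j)).mul' (hco2 j)))
      · exact (LocallyLipschitz.const (1/(n:ℝ))).mul' (LocallyLipschitz.sum' Finset.univ
          (fun l _ => (LocallyLipschitz.const (k i l)).mul' (hco1 l)))
    · refine LocallyLipschitz.pi' (fun j => LocallyLipschitz.mul' ?_ (hco2 j))
      apply LocallyLipschitz.sub'
      · exact hgAlip.comp (LocallyLipschitz.sum' Finset.univ (fun i _ =>
          (LocallyLipschitz.const (c i j)).mul' (hco1 i)))
      · exact (LocallyLipschitz.const (1/(m:ℝ))).mul' (LocallyLipschitz.sum' Finset.univ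
          (fun l _ => (LocallyLipschitz.const (h j l)).mul' (hco2 l)))
  -- bounds on β
  set SP : ℝ := ∑ i, ∑ j, c i j with hSPdef
  set SA : ℝ := ∑ j, ∑ i, c i j with hSAdef
  set Sk : ℝ := ∑ i, ∑ l, k i l with hSkdef
  set Sh : ℝ := ∑ j, ∑ l, h j l with hShdef
  have hSk0 : 0 ≤ Sk := Finset.sum_nonneg fun i _ => Finset.sum_nonneg fun l _ => hk i l
  have hSh0 : 0 ≤ Sh := Finset.sum_nonneg fun j _ => Finset.sum_nonneg fun l _ => hh j l
  have hargP : ∀ R, 0 ≤ R → ∀ x : (Fin n → ℝ) × (Fin m → ℝ), ∀ i,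
      (∑ j, c i j * q R (x.2 j)) ∈ Icc (0:ℝ) (SP * R) := by
    intro R hR x i
    constructor
    · exact Finset.sum_nonneg fun j _ => mul_nonneg (hc i j) (hq0 R _)
    · calc ∑ j, c i j * q R (x.2 j) ≤ ∑ j, c i j * R :=
          Finset.sum_le_sum fun j _ => mul_le_mul_of_nonneg_left (hqle R _ hR) (hc i j)
        _ = (∑ j, c i j) * R := by rw [← Finset.sum_mul]
        _ ≤ SP * R := by
            refine mul_le_mul_of_nonneg_right ?_ hR
            exact Finset.single_le_sum (f := fun i' => ∑ j, c i' j)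
              (fun i' _ => Finset.sum_nonneg fun j _ => hc i' j) (Finset.mem_univ i)
  have hargA : ∀ R, 0 ≤ R → ∀ x : (Fin n → ℝ) × (Fin m → ℝ), ∀ j,
      (∑ i, c i j * q R (x.1 i)) ∈ Icc (0:ℝ) (SA * R) := by
    intro R hR x j
    constructor
    · exact Finset.sum_nonneg fun i _ => mul_nonneg (hc i j) (hq0 R _)
    · calc ∑ i, c i j * q R (x.1 i) ≤ ∑ i, c i j * R :=
          Finset.sum_le_sum fun i _ => mul_le_mul_of_nonneg_left (hqle R _ hR) (hc i j)
        _ = (∑ i, c i j) * R := by rw [← Finset.sum_mul]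
        _ ≤ SA * R := by
            refine mul_le_mul_of_nonneg_right ?_ hR
            exact Finset.single_le_sum (f := fun j' => ∑ i, c i j')
              (fun j' _ => Finset.sum_nonneg fun i _ => hc i j') (Finset.mem_univ j)
  have hcompP : ∀ R, 0 ≤ R → ∀ x : (Fin n → ℝ) × (Fin m → ℝ), ∀ i,
      0 ≤ (1/(n:ℝ)) * ∑ l, k i l * q R (x.1 l) ∧
      (1/(n:ℝ)) * ∑ l, k i l * q R (x.1 l) ≤ Sk * R := by
    intro R hR x i
    have hsum0 : 0 ≤ ∑ l, k i l * q R (x.1 l) :=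
      Finset.sum_nonneg fun l _ => mul_nonneg (hk i l) (hq0 R _)
    have hn1 : (1:ℝ)/(n:ℝ) ≤ 1 := by
      rw [div_le_one hn0]
      exact_mod_cast hn
    constructor
    · exact mul_nonneg (by positivity) hsum0
    · calc (1/(n:ℝ)) * ∑ l, k i l * q R (x.1 l) ≤ 1 * ∑ l, k i l * q R (x.1 l) :=
          mul_le_mul_of_nonneg_right hn1 hsum0
        _ = ∑ l, k i l * q R (x.1 l) := one_mul _
        _ ≤ ∑ l, k i l * R :=
          Finset.sum_le_sum fun l _ => mul_le_mul_of_nonneg_left (hqle R _ hR) (hk i l)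
        _ = (∑ l, k i l) * R := by rw [← Finset.sum_mul]
        _ ≤ Sk * R := by
            refine mul_le_mul_of_nonneg_right ?_ hR
            exact Finset.single_le_sum (f := fun i' => ∑ l, k i' l)
              (fun i' _ => Finset.sum_nonneg fun l _ => hk i' l) (Finset.mem_univ i)
  have hcompA : ∀ R, 0 ≤ R → ∀ x : (Fin n → ℝ) × (Fin m → ℝ), ∀ j,
      0 ≤ (1/(m:ℝ)) * ∑ l, h j l * q R (x.2 l) ∧
      (1/(m:ℝ)) * ∑ l, h j l * q R (x.2 l) ≤ Sh * R := by
    intro R hR x j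
    have hsum0 : 0 ≤ ∑ l, h j l * q R (x.2 l) :=
      Finset.sum_nonneg fun l _ => mul_nonneg (hh j l) (hq0 R _)
    have hm1 : (1:ℝ)/(m:ℝ) ≤ 1 := by
      rw [div_le_one hm0]
      exact_mod_cast hm
    constructor
    · exact mul_nonneg (by positivity) hsum0
    · calc (1/(m:ℝ)) * ∑ l, h j l * q R (x.2 l) ≤ 1 * ∑ l, h j l * q R (x.2 l) :=
          mul_le_mul_of_nonneg_right hm1 hsum0
        _ = ∑ l, h j l * q R (x.2 l) := one_mul _
        _ ≤ ∑ l, h j l * R :=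
          Finset.sum_le_sum fun l _ => mul_le_mul_of_nonneg_left (hqle R _ hR) (hh j l)
        _ = (∑ l, h j l) * R := by rw [← Finset.sum_mul]
        _ ≤ Sh * R := by
            refine mul_le_mul_of_nonneg_right ?_ hR
            exact Finset.single_le_sum (f := fun j' => ∑ l, h j' l)
              (fun j' _ => Finset.sum_nonneg fun l _ => hh j' l) (Finset.mem_univ j)
  have hβPM : ∀ R, 0 ≤ R → ∀ x, ∀ i, βP R x i ≤ M := by
    intro R hR x i
    simp only [hβPdef]
    have h2 := (hcompP R hR x i).1
    have h3 := hMP (∑ j, c i j * q R (x.2 j))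
    linarith
  have hβAM : ∀ R, 0 ≤ R → ∀ x, ∀ j, βA R x j ≤ M := by
    intro R hR x j
    simp only [hβAdef]
    have h2 := (hcompA R hR x j).1
    have h3 := hMA (∑ i, c i j * q R (x.1 i))
    linarith
  -- growth bound for the truncated field
  have hgrow : ∀ R, 0 ≤ R → ∃ B : ℝ, 0 ≤ B ∧ ∀ x, ‖vR R x‖ ≤ B * ‖x‖ + B := by
    intro R hR
    obtain ⟨BgP, hBgP⟩ := (isCompact_Icc (a := (0:ℝ)) (b := SP * R)).exists_bound_of_continuousOn
      (hgPlip.continuous.continuousOn)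
    obtain ⟨BgA, hBgA⟩ := (isCompact_Icc (a := (0:ℝ)) (b := SA * R)).exists_bound_of_continuousOn
      (hgAlip.continuous.continuousOn)
    set B : ℝ := max (|BgP| + Sk * R) (|BgA| + Sh * R) with hBdef
    have hB0 : 0 ≤ B := le_trans (by positivity) (le_max_left _ _)
    refine ⟨B, hB0, ?_⟩
    intro x
    have hβPb : ∀ i, |βP R x i| ≤ B := by
      intro i
      have h1 : |gP (∑ j, c i j * q R (x.2 j))| ≤ BgP := by
        have := hBgP _ (hargP R hR x i)
        rwa [Real.norm_eq_abs] at this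
      obtain ⟨h2, h3⟩ := hcompP R hR x i
      simp only [hβPdef]
      refine le_trans (abs_sub _ _) ?_
      rw [abs_of_nonneg h2]
      have h4 : BgP ≤ |BgP| := le_abs_self _
      refine le_trans ?_ (le_max_left _ _)
      linarith
    have hβAb : ∀ j, |βA R x j| ≤ B := by
      intro j
      have h1 : |gA (∑ i, c i j * q R (x.1 i))| ≤ BgA := by
        have := hBgA _ (hargA R hR x j)
        rwa [Real.norm_eq_abs] at this
      obtain ⟨h2, h3⟩ := hcompA R hR x j
      simp only [hβAdef]
      refine le_trans (abs_sub _ _) ?_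
      rw [abs_of_nonneg h2]
      have h4 : BgA ≤ |BgA| := le_abs_self _
      refine le_trans ?_ (le_max_right _ _)
      linarith
    have hnn : (0:ℝ) ≤ B * ‖x‖ + B := by positivity
    rw [Prod.norm_def]
    refine max_le ?_ ?_
    · rw [pi_norm_le_iff_of_nonneg hnn]
      intro i
      show ‖βP R x i * x.1 i‖ ≤ B * ‖x‖ + B
      rw [Real.norm_eq_abs, abs_mul]
      have h5 : |x.1 i| ≤ ‖x‖ := by
        calc |x.1 i| = ‖x.1 i‖ := (Real.norm_eq_abs _).symm
          _ ≤ ‖x.1‖ := norm_le_pi_norm _ i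
          _ ≤ ‖x‖ := norm_fst_le x
      calc |βP R x i| * |x.1 i| ≤ B * ‖x‖ :=
            mul_le_mul (hβPb i) h5 (abs_nonneg _) hB0
        _ ≤ B * ‖x‖ + B := by linarith
    · rw [pi_norm_le_iff_of_nonneg hnn]
      intro j
      show ‖βA R x j * x.2 j‖ ≤ B * ‖x‖ + B
      rw [Real.norm_eq_abs, abs_mul]
      have h5 : |x.2 j| ≤ ‖x‖ := by
        calc |x.2 j| = ‖x.2 j‖ := (Real.norm_eq_abs _).symm
          _ ≤ ‖x.2‖ := norm_le_pi_norm _ j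
          _ ≤ ‖x‖ := norm_snd_le x
      calc |βA R x j| * |x.2 j| ≤ B * ‖x‖ :=
            mul_le_mul (hβAb j) h5 (abs_nonneg _) hB0
        _ ≤ B * ‖x‖ + B := by linarith
  -- truncated solutions give true solutions with nonnegativity on [0, N]
  have hex_true : ∀ N : ℕ, ∃ y : ℝ → (Fin n → ℝ) × (Fin m → ℝ), y 0 = x₀ ∧
      (∀ t ∈ Icc (0:ℝ) (N:ℝ), HasDerivWithinAt y (vtrue (y t)) (Icc 0 (N:ℝ)) t) ∧
      (∀ t ∈ Icc (0:ℝ) (N:ℝ), (∀ i, 0 ≤ (y t).1 i) ∧ (∀ j, 0 ≤ (y t).2 j)) := by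
    intro N
    set R : ℝ := (‖x₀‖ + 1) * Real.exp (M * N) with hRdef
    have hR0 : 0 ≤ R := by positivity
    obtain ⟨B, hB0, hgrowB⟩ := hgrow R hR0
    obtain ⟨y, hy0, hycont, hyderiv, -⟩ := glue_global (hvRLL R) x₀
      (fun N' => exists_sol_Icc (hvRLL R) hB0 hgrowB x₀ (N' : ℝ))
    have hbnd1 : ∀ i, ∀ t ∈ Ici (0:ℝ), 0 ≤ (y t).1 i ∧ (y t).1 i ≤ ‖x₀‖ * Real.exp (M * t) := by
      intro i
      have hbcont : Continuous (fun t => βP R (y t) i) := ((hβPLL R i).continuous).comp hycont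
      have hu : ∀ t ∈ Ici (0:ℝ),
          HasDerivWithinAt (fun s => (y s).1 i) (βP R (y t) i * (y t).1 i) (Ici 0) t := by
        intro t ht
        exact ((ContinuousLinearMap.proj i).comp
          (ContinuousLinearMap.fst ℝ (Fin n → ℝ) (Fin m → ℝ))).hasFDerivAt.comp_hasDerivWithinAt t
            (hyderiv t ht)
      have hrep := expRep hbcont hu
      intro t ht
      have hint : (∫ s in (0:ℝ)..t, βP R (y s) i) ≤ M * t := by
        have h1 : (∫ s in (0:ℝ)..t, βP R (y s) i) ≤ ∫ _ in (0:ℝ)..t, M :=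
          intervalIntegral.integral_mono_on ht (hbcont.intervalIntegrable _ _)
            intervalIntegrable_const (fun s _ => hβPM R hR0 (y s) i)
        simpa [intervalIntegral.integral_const, smul_eq_mul, mul_comm] using h1
      have hu0a : (y 0).1 i = P0 i := by rw [hy0]
      have hu0nn : 0 ≤ (y 0).1 i := by rw [hu0a]; exact hP0 i
      have hu0le : (y 0).1 i ≤ ‖x₀‖ := by
        rw [hu0a]
        calc P0 i ≤ |P0 i| := le_abs_self _
          _ = ‖x₀.1 i‖ := by rw [Real.norm_eq_abs]
          _ ≤ ‖x₀.1‖ := norm_le_pi_norm _ i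
          _ ≤ ‖x₀‖ := norm_fst_le _
      constructor
      · rw [hrep t ht]; positivity
      · rw [hrep t ht]
        calc (y 0).1 i * Real.exp (∫ s in (0:ℝ)..t, βP R (y s) i)
            ≤ (y 0).1 i * Real.exp (M * t) :=
              mul_le_mul_of_nonneg_left (Real.exp_le_exp.mpr hint) hu0nn
          _ ≤ ‖x₀‖ * Real.exp (M * t) :=
              mul_le_mul_of_nonneg_right hu0le (Real.exp_pos _).le
    have hbnd2 : ∀ j, ∀ t ∈ Ici (0:ℝ), 0 ≤ (y t).2 j ∧ (y t).2 j ≤ ‖x₀‖ * Real.exp (M * t) := by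
      intro j
      have hbcont : Continuous (fun t => βA R (y t) j) := ((hβALL R j).continuous).comp hycont
      have hu : ∀ t ∈ Ici (0:ℝ),
          HasDerivWithinAt (fun s => (y s).2 j) (βA R (y t) j * (y t).2 j) (Ici 0) t := by
        intro t ht
        exact ((ContinuousLinearMap.proj j).comp
          (ContinuousLinearMap.snd ℝ (Fin n → ℝ) (Fin m → ℝ))).hasFDerivAt.comp_hasDerivWithinAt t
            (hyderiv t ht)
      have hrep := expRep hbcont hu
      intro t ht
      have hint : (∫ s in (0:ℝ)..t, βA R (y s) j) ≤ M * t := by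
        have h1 : (∫ s in (0:ℝ)..t, βA R (y s) j) ≤ ∫ _ in (0:ℝ)..t, M :=
          intervalIntegral.integral_mono_on ht (hbcont.intervalIntegrable _ _)
            intervalIntegrable_const (fun s _ => hβAM R hR0 (y s) j)
        simpa [intervalIntegral.integral_const, smul_eq_mul, mul_comm] using h1
      have hu0a : (y 0).2 j = A0 j := by rw [hy0]
      have hu0nn : 0 ≤ (y 0).2 j := by rw [hu0a]; exact hA0 j
      have hu0le : (y 0).2 j ≤ ‖x₀‖ := by
        rw [hu0a]
        calc A0 j ≤ |A0 j| := le_abs_self _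
          _ = ‖x₀.2 j‖ := by rw [Real.norm_eq_abs]
          _ ≤ ‖x₀.2‖ := norm_le_pi_norm _ j
          _ ≤ ‖x₀‖ := norm_snd_le _
      constructor
      · rw [hrep t ht]; positivity
      · rw [hrep t ht]
        calc (y 0).2 j * Real.exp (∫ s in (0:ℝ)..t, βA R (y s) j)
            ≤ (y 0).2 j * Real.exp (M * t) :=
              mul_le_mul_of_nonneg_left (Real.exp_le_exp.mpr hint) hu0nn
          _ ≤ ‖x₀‖ * Real.exp (M * t) :=
              mul_le_mul_of_nonneg_right hu0le (Real.exp_pos _).le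
    have hbound_R : ∀ t ∈ Icc (0:ℝ) (N:ℝ), ‖x₀‖ * Real.exp (M * t) ≤ R := by
      intro t ht
      calc ‖x₀‖ * Real.exp (M * t) ≤ ‖x₀‖ * Real.exp (M * N) := by
            refine mul_le_mul_of_nonneg_left (Real.exp_le_exp.mpr ?_) (norm_nonneg _)
            exact mul_le_mul_of_nonneg_left ht.2 hM0
        _ ≤ R := by
            rw [hRdef]
            have := (Real.exp_pos (M * N)).le
            nlinarith [norm_nonneg x₀]
    have hqy1 : ∀ t ∈ Icc (0:ℝ) (N:ℝ), ∀ l, q R ((y t).1 l) = (y t).1 l := by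
      intro t ht l
      obtain ⟨h1, h2⟩ := hbnd1 l t ht.1
      exact hqid R _ h1 (le_trans h2 (hbound_R t ht))
    have hqy2 : ∀ t ∈ Icc (0:ℝ) (N:ℝ), ∀ l, q R ((y t).2 l) = (y t).2 l := by
      intro t ht l
      obtain ⟨h1, h2⟩ := hbnd2 l t ht.1
      exact hqid R _ h1 (le_trans h2 (hbound_R t ht))
    refine ⟨y, hy0, ?_, ?_⟩
    · intro t ht
      have h1 := (hyderiv t ht.1).mono (fun s hs => hs.1 : Icc (0:ℝ) (N:ℝ) ⊆ Ici 0)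
      have hval : vR R (y t) = vtrue (y t) := by
        simp only [hvRdef, hvdef]
        refine Prod.ext ?_ ?_
        · funext i'
          simp only [hβPdef]
          rw [show (∑ j, c i' j * q R ((y t).2 j)) = ∑ j, c i' j * (y t).2 j from
              Finset.sum_congr rfl fun j _ => by rw [hqy2 t ht j],
            show (∑ l, k i' l * q R ((y t).1 l)) = ∑ l, k i' l * (y t).1 l from
              Finset.sum_congr rfl fun l _ => by rw [hqy1 t ht l]]
        · funext j'
          simp only [hβAdef]
          rw [show (∑ i, c i j' * q R ((y t).1 i)) = ∑ i, c i j' * (y t).1 i from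
              Finset.sum_congr rfl fun i _ => by rw [hqy1 t ht i],
            show (∑ l, h j' l * q R ((y t).2 l)) = ∑ l, h j' l * (y t).2 l from
              Finset.sum_congr rfl fun l _ => by rw [hqy2 t ht l]]
      exact hval ▸ h1
    · intro t ht
      exact ⟨fun i => (hbnd1 i t ht.1).1, fun j => (hbnd2 j t ht.1).1⟩
  choose Y hY0 hYd hYpos using hex_true
  obtain ⟨f, hf0, hfcont, hfderiv, hfuniq⟩ := glue_global hvLL x₀ (fun N => ⟨Y N, hY0 N, hYd N⟩)
  refine ⟨fun t => (f t).1, fun t => (f t).2, ⟨?_, ?_, ?_, ?_, ?_⟩, ?_⟩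
  · show (f 0).1 = P0
    rw [hf0]
  · show (f 0).2 = A0
    rw [hf0]
  · -- P derivatives
    intro t ht i
    exact ((ContinuousLinearMap.proj i).comp
      (ContinuousLinearMap.fst ℝ (Fin n → ℝ) (Fin m → ℝ))).hasFDerivAt.comp_hasDerivWithinAt t
        (hfderiv t ht)
  · -- A derivatives
    intro t ht j
    exact ((ContinuousLinearMap.proj j).comp
      (ContinuousLinearMap.snd ℝ (Fin n → ℝ) (Fin m → ℝ))).hasFDerivAt.comp_hasDerivWithinAt t
        (hfderiv t ht)
  · -- nonnegativity
    intro t ht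
    have htN : t ≤ ((⌊t⌋₊ + 1 : ℕ) : ℝ) := by
      push_cast
      exact (Nat.lt_floor_add_one t).le
    have heq : f t = Y (⌊t⌋₊ + 1) t :=
      hfuniq (Y (⌊t⌋₊ + 1)) ((⌊t⌋₊ + 1 : ℕ) : ℝ) (hY0 _) (hYd _) ⟨ht, htN⟩
    refine ⟨fun i => ?_, fun j => ?_⟩
    · show 0 ≤ (f t).1 i
      rw [heq]
      exact (hYpos (⌊t⌋₊ + 1) t ⟨ht, htN⟩).1 i
    · show 0 ≤ (f t).2 j
      rw [heq]
      exact (hYpos (⌊t⌋₊ + 1) t ⟨ht, htN⟩).2 j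
  · -- uniqueness
    rintro P' A' ⟨hP'0, hA'0, hP'd, hA'd⟩ t ht
    have hg'0 : (fun s => (P' s, A' s)) 0 = x₀ := by
      show (P' 0, A' 0) = x₀
      rw [hP'0, hA'0]
    have hg'd : ∀ s ∈ Icc (0:ℝ) t,
        HasDerivWithinAt (fun s => (P' s, A' s)) (vtrue (P' s, A' s)) (Icc 0 t) s := by
      intro s hs
      have h1 : HasDerivWithinAt P'
          (fun i => (gP (∑ j, c i j * A' s j) - (1/(n:ℝ)) * ∑ l, k i l * P' s l) * P' s i)
          (Ici 0) s :=
        hasDerivWithinAt_pi.mpr (fun i => hP'd s hs.1 i)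
      have h2 : HasDerivWithinAt A'
          (fun j => (gA (∑ i, c i j * P' s i) - (1/(m:ℝ)) * ∑ l, h j l * A' s l) * A' s j)
          (Ici 0) s :=
        hasDerivWithinAt_pi.mpr (fun j => hA'd s hs.1 j)
      have hval : vtrue (P' s, A' s) =
          ((fun i => (gP (∑ j, c i j * A' s j) - (1/(n:ℝ)) * ∑ l, k i l * P' s l) * P' s i),
           (fun j => (gA (∑ i, c i j * P' s i) - (1/(m:ℝ)) * ∑ l, h j l * A' s l) * A' s j)) := by
        simp only [hvdef]
      rw [hval]
      exact (h1.prodMk h2).mono (fun u hu => hu.1)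
    have heq : f t = (P' t, A' t) :=
      hfuniq (fun s => (P' s, A' s)) t hg'0 hg'd ⟨ht, le_refl t⟩
    constructor
    · intro i
      show P' t i = (f t).1 i
      rw [heq]
    · intro j
      show A' t j = (f t).2 j
      rw [heq]
end

section
/- Let n, m ≥ 1, let (c_{ij}), (k_{iℓ}), (h_{jℓ}) be nonnegative reals, and let g^P, g^A : ℝ → ℝ be continuous with g^P(0) < 0 and g^A(0) < 0. Then the null equilibrium of the plant–pollinator ODE system is locally asymptotically stable: for every ε > 0 there exists δ > 0 such that every continuously differentiable solution (P, A) : [0,∞) → ℝ_{≥0}^n × ℝ_{≥0}^m of the system with max_i P_i(0) + max_j A_j(0) < δ satisfies max_i P_i(t) + max_j A_j(t) < ε for all t ≥ 0 and converges to 0 as t → ∞. -/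
open Set Filter

set_option maxHeartbeats 1000000

/-- Local asymptotic stability of the null equilibrium of the
plant–pollinator ODE system when `gP 0 < 0` and `gA 0 < 0`. -/
theorem stmt_2 (n m : ℕ) (hn : 1 ≤ n) (hm : 1 ≤ m)
    (c : Fin n → Fin m → ℝ) (hc : ∀ i j, 0 ≤ c i j)
    (k : Fin n → Fin n → ℝ) (hk : ∀ i l, 0 ≤ k i l)
    (h : Fin m → Fin m → ℝ) (hh : ∀ j l, 0 ≤ h j l)
    (gP gA : ℝ → ℝ) (hgPc : Continuous gP) (hgAc : Continuous gA)
    (hgP0 : gP 0 < 0) (hgA0 : gA 0 < 0) :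
    ∀ ε > (0:ℝ), ∃ δ > (0:ℝ), ∀ (P : ℝ → Fin n → ℝ) (A : ℝ → Fin m → ℝ),
      (∀ t ∈ Ici (0:ℝ), (∀ i, 0 ≤ P t i) ∧ (∀ j, 0 ≤ A t j)) →
      (∀ t ∈ Ici (0:ℝ), ∀ i, HasDerivWithinAt (fun s => P s i)
          ((gP (∑ j, c i j * A t j) - (1 / (n:ℝ)) * ∑ l, k i l * P t l) * P t i)
          (Ici 0) t) →
      (∀ t ∈ Ici (0:ℝ), ∀ j, HasDerivWithinAt (fun s => A s j)
          ((gA (∑ i, c i j * P t i) - (1 / (m:ℝ)) * ∑ l, h j l * A t l) * A t j)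
          (Ici 0) t) →
      (⨆ i, P 0 i) + (⨆ j, A 0 j) < δ →
      (∀ t ∈ Ici (0:ℝ), (⨆ i, P t i) + (⨆ j, A t j) < ε) ∧
      Tendsto (fun t => (⨆ i, P t i) + (⨆ j, A t j)) atTop (nhds 0) := by
  classical
  intro ε hε
  have hn' : Nonempty (Fin n) := ⟨⟨0, hn⟩⟩
  have hm' : Nonempty (Fin m) := ⟨⟨0, hm⟩⟩
  -- Step A: a uniform negativity margin for the growth rates near 0
  set γ : ℝ := min (-gP 0) (-gA 0) / 2 with hγdef
  have hγ : 0 < γ := by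
    have h1 : 0 < -gP 0 := by linarith
    have h2 : 0 < -gA 0 := by linarith
    have := lt_min h1 h2
    positivity
  have hγP : gP 0 < -γ := by
    have h1 : min (-gP 0) (-gA 0) ≤ -gP 0 := min_le_left _ _
    have h2 : 0 < min (-gP 0) (-gA 0) := lt_min (by linarith) (by linarith)
    simp only [hγdef]; linarith
  have hγA : gA 0 < -γ := by
    have h1 : min (-gP 0) (-gA 0) ≤ -gA 0 := min_le_right _ _
    have h2 : 0 < min (-gP 0) (-gA 0) := lt_min (by linarith) (by linarith)
    simp only [hγdef]; linarith
  obtain ⟨s, hs0, hsP⟩ : ∃ s > (0:ℝ), ∀ x : ℝ, |x| < s → gP x < -γ ∧ gA x < -γ := by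
    have h1 : ∀ᶠ x in nhds (0:ℝ), gP x < -γ :=
      (hgPc.tendsto 0).eventually_lt_const hγP
    have h2 : ∀ᶠ x in nhds (0:ℝ), gA x < -γ :=
      (hgAc.tendsto 0).eventually_lt_const hγA
    have := h1.and h2
    rw [Metric.eventually_nhds_iff] at this
    obtain ⟨s, hs0, hs⟩ := this
    exact ⟨s, hs0, fun x hx => hs (by simpa [Real.dist_eq] using hx)⟩
  -- Step B: bound on the interaction weights
  set K : ℝ := 1 + ∑ i, ∑ j, c i j with hKdef
  have hKsum : (0:ℝ) ≤ ∑ i, ∑ j, c i j :=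
    Finset.sum_nonneg fun i _ => Finset.sum_nonneg fun j _ => hc i j
  have hK0 : 0 < K := by simp only [hKdef]; linarith
  have hrow : ∀ i, ∑ j, c i j ≤ K := by
    intro i
    have : ∑ j, c i j ≤ ∑ i, ∑ j, c i j :=
      Finset.single_le_sum (f := fun i => ∑ j, c i j)
        (fun i _ => Finset.sum_nonneg fun j _ => hc i j) (Finset.mem_univ i)
    simp only [hKdef]; linarith
  have hcol : ∀ j, ∑ i, c i j ≤ K := by
    intro j
    have h1 : ∀ i, c i j ≤ ∑ j', c i j' :=
      fun i => Finset.single_le_sum (fun j' _ => hc i j') (Finset.mem_univ j)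
    have : ∑ i, c i j ≤ ∑ i, ∑ j', c i j' := Finset.sum_le_sum fun i _ => h1 i
    simp only [hKdef]; linarith
  -- Step C: choice of δ
  set δ : ℝ := min (ε/3) (s/(2*K)) with hδdef
  have hδ0 : 0 < δ := by
    apply lt_min (by linarith)
    positivity
  have hδε : δ ≤ ε/3 := min_le_left _ _
  have hδK : K * δ < s := by
    have h1 : δ ≤ s/(2*K) := min_le_right _ _
    have h2 : δ * (2*K) ≤ s := (le_div_iff₀ (by positivity)).1 h1
    nlinarith [mul_pos hK0 hδ0]
  refine ⟨δ, hδ0, ?_⟩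
  intro P A hnn hP hA h0
  -- the barrier function
  set B : ℝ → ℝ := fun t => δ * Real.exp (-(γ/2) * t) with hBdef
  have hBpos : ∀ t, 0 < B t := fun t => mul_pos hδ0 (Real.exp_pos _)
  have hBle : ∀ t, 0 ≤ t → B t ≤ δ := by
    intro t ht
    have h1 : Real.exp (-(γ/2) * t) ≤ 1 := by
      rw [Real.exp_le_one_iff]
      nlinarith
    simp only [hBdef]
    nlinarith
  have hBderiv : ∀ x : ℝ, HasDerivAt B (-(γ/2) * B x) x := by
    intro x
    have h1 : HasDerivAt (fun t : ℝ => -(γ/2) * t) (-(γ/2)) x := by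
      simpa using (hasDerivAt_id x).const_mul (-(γ/2))
    have h2 := (Real.hasDerivAt_exp (-(γ/2) * x)).comp x h1
    have h3 := h2.const_mul δ
    refine h3.congr_deriv ?_
    simp only [hBdef, Function.comp]
    ring
  have hBcont : Continuous B := by
    simp only [hBdef]
    exact continuous_const.mul (Real.continuous_exp.comp (continuous_const.mul continuous_id))
  -- combined coordinates
  set u : ℝ → Fin n ⊕ Fin m → ℝ := fun t => Sum.elim (P t) (A t) with hudef
  set D : ℝ → Fin n ⊕ Fin m → ℝ := fun t => Sum.elim
      (fun i => (gP (∑ j, c i j * A t j) - (1 / (n:ℝ)) * ∑ l, k i l * P t l) * P t i)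
      (fun j => (gA (∑ i, c i j * P t i) - (1 / (m:ℝ)) * ∑ l, h j l * A t l) * A t j) with hDdef
  have hu0 : ∀ t ∈ Ici (0:ℝ), ∀ p, 0 ≤ u t p := by
    intro t ht p
    cases p with
    | inl i => exact (hnn t ht).1 i
    | inr j => exact (hnn t ht).2 j
  have huderiv : ∀ t ∈ Ici (0:ℝ), ∀ p,
      HasDerivWithinAt (fun z => u z p) (D t p) (Ici 0) t := by
    intro t ht p
    cases p with
    | inl i => exact hP t ht i
    | inr j => exact hA t ht j
  have hucont : ∀ p, ContinuousOn (fun z => u z p) (Ici 0) :=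
    fun p t ht => (huderiv t ht p).continuousWithinAt
  set F : ℝ → ℝ := fun t => Finset.univ.sup' Finset.univ_nonempty (u t) with hFdef
  have hFcont : ContinuousOn F (Ici 0) :=
    ContinuousOn.finset_sup'_apply Finset.univ_nonempty fun p _ => hucont p
  have hle : ∀ t p, u t p ≤ F t := fun t p => Finset.le_sup' (u t) (Finset.mem_univ p)
  have hattain : ∀ t, ∃ p, u t p = F t := by
    intro t
    obtain ⟨p, _, hp⟩ := Finset.exists_mem_eq_sup' Finset.univ_nonempty (u t)
    exact ⟨p, hp.symm⟩
  have hSne : ∀ t, (Finset.univ.filter fun p => u t p = F t).Nonempty := by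
    intro t
    obtain ⟨p, hp⟩ := hattain t
    exact ⟨p, by simp [hp]⟩
  set f' : ℝ → ℝ := fun t => (Finset.univ.filter fun p => u t p = F t).sup' (hSne t) (D t)
    with hf'def
  -- main barrier estimate
  have main : ∀ t ∈ Ici (0:ℝ), F t ≤ B t := by
    intro b hb
    have hb0 : (0:ℝ) ≤ b := hb
    have := image_le_of_liminf_slope_right_lt_deriv_boundary' (f := F) (f' := f')
      (a := 0) (b := b) (B := B) (B' := fun x => -(γ/2) * B x)
      (hFcont.mono (Icc_subset_Ici_self))
      ?_ ?_ (hBcont.continuousOn) (fun x _ => (hBderiv x).hasDerivWithinAt) ?_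
    · exact this ⟨hb0, le_rfl⟩
    · -- liminf slope estimate, valid at every point
      intro x hx r hr
      have hx0 : (0:ℝ) ≤ x := hx.1
      have hmem : Ioi x ⊆ Ici (0:ℝ) \ {x} :=
        fun z hz => ⟨le_trans hx0 (le_of_lt hz), fun hzz => (ne_of_lt hz).symm (Set.mem_singleton_iff.mp hzz)⟩
      have key : ∀ p, ∀ᶠ z in nhdsWithin x (Ioi x), u z p - F x < r * (z - x) := by
        intro p
        by_cases hp : u x p = F x
        · have hpmem : p ∈ Finset.univ.filter fun q => u x q = F x := by simp [hp]
          have hDp : D x p < r := lt_of_le_of_lt (Finset.le_sup' (D x) hpmem) hr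
          have hslope : Tendsto (slope (fun z => u z p) x) (nhdsWithin x (Ioi x))
              (nhds (D x p)) :=
            (hasDerivWithinAt_iff_tendsto_slope.mp (huderiv x hx0 p)).mono_left
              (nhdsWithin_mono x hmem)
          filter_upwards [hslope.eventually_lt_const hDp, self_mem_nhdsWithin] with z hz hz'
          have hzx : (0:ℝ) < z - x := sub_pos.2 hz'
          rw [slope_def_field, div_lt_iff₀ hzx] at hz
          rw [← hp]
          linarith
        · have hlt : u x p < F x := lt_of_le_of_ne (hle x p) hp
          have hd : 0 < F x - u x p := by linarith
          have hcont : Tendsto (fun z => u z p) (nhdsWithin x (Ioi x)) (nhds (u x p)) :=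
            (hucont p x hx0).mono_left (nhdsWithin_mono x fun z hz => le_trans hx0 hz.le)
          have h1 : ∀ᶠ z in nhdsWithin x (Ioi x), u z p < F x - (F x - u x p)/2 :=
            hcont.eventually_lt_const (by linarith)
          have h2 : Tendsto (fun z => r * (z - x)) (nhdsWithin x (Ioi x)) (nhds 0) := by
            have : Tendsto (fun z : ℝ => r * (z - x)) (nhds x) (nhds (r * (x - x))) :=
              (continuous_const.mul (continuous_id.sub continuous_const)).tendsto x
            simpa using this.mono_left nhdsWithin_le_nhds
          have h3 : ∀ᶠ z in nhdsWithin x (Ioi x), -((F x - u x p)/2) < r * (z - x) :=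
            h2.eventually_const_lt (by linarith)
          filter_upwards [h1, h3] with z hz1 hz3
          linarith
      have hall : ∀ᶠ z in nhdsWithin x (Ioi x), ∀ p, u z p - F x < r * (z - x) :=
        eventually_all.2 key
      apply Eventually.frequently
      filter_upwards [hall, self_mem_nhdsWithin] with z hz hz'
      have hzx : (0:ℝ) < z - x := sub_pos.2 hz'
      rw [slope_def_field, div_lt_iff₀ hzx]
      obtain ⟨p0, hp0⟩ := hattain z
      have := hz p0
      linarith [hp0 ▸ this]
    · -- initial condition
      have hAnn : (0:ℝ) ≤ ⨆ j, A 0 j :=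
        le_ciSup_of_le (Finite.bddAbove_range _) ⟨0, hm⟩ ((hnn 0 Set.self_mem_Ici).2 _)
      have hPnn : (0:ℝ) ≤ ⨆ i, P 0 i :=
        le_ciSup_of_le (Finite.bddAbove_range _) ⟨0, hn⟩ ((hnn 0 Set.self_mem_Ici).1 _)
      have hB0 : B 0 = δ := by simp [hBdef]
      rw [hB0]
      apply Finset.sup'_le
      intro p _
      cases p with
      | inl i =>
        have : P 0 i ≤ ⨆ i, P 0 i := le_ciSup (Finite.bddAbove_range _) i
        have h4 : u 0 (Sum.inl i) = P 0 i := rfl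
        rw [h4]; linarith
      | inr j =>
        have : A 0 j ≤ ⨆ j, A 0 j := le_ciSup (Finite.bddAbove_range _) j
        have h4 : u 0 (Sum.inr j) = A 0 j := rfl
        rw [h4]; linarith
    · -- the bound at touching points
      intro x hx hFB
      have hx0 : (0:ℝ) ≤ x := hx.1
      refine (Finset.sup'_lt_iff (hSne x)).mpr ?_
      intro p hp
      rw [Finset.mem_filter] at hp
      have hup : u x p = B x := hp.2.trans hFB
      have hall : ∀ q, u x q ≤ B x := fun q => hFB ▸ hle x q
      have hBδ : B x ≤ δ := hBle x hx0
      have hBx : 0 < B x := hBpos x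
      cases p with
      | inl i =>
        have harg0 : 0 ≤ ∑ j, c i j * A x j :=
          Finset.sum_nonneg fun j _ => mul_nonneg (hc i j) ((hnn x hx0).2 j)
        have harg : ∑ j, c i j * A x j < s := by
          have h1 : ∑ j, c i j * A x j ≤ ∑ j, c i j * δ := by
            apply Finset.sum_le_sum
            intro j _
            have : A x j ≤ B x := hall (Sum.inr j)
            exact mul_le_mul_of_nonneg_left (by linarith) (hc i j)
          have h2 : ∑ j, c i j * δ = (∑ j, c i j) * δ := by
            rw [Finset.sum_mul]
          have h3 : (∑ j, c i j) * δ ≤ K * δ :=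
            mul_le_mul_of_nonneg_right (hrow i) hδ0.le
          linarith
        have hg : gP (∑ j, c i j * A x j) < -γ :=
          (hsP _ (by rw [abs_of_nonneg harg0]; linarith)).1
        have hcomp : 0 ≤ (1 / (n:ℝ)) * ∑ l, k i l * P x l := by
          apply mul_nonneg (by positivity)
          exact Finset.sum_nonneg fun l _ => mul_nonneg (hk i l) ((hnn x hx0).1 l)
        have hPi : P x i = B x := hup
        have hD : D x (Sum.inl i)
            = (gP (∑ j, c i j * A x j) - (1 / (n:ℝ)) * ∑ l, k i l * P x l) * P x i := rfl
        rw [hD, hPi]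
        have h5 : gP (∑ j, c i j * A x j) - (1 / (n:ℝ)) * ∑ l, k i l * P x l ≤ -γ := by
          linarith
        have h6 : (gP (∑ j, c i j * A x j) - (1 / (n:ℝ)) * ∑ l, k i l * P x l) * B x
            ≤ (-γ) * B x := mul_le_mul_of_nonneg_right h5 hBx.le
        have h7 : (-γ) * B x < (-(γ/2)) * B x :=
          mul_lt_mul_of_pos_right (by linarith) hBx
        linarith
      | inr j =>
        have harg0 : 0 ≤ ∑ i, c i j * P x i :=
          Finset.sum_nonneg fun i _ => mul_nonneg (hc i j) ((hnn x hx0).1 i)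
        have harg : ∑ i, c i j * P x i < s := by
          have h1 : ∑ i, c i j * P x i ≤ ∑ i, c i j * δ := by
            apply Finset.sum_le_sum
            intro i _
            have : P x i ≤ B x := hall (Sum.inl i)
            exact mul_le_mul_of_nonneg_left (by linarith) (hc i j)
          have h2 : ∑ i, c i j * δ = (∑ i, c i j) * δ := by
            rw [Finset.sum_mul]
          have h3 : (∑ i, c i j) * δ ≤ K * δ :=
            mul_le_mul_of_nonneg_right (hcol j) hδ0.le
          linarith
        have hg : gA (∑ i, c i j * P x i) < -γ :=
          (hsP _ (by rw [abs_of_nonneg harg0]; linarith)).2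
        have hcomp : 0 ≤ (1 / (m:ℝ)) * ∑ l, h j l * A x l := by
          apply mul_nonneg (by positivity)
          exact Finset.sum_nonneg fun l _ => mul_nonneg (hh j l) ((hnn x hx0).2 l)
        have hAj : A x j = B x := hup
        have hD : D x (Sum.inr j)
            = (gA (∑ i, c i j * P x i) - (1 / (m:ℝ)) * ∑ l, h j l * A x l) * A x j := rfl
        rw [hD, hAj]
        have h5 : gA (∑ i, c i j * P x i) - (1 / (m:ℝ)) * ∑ l, h j l * A x l ≤ -γ := by
          linarith
        have h6 : (gA (∑ i, c i j * P x i) - (1 / (m:ℝ)) * ∑ l, h j l * A x l) * B x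
            ≤ (-γ) * B x := mul_le_mul_of_nonneg_right h5 hBx.le
        have h7 : (-γ) * B x < (-(γ/2)) * B x :=
          mul_lt_mul_of_pos_right (by linarith) hBx
        linarith
  -- conclusions
  have hsupP : ∀ t ∈ Ici (0:ℝ), (⨆ i, P t i) ≤ B t := by
    intro t ht
    exact ciSup_le fun i => le_trans (hle t (Sum.inl i)) (main t ht)
  have hsupA : ∀ t ∈ Ici (0:ℝ), (⨆ j, A t j) ≤ B t := by
    intro t ht
    exact ciSup_le fun j => le_trans (hle t (Sum.inr j)) (main t ht)
  have hsupPnn : ∀ t ∈ Ici (0:ℝ), (0:ℝ) ≤ ⨆ i, P t i := fun t ht =>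
    le_ciSup_of_le (Finite.bddAbove_range _) ⟨0, hn⟩ ((hnn t ht).1 _)
  have hsupAnn : ∀ t ∈ Ici (0:ℝ), (0:ℝ) ≤ ⨆ j, A t j := fun t ht =>
    le_ciSup_of_le (Finite.bddAbove_range _) ⟨0, hm⟩ ((hnn t ht).2 _)
  constructor
  · intro t ht
    have h1 := hsupP t ht
    have h2 := hsupA t ht
    have h3 := hBle t ht
    linarith
  · have hBtend : Tendsto (fun t => 2 * B t) atTop (nhds 0) := by
      have h1 : Tendsto (fun t : ℝ => -(γ/2) * t) atTop atBot := by
        apply Tendsto.const_mul_atTop_of_neg (by linarith : -(γ/2) < 0) tendsto_id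
      have h2 : Tendsto (fun t : ℝ => Real.exp (-(γ/2) * t)) atTop (nhds 0) :=
        Real.tendsto_exp_atBot.comp h1
      have h3 := (h2.const_mul (2 * δ))
      simp only [mul_zero] at h3
      convert h3 using 2 with t
      simp only [hBdef]
      ring
    refine squeeze_zero' ?_ ?_ hBtend
    · filter_upwards [eventually_ge_atTop (0:ℝ)] with t ht
      exact add_nonneg (hsupPnn t ht) (hsupAnn t ht)
    · filter_upwards [eventually_ge_atTop (0:ℝ)] with t ht
      have h1 := hsupP t ht
      have h2 := hsupA t ht
      linarith
end

section
/- Let n, m ≥ 1, let (c_{ij}), (k_{iℓ}), (h_{jℓ}) be nonnegative reals, and let g^P, g^A : ℝ → ℝ be locally Lipschitz functions bounded above, with g^P(0) > 0 or g^A(0) > 0. Then the null equilibrium of the plant–pollinator ODE system is unstable: there exists ε > 0 such that for every δ > 0 there exist an initial condition (P_0, A_0) ∈ ℝ_{≥0}^n × ℝ_{≥0}^m with max_i P_{0,i} + max_j A_{0,j} < δ, a continuously differentiable solution (P, A) : [0,∞) → ℝ_{≥0}^n × ℝ_{≥0}^m of the system starting from (P_0, A_0), and a time t ≥ 0 with max_i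 P_i(t) + max_j A_j(t) ≥ ε. -/
open Set

lemma logistic_growth (a b : ℝ) (ha : 0 < a) (hb : 0 ≤ b) :
    ∃ ε > (0:ℝ), ∀ δ > (0:ℝ), ∃ x0 : ℝ, 0 < x0 ∧ x0 < δ ∧
      ∃ x : ℝ → ℝ, x 0 = x0 ∧ (∀ t ∈ Ici (0:ℝ), 0 ≤ x t) ∧
        (∀ t ∈ Ici (0:ℝ), HasDerivWithinAt x ((a - b * x t) * x t) (Ici 0) t) ∧
        ∃ t ∈ Ici (0:ℝ), ε ≤ x t := by
  set ε := a / (2 * b + a) with hε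
  have hden : 0 < 2 * b + a := by linarith
  have hεpos : 0 < ε := div_pos ha hden
  have hεb : ε * b < a := by
    rw [hε, div_mul_eq_mul_div, div_lt_iff₀ hden]
    nlinarith
  refine ⟨ε, hεpos, fun δ hδ => ?_⟩
  set x0 := min (δ / 2) ε with hx0
  have hx0pos : 0 < x0 := lt_min (by linarith) hεpos
  have hx0δ : x0 < δ := (min_le_left _ _).trans_lt (by linarith)
  set x : ℝ → ℝ := fun t => a * x0 * Real.exp (a * t) / (a + b * x0 * (Real.exp (a * t) - 1)) with hxdef
  have hD : ∀ t ∈ Ici (0:ℝ), 0 < a + b * x0 * (Real.exp (a * t) - 1) := by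
    intro t ht
    have h1 : (1:ℝ) ≤ Real.exp (a * t) := by
      rw [← Real.exp_zero]
      exact Real.exp_le_exp.mpr (mul_nonneg ha.le ht)
    nlinarith [mul_nonneg hb hx0pos.le]
  refine ⟨x0, hx0pos, hx0δ, x, ?_, ?_, ?_, ?_⟩
  · simp only [hxdef]
    rw [mul_comm a x0]
    simp [mul_div_assoc, div_self ha.ne']
  · intro t ht
    exact div_nonneg (by positivity) (hD t ht).le
  · intro t ht
    have hDt := hD t ht
    have hnum : HasDerivAt (fun s => a * x0 * Real.exp (a * s)) (a * x0 * (Real.exp (a * t) * a)) t := by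
      have := (Real.hasDerivAt_exp (a * t)).comp t ((hasDerivAt_id t).const_mul a)
      simpa [mul_comm] using this.const_mul (a * x0)
    have hden' : HasDerivAt (fun s => a + b * x0 * (Real.exp (a * s) - 1)) (b * x0 * (Real.exp (a * t) * a)) t := by
      have h2 := (Real.hasDerivAt_exp (a * t)).comp t ((hasDerivAt_id t).const_mul a)
      have h3 : HasDerivAt (fun s => Real.exp (a * s) - 1) (Real.exp (a * t) * a) t := by
        simpa [mul_comm] using h2.sub_const 1
      simpa using (h3.const_mul (b * x0)).const_add a
    have hdiv := hnum.div hden' hDt.ne'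
    have : HasDerivAt x ((a - b * x t) * x t) t := by
      convert hdiv using 1
      · rfl
      · rfl
      · rfl
      rw [hxdef]
      field_simp
    exact this.hasDerivWithinAt
  · set C := ε * (a - b * x0) / (x0 * (a - ε * b)) with hC
    have haεb : 0 < a - ε * b := by linarith [hεb]
    refine ⟨max 0 (Real.log C / a), Set.mem_Ici.mpr (le_max_left _ _), ?_⟩
    set t := max 0 (Real.log C / a) with htdef
    have ht : t ∈ Ici (0:ℝ) := Set.mem_Ici.mpr (le_max_left _ _)
    have hDt := hD t ht
    have hEC : C ≤ Real.exp (a * t) := by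
      rcases le_or_gt C 0 with hC0 | hC0
      · exact hC0.trans (Real.exp_pos _).le
      · have : Real.log C ≤ a * t := by
          have : Real.log C / a ≤ t := le_max_right _ _
          calc Real.log C = a * (Real.log C / a) := by field_simp
            _ ≤ a * t := by nlinarith
        calc C = Real.exp (Real.log C) := (Real.exp_log hC0).symm
          _ ≤ Real.exp (a * t) := Real.exp_le_exp.mpr this
    have hkey : ε * (a - b * x0) ≤ x0 * Real.exp (a * t) * (a - ε * b) := by
      have h1 : ε * (a - b * x0) = x0 * C * (a - ε * b) := by
        rw [hC]; field_simp
      rw [h1]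
      have := mul_le_mul_of_nonneg_right (mul_le_mul_of_nonneg_left hEC hx0pos.le) haεb.le
      linarith
    show ε ≤ a * x0 * Real.exp (a * t) / (a + b * x0 * (Real.exp (a * t) - 1))
    rw [le_div_iff₀ hDt]
    nlinarith [hkey]

lemma ciSup_ite_eq {n : ℕ} [Nonempty (Fin n)] (i0 : Fin n) (v : ℝ) (hv : 0 ≤ v) :
    (⨆ i, (if i = i0 then v else (0:ℝ))) = v := by
  apply le_antisymm
  · exact ciSup_le fun i => by split <;> simp [hv]
  · have := le_ciSup (f := fun i => if i = i0 then v else (0:ℝ)) (Finite.bddAbove_range _) i0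
    simpa using this

/-- Instability of the null equilibrium of the plant–pollinator ODE system
when `gP 0 > 0` or `gA 0 > 0`. -/
theorem stmt_3 (n m : ℕ) (hn : 1 ≤ n) (hm : 1 ≤ m)
    (c : Fin n → Fin m → ℝ) (hc : ∀ i j, 0 ≤ c i j)
    (k : Fin n → Fin n → ℝ) (hk : ∀ i l, 0 ≤ k i l)
    (h : Fin m → Fin m → ℝ) (hh : ∀ j l, 0 ≤ h j l)
    (gP gA : ℝ → ℝ) (hgPlip : LocallyLipschitz gP) (hgAlip : LocallyLipschitz gA)
    (MP MA : ℝ) (hMP : ∀ x, gP x ≤ MP) (hMA : ∀ x, gA x ≤ MA)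
    (hpos : 0 < gP 0 ∨ 0 < gA 0) :
    ∃ ε > (0:ℝ), ∀ δ > (0:ℝ),
      ∃ (P0 : Fin n → ℝ) (A0 : Fin m → ℝ) (P : ℝ → Fin n → ℝ) (A : ℝ → Fin m → ℝ),
        (∀ i, 0 ≤ P0 i) ∧ (∀ j, 0 ≤ A0 j) ∧
        P 0 = P0 ∧ A 0 = A0 ∧
        (∀ t ∈ Ici (0:ℝ), (∀ i, 0 ≤ P t i) ∧ (∀ j, 0 ≤ A t j)) ∧
        (∀ t ∈ Ici (0:ℝ), ∀ i, HasDerivWithinAt (fun s => P s i)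
            ((gP (∑ j, c i j * A t j) - (1 / (n:ℝ)) * ∑ l, k i l * P t l) * P t i)
            (Ici 0) t) ∧
        (∀ t ∈ Ici (0:ℝ), ∀ j, HasDerivWithinAt (fun s => A s j)
            ((gA (∑ i, c i j * P t i) - (1 / (m:ℝ)) * ∑ l, h j l * A t l) * A t j)
            (Ici 0) t) ∧
        (⨆ i, P0 i) + (⨆ j, A0 j) < δ ∧
        ∃ t ∈ Ici (0:ℝ), ε ≤ (⨆ i, P t i) + (⨆ j, A t j) := by
  haveI : Nonempty (Fin n) := ⟨⟨0, hn⟩⟩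
  haveI : Nonempty (Fin m) := ⟨⟨0, hm⟩⟩
  obtain ⟨i0⟩ : Nonempty (Fin n) := inferInstance
  obtain ⟨j0⟩ : Nonempty (Fin m) := inferInstance
  rcases hpos with hgp | hga
  · -- plant branch: A ≡ 0, only plant i0 nonzero
    obtain ⟨ε, hεpos, hmain⟩ := logistic_growth (gP 0) ((1 / (n:ℝ)) * k i0 i0) hgp
      (mul_nonneg (by positivity) (hk i0 i0))
    refine ⟨ε, hεpos, fun δ hδ => ?_⟩
    obtain ⟨x0, hx0pos, hx0δ, x, hx0eq, hxnn, hxder, t0, ht0, hxε⟩ := hmain δ hδ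
    refine ⟨(fun i => if i = i0 then x0 else 0), (fun _ => 0),
      (fun t i => if i = i0 then x t else 0), (fun _ _ => 0),
      ?_, ?_, ?_, rfl, ?_, ?_, ?_, ?_, ?_⟩
    · intro i; by_cases hi : i = i0 <;> simp [hi, hx0pos.le]
    · intro j; exact le_refl 0
    · funext i; by_cases hi : i = i0 <;> simp [hi, hx0eq]
    · intro t ht
      exact ⟨fun i => by by_cases hi : i = i0 <;> simp [hi, hxnn t ht], fun j => le_refl 0⟩
    · intro t ht i
      by_cases hi : i = i0
      · subst hi
        simp only [eq_self_iff_true, if_true, mul_zero, Finset.sum_const_zero]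
        have hsum : (∑ l, k i l * (if l = i then x t else 0)) = k i i * x t := by
          simp [mul_ite, mul_zero]
        rw [hsum]
        have heq : (gP 0 - 1 / (n:ℝ) * (k i i * x t)) * x t
            = (gP 0 - (1 / (n:ℝ)) * k i i * x t) * x t := by ring
        rw [heq]
        exact hxder t ht
      · simp only [if_neg hi, mul_zero]
        exact hasDerivWithinAt_const t _ 0
    · intro t ht j
      simp only [mul_zero]
      exact hasDerivWithinAt_const t _ 0
    · rw [ciSup_ite_eq i0 x0 hx0pos.le, ciSup_const]
      simpa using hx0δ
    · refine ⟨t0, ht0, ?_⟩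
      rw [ciSup_ite_eq i0 (x t0) (hxnn t0 ht0), ciSup_const]
      simpa using hxε
  · -- pollinator branch: P ≡ 0, only pollinator j0 nonzero
    obtain ⟨ε, hεpos, hmain⟩ := logistic_growth (gA 0) ((1 / (m:ℝ)) * h j0 j0) hga
      (mul_nonneg (by positivity) (hh j0 j0))
    refine ⟨ε, hεpos, fun δ hδ => ?_⟩
    obtain ⟨x0, hx0pos, hx0δ, x, hx0eq, hxnn, hxder, t0, ht0, hxε⟩ := hmain δ hδ
    refine ⟨(fun _ => 0), (fun j => if j = j0 then x0 else 0),
      (fun _ _ => 0), (fun t j => if j = j0 then x t else 0),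
      ?_, ?_, rfl, ?_, ?_, ?_, ?_, ?_, ?_⟩
    · intro i; exact le_refl 0
    · intro j; by_cases hj : j = j0 <;> simp [hj, hx0pos.le]
    · funext j; by_cases hj : j = j0 <;> simp [hj, hx0eq]
    · intro t ht
      exact ⟨fun i => le_refl 0, fun j => by by_cases hj : j = j0 <;> simp [hj, hxnn t ht]⟩
    · intro t ht i
      simp only [mul_zero]
      exact hasDerivWithinAt_const t _ 0
    · intro t ht j
      by_cases hj : j = j0
      · subst hj
        simp only [eq_self_iff_true, if_true, mul_zero, Finset.sum_const_zero]
        have hsum : (∑ l, h j l * (if l = j then x t else 0)) = h j j * x t := by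
          simp [mul_ite, mul_zero]
        rw [hsum]
        have heq : (gA 0 - 1 / (m:ℝ) * (h j j * x t)) * x t
            = (gA 0 - (1 / (m:ℝ)) * h j j * x t) * x t := by ring
        rw [heq]
        exact hxder t ht
      · simp only [if_neg hj, mul_zero]
        exact hasDerivWithinAt_const t _ 0
    · rw [ciSup_ite_eq j0 x0 hx0pos.le, ciSup_const]
      simpa using hx0δ
    · refine ⟨t0, ht0, ?_⟩
      rw [ciSup_ite_eq j0 (x t0) (hxnn t0 ht0), ciSup_const]
      simpa using hxε
end

section
/- Let g^P, g^A be the concrete growth-rate functions with positive parameters, let c, k, h > 0, and assume there exist r^P, r^A > 0 with g^P(r^P) > 0 and g^A(r^A) > 0. Let C₀⁻ < C₀⁺ be the two zeros of g^P in (0,∞), define f(x) = (1/h) g^A((c/k) g^P(c x)) − x on [C₀⁻/c, C₀⁺/c], and let M be the maximum of f on [C₀⁻/c, C₀⁺/c]. Then the set E = {(P, A) ∈ (0,∞)² : g^P(cA) = kP and g^A(cP) = hA} of positive equilibria has exactly two elements if M > 0, exactly one element if M = 0, and is empty if M < 0; in particular E always has at most two elements. -/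
open Set

set_option maxHeartbeats 1000000

private lemma frac_id (α β γ u v a b : ℝ) (hu : β + γ * u ≠ 0) (hv : β + γ * v ≠ 0)
    (hw : β + γ * (a * u + b * v) ≠ 0) (hab : a + b = 1) :
    α * (a * u + b * v) / (β + γ * (a * u + b * v))
      - a * (α * u / (β + γ * u)) - b * (α * v / (β + γ * v))
      = α * β * γ * a * b * (u - v) ^ 2
        / ((β + γ * (a * u + b * v)) * ((β + γ * u) * (β + γ * v))) := by
  have hb : b = 1 - a := by linarith
  subst hb
  rw [mul_div_assoc', mul_div_assoc', div_sub_div _ _ hw hu, div_sub_div _ _ (mul_ne_zero hw hu) hv,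
    div_eq_div_iff (mul_ne_zero (mul_ne_zero hw hu) hv) (mul_ne_zero hw (mul_ne_zero hu hv))]
  ring

/-- The one-plant/one-pollinator system has two, one, or zero positive
equilibria according to the sign of the maximum of the auxiliary function `f`. -/
theorem stmt_7 (αP βP γP dP δP αA βA γA dA c k h : ℝ)
    (hαP : 0 < αP) (hβP : 0 < βP) (hγP : 0 < γP) (hdP : 0 < dP) (hδP : 0 < δP)
    (hαA : 0 < αA) (hβA : 0 < βA) (hγA : 0 < γA) (hdA : 0 < dA)
    (hcpos : 0 < c) (hkpos : 0 < k) (hhpos : 0 < h)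
    (gP gA f : ℝ → ℝ)
    (hgP : gP = fun R => αP * R / (βP + γP * R) - (dP + δP * R))
    (hgA : gA = fun R => αA * R / (βA + γA * R) - dA)
    (hrP : ∃ rP > (0:ℝ), 0 < gP rP) (hrA : ∃ rA > (0:ℝ), 0 < gA rA)
    (Cm Cp : ℝ) (hCm : 0 < Cm) (hCmCp : Cm < Cp)
    (hzeros : ∀ x > (0:ℝ), (gP x = 0 ↔ x = Cm ∨ x = Cp))
    (hf : f = fun x => (1 / h) * gA ((c / k) * gP (c * x)) - x)
    (M : ℝ) (hMmem : M ∈ f '' Icc (Cm / c) (Cp / c))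
    (hMub : ∀ x ∈ Icc (Cm / c) (Cp / c), f x ≤ M) :
    (0 < M → ({z : ℝ × ℝ | 0 < z.1 ∧ 0 < z.2 ∧ gP (c * z.2) = k * z.1 ∧
        gA (c * z.1) = h * z.2}).encard = 2) ∧
    (M = 0 → ({z : ℝ × ℝ | 0 < z.1 ∧ 0 < z.2 ∧ gP (c * z.2) = k * z.1 ∧
        gA (c * z.1) = h * z.2}).encard = 1) ∧
    (M < 0 → {z : ℝ × ℝ | 0 < z.1 ∧ 0 < z.2 ∧ gP (c * z.2) = k * z.1 ∧
        gA (c * z.1) = h * z.2} = ∅) ∧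
    ({z : ℝ × ℝ | 0 < z.1 ∧ 0 < z.2 ∧ gP (c * z.2) = k * z.1 ∧
        gA (c * z.1) = h * z.2}).encard ≤ 2 := by
  have hc0 : c ≠ 0 := ne_of_gt hcpos
  have hk0 : k ≠ 0 := ne_of_gt hkpos
  have hh0 : h ≠ 0 := ne_of_gt hhpos
  have hCp : 0 < Cp := hCm.trans hCmCp
  have hCmc : 0 < Cm / c := div_pos hCm hcpos
  have hII : Cm / c < Cp / c := by gcongr
  have hdPd : ∀ x : ℝ, 0 < x → 0 < βP + γP * x := fun x hx => by positivity
  have hgPCm : gP Cm = 0 := (hzeros Cm hCm).2 (Or.inl rfl)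
  have hgPCp : gP Cp = 0 := (hzeros Cp hCp).2 (Or.inr rfl)
  -- quadratic coefficients
  have hQm : αP * Cm = (dP + δP * Cm) * (βP + γP * Cm) := by
    have h1 : αP * Cm / (βP + γP * Cm) = dP + δP * Cm := by
      have h2 := hgPCm; rw [hgP] at h2; simp only at h2; linarith
    rw [div_eq_iff (ne_of_gt (hdPd Cm hCm))] at h1
    exact h1
  have hQp : αP * Cp = (dP + δP * Cp) * (βP + γP * Cp) := by
    have h1 : αP * Cp / (βP + γP * Cp) = dP + δP * Cp := by
      have h2 := hgPCp; rw [hgP] at h2; simp only at h2; linarith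
    rw [div_eq_iff (ne_of_gt (hdPd Cp hCp))] at h1
    exact h1
  have hb1 : (αP - dP * γP - δP * βP - δP * γP * (Cm + Cp)) * (Cm - Cp) = 0 := by
    linear_combination hQm - hQp
  have hB : αP - dP * γP - δP * βP = δP * γP * (Cm + Cp) := by
    rcases mul_eq_zero.mp hb1 with h1 | h1
    · linarith
    · exfalso; have := sub_eq_zero.mp h1; linarith
  have hC : dP * βP = δP * γP * (Cm * Cp) := by
    linear_combination Cm * hB - hQm
  have key : ∀ x : ℝ, βP + γP * x ≠ 0 →
      gP x * (βP + γP * x) = δP * γP * ((x - Cm) * (Cp - x)) := by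
    intro x hx
    rw [hgP]; simp only
    rw [sub_mul, div_mul_cancel₀ _ hx]
    linear_combination x * hB - hC
  -- sign facts for gP
  have gPpos : ∀ x : ℝ, Cm < x → x < Cp → 0 < gP x := by
    intro x h1 h2
    have hd := hdPd x (hCm.trans h1)
    have hx : gP x = δP * γP * ((x - Cm) * (Cp - x)) / (βP + γP * x) := by
      rw [eq_div_iff (ne_of_gt hd)]; exact key x (ne_of_gt hd)
    rw [hx]
    apply div_pos _ hd
    have := sub_pos.mpr h1
    have := sub_pos.mpr h2
    positivity
  have gPnonneg : ∀ x : ℝ, Cm ≤ x → x ≤ Cp → 0 ≤ gP x := by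
    intro x h1 h2
    have hd := hdPd x (lt_of_lt_of_le hCm h1)
    have hx : gP x = δP * γP * ((x - Cm) * (Cp - x)) / (βP + γP * x) := by
      rw [eq_div_iff (ne_of_gt hd)]; exact key x (ne_of_gt hd)
    rw [hx]
    apply div_nonneg _ hd.le
    have h3 : 0 ≤ x - Cm := by linarith
    have h4 : 0 ≤ Cp - x := by linarith
    positivity
  have gPrange : ∀ x : ℝ, 0 < x → 0 < gP x → Cm < x ∧ x < Cp := by
    intro x hx hg
    have hd := hdPd x hx
    have hk1 := key x (ne_of_gt hd)
    have hprod : 0 < (x - Cm) * (Cp - x) := by nlinarith [mul_pos hg hd, mul_pos hδP hγP]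
    constructor
    · by_contra hcon; push_neg at hcon
      nlinarith
    · by_contra hcon; push_neg at hcon
      nlinarith
  -- gA facts
  have hdAd : ∀ r : ℝ, 0 ≤ r → 0 < βA + γA * r := fun r hr => by positivity
  have gA0 : gA 0 = -dA := by rw [hgA]; simp
  have gAmono : ∀ p q : ℝ, 0 ≤ p → p < q → gA p < gA q := by
    intro p q hp hpq
    have hq : (0:ℝ) ≤ q := le_trans hp hpq.le
    have h1 := hdAd p hp; have h2 := hdAd q hq
    rw [hgA]; simp only
    have h3 : αA * p / (βA + γA * p) < αA * q / (βA + γA * q) := by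
      rw [div_lt_div_iff₀ h1 h2]
      nlinarith [mul_pos (mul_pos hαA hβA) (sub_pos.mpr hpq)]
    linarith
  have gAconc : ∀ p q a b : ℝ, 0 ≤ p → 0 ≤ q → 0 ≤ a → 0 ≤ b → a + b = 1 →
      a * gA p + b * gA q ≤ gA (a * p + b * q) := by
    intro p q a b hp hq ha hb hab
    have h1 := hdAd p hp; have h2 := hdAd q hq
    have h3 : 0 < βA + γA * (a * p + b * q) := hdAd _ (by positivity)
    have hid := frac_id αA βA γA p q a b (ne_of_gt h1) (ne_of_gt h2) (ne_of_gt h3) hab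
    have hterm : 0 ≤ αA * βA * γA * a * b * (p - q) ^ 2
        / ((βA + γA * (a * p + b * q)) * ((βA + γA * p) * (βA + γA * q))) := by positivity
    rw [hgA]; simp only
    have haff : a * dA + b * dA = dA := by rw [← add_mul, hab, one_mul]
    nlinarith [hid, hterm]
  -- gP strict concavity on positives
  have gPconc : ∀ u v a b : ℝ, 0 < u → 0 < v → u ≠ v → 0 < a → 0 < b → a + b = 1 →
      a * gP u + b * gP v < gP (a * u + b * v) := by
    intro u v a b hu hv huv ha hb hab
    have h1 := hdPd u hu; have h2 := hdPd v hv
    have h3 : 0 < βP + γP * (a * u + b * v) := hdPd _ (by positivity)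
    have hid := frac_id αP βP γP u v a b (ne_of_gt h1) (ne_of_gt h2) (ne_of_gt h3) hab
    have hsq : 0 < (u - v) ^ 2 := by
      have h4 : u - v ≠ 0 := sub_ne_zero.mpr huv
      positivity
    have hterm : 0 < αP * βP * γP * a * b * (u - v) ^ 2
        / ((βP + γP * (a * u + b * v)) * ((βP + γP * u) * (βP + γP * v))) := by
      apply div_pos _ (by positivity)
      positivity
    rw [hgP]; simp only
    have haff : a * (dP + δP * u) + b * (dP + δP * v) = dP + δP * (a * u + b * v) := by
      linear_combination dP * hab
    nlinarith [hid, hterm]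
  -- interval facts
  have hmem : ∀ x ∈ Icc (Cm / c) (Cp / c), Cm ≤ c * x ∧ c * x ≤ Cp := by
    intro x hx
    constructor
    · have h1 := hx.1; rw [div_le_iff₀ hcpos] at h1; linarith [mul_comm c x]
    · have h1 := hx.2; rw [le_div_iff₀ hcpos] at h1; linarith [mul_comm c x]
  -- strict concavity of f
  have hconc : ∀ x ∈ Icc (Cm / c) (Cp / c), ∀ y ∈ Icc (Cm / c) (Cp / c), x ≠ y →
      ∀ a b : ℝ, 0 < a → 0 < b → a + b = 1 → a * f x + b * f y < f (a * x + b * y) := by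
    intro x hx y hy hxy a b ha hb hab
    obtain ⟨hx1, hx2⟩ := hmem x hx
    obtain ⟨hy1, hy2⟩ := hmem y hy
    have hcx : 0 < c * x := lt_of_lt_of_le hCm hx1
    have hcy : 0 < c * y := lt_of_lt_of_le hCm hy1
    have hPx : 0 ≤ gP (c * x) := gPnonneg _ hx1 hx2
    have hPy : 0 ≤ gP (c * y) := gPnonneg _ hy1 hy2
    have hne : c * x ≠ c * y := fun hcc => hxy (mul_left_cancel₀ hc0 hcc)
    have step1 : a * gP (c * x) + b * gP (c * y) < gP (c * (a * x + b * y)) := by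
      have h5 := gPconc (c * x) (c * y) a b hcx hcy hne ha hb hab
      have heq : a * (c * x) + b * (c * y) = c * (a * x + b * y) := by ring
      rwa [heq] at h5
    have hck : 0 < c / k := div_pos hcpos hkpos
    have hp0 : 0 ≤ (c / k) * gP (c * x) := mul_nonneg hck.le hPx
    have hq0 : 0 ≤ (c / k) * gP (c * y) := mul_nonneg hck.le hPy
    have step2 : a * ((c / k) * gP (c * x)) + b * ((c / k) * gP (c * y))
        < (c / k) * gP (c * (a * x + b * y)) := by
      have h5 := mul_lt_mul_of_pos_left step1 hck
      rw [show a * ((c / k) * gP (c * x)) + b * ((c / k) * gP (c * y))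
          = (c / k) * (a * gP (c * x) + b * gP (c * y)) from by ring]
      exact h5
    have step3 : a * gA ((c / k) * gP (c * x)) + b * gA ((c / k) * gP (c * y))
        < gA ((c / k) * gP (c * (a * x + b * y))) := by
      have hle := gAconc _ _ a b hp0 hq0 ha.le hb.le hab
      have hlt := gAmono _ _ (by positivity) step2
      linarith
    rw [hf]; simp only
    have hh1 : 0 < 1 / h := by positivity
    have h5 := mul_lt_mul_of_pos_left step3 hh1
    rw [show a * (1 / h * gA ((c / k) * gP (c * x)) - x)
        + b * (1 / h * gA ((c / k) * gP (c * y)) - y)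
        = 1 / h * (a * gA ((c / k) * gP (c * x)) + b * gA ((c / k) * gP (c * y)))
          - (a * x + b * y) from by ring]
    linarith
  -- continuity of f
  have hgPc : ContinuousOn (fun x : ℝ => gP (c * x)) (Icc (Cm / c) (Cp / c)) := by
    rw [hgP]; simp only
    apply ContinuousOn.sub
    · apply ContinuousOn.div (by fun_prop) (by fun_prop)
      intro x hx
      exact ne_of_gt (hdPd _ (lt_of_lt_of_le hCm (hmem x hx).1))
    · fun_prop
  have hfc : ContinuousOn f (Icc (Cm / c) (Cp / c)) := by
    rw [hf]
    apply ContinuousOn.sub _ continuousOn_id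
    apply ContinuousOn.mul continuousOn_const
    have hinner : ContinuousOn (fun x : ℝ => (c / k) * gP (c * x)) (Icc (Cm / c) (Cp / c)) :=
      continuousOn_const.mul hgPc
    rw [hgA]
    apply ContinuousOn.sub _ continuousOn_const
    apply ContinuousOn.div (continuousOn_const.mul hinner)
      (continuousOn_const.add (continuousOn_const.mul hinner))
    intro x hx
    have h5 : 0 ≤ (c / k) * gP (c * x) :=
      mul_nonneg (div_pos hcpos hkpos).le (gPnonneg _ (hmem x hx).1 (hmem x hx).2)
    exact ne_of_gt (hdAd _ h5)
  -- endpoint values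
  have hcCm : c * (Cm / c) = Cm := by field_simp
  have hcCp : c * (Cp / c) = Cp := by field_simp
  have fm : f (Cm / c) < 0 := by
    rw [hf]; simp only
    rw [hcCm, hgPCm, mul_zero, gA0]
    have h5 : 0 < 1 / h := by positivity
    nlinarith [mul_pos h5 hdA]
  have fp : f (Cp / c) < 0 := by
    rw [hf]; simp only
    rw [hcCp, hgPCp, mul_zero, gA0]
    have h5 : 0 < 1 / h := by positivity
    have h6 : 0 < Cp / c := div_pos hCp hcpos
    nlinarith [mul_pos h5 hdA]
  -- the equilibrium set equals the image of the zero set of f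
  set S := {z : ℝ × ℝ | 0 < z.1 ∧ 0 < z.2 ∧ gP (c * z.2) = k * z.1 ∧
      gA (c * z.1) = h * z.2} with hS
  set Z := {x : ℝ | x ∈ Ioo (Cm / c) (Cp / c) ∧ f x = 0} with hZdef
  have hZI : Z ⊆ Icc (Cm / c) (Cp / c) := fun x hx => Ioo_subset_Icc_self hx.1
  have hSZ : S = (fun x : ℝ => (gP (c * x) / k, x)) '' Z := by
    ext z
    simp only [hS, hZdef, mem_setOf_eq, mem_image, mem_Ioo]
    constructor
    · rintro ⟨h1, h2, h3, h4⟩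
      have hgpos : 0 < gP (c * z.2) := by rw [h3]; positivity
      have hran := gPrange (c * z.2) (by positivity) hgpos
      refine ⟨z.2, ⟨⟨?_, ?_⟩, ?_⟩, ?_⟩
      · rw [div_lt_iff₀ hcpos]; linarith [hran.1, mul_comm c z.2]
      · rw [lt_div_iff₀ hcpos]; linarith [hran.2, mul_comm c z.2]
      · rw [hf]; simp only
        have hck : (c / k) * gP (c * z.2) = c * z.1 := by
          rw [h3]; field_simp
        rw [hck, h4]
        field_simp
        ring
      · have h5 : gP (c * z.2) / k = z.1 := by rw [h3]; field_simp
        rw [h5]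
    · rintro ⟨x, ⟨⟨hx1, hx2⟩, hfx⟩, rfl⟩
      have hcx1 : Cm < c * x := by rw [div_lt_iff₀ hcpos] at hx1; linarith [mul_comm c x]
      have hcx2 : c * x < Cp := by rw [lt_div_iff₀ hcpos] at hx2; linarith [mul_comm c x]
      have hgpos : 0 < gP (c * x) := gPpos _ hcx1 hcx2
      have hfx' : gA ((c / k) * gP (c * x)) = h * x := by
        rw [hf] at hfx; simp only at hfx
        have h8 : 1 / h * gA (c / k * gP (c * x)) = x := by linarith
        have h9 : h * (1 / h * gA (c / k * gP (c * x))) = h * x := by rw [h8]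
        rw [show h * (1 / h * gA (c / k * gP (c * x))) = gA (c / k * gP (c * x)) from by
          rw [one_div, ← mul_assoc, mul_inv_cancel₀ hh0, one_mul]] at h9
        exact h9
      refine ⟨div_pos hgpos hkpos, hCmc.trans hx1, by field_simp, ?_⟩
      rw [show c * (gP (c * x) / k) = (c / k) * gP (c * x) from by ring]
      exact hfx'
  have hinj : InjOn (fun x : ℝ => (gP (c * x) / k, x)) Z := by
    intro x _ y _ hxy
    exact congrArg Prod.snd hxy
  have hSZcard : S.encard = Z.encard := by rw [hSZ, hinj.encard_image]
  obtain ⟨x₀, hx₀I, hx₀M⟩ := hMmem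
  -- middle point of two zeros has positive value
  have hmid : ∀ w y z : ℝ, w ∈ Icc (Cm / c) (Cp / c) → z ∈ Icc (Cm / c) (Cp / c) →
      w < y → y < z → f w = 0 → f z = 0 → 0 < f y := by
    intro w y z hw hz h1 h2 hfw hfz
    have hwz : w ≠ z := ne_of_lt (h1.trans h2)
    have hzw : 0 < z - w := by linarith
    have ht : 0 < (z - y) / (z - w) := div_pos (by linarith) hzw
    have hs : 0 < (y - w) / (z - w) := div_pos (by linarith) hzw
    have hts : (z - y) / (z - w) + (y - w) / (z - w) = 1 := by
      rw [← add_div, show z - y + (y - w) = z - w from by ring, div_self hzw.ne']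
    have hy : (z - y) / (z - w) * w + (y - w) / (z - w) * z = y := by
      field_simp; ring
    have h5 := hconc w hw z hz hwz _ _ ht hs hts
    rw [hy, hfw, hfz] at h5
    simpa using h5
  -- case M < 0
  have claim_neg : M < 0 → S = ∅ := by
    intro hM
    rw [hSZ]
    have hZe : Z = ∅ := by
      ext x
      simp only [hZdef, mem_setOf_eq, mem_empty_iff_false, iff_false, not_and]
      intro hx hfx
      have h5 := hMub x (Ioo_subset_Icc_self hx)
      rw [hfx] at h5; linarith
    rw [hZe, image_empty]
  -- case M = 0
  have claim_zero : M = 0 → S.encard = 1 := by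
    intro hM
    have hx0f : f x₀ = 0 := by rw [hx₀M, hM]
    have hx0Ioo : x₀ ∈ Ioo (Cm / c) (Cp / c) := by
      obtain ⟨l, r⟩ := hx₀I
      constructor
      · rcases l.lt_or_eq with h5 | h5
        · exact h5
        · exfalso; rw [← h5] at hx0f; linarith
      · rcases r.lt_or_eq with h5 | h5
        · exact h5
        · exfalso; rw [h5] at hx0f; linarith
    have hZeq : Z = {x₀} := by
      ext x
      simp only [hZdef, mem_setOf_eq, mem_singleton_iff]
      constructor
      · rintro ⟨hx, hfx⟩
        by_contra hne
        rcases lt_or_gt_of_ne hne with h5 | h5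
        · have h6 : 0 < f ((x + x₀) / 2) :=
            hmid x ((x + x₀) / 2) x₀ (Ioo_subset_Icc_self hx) (Ioo_subset_Icc_self hx0Ioo)
              (by linarith) (by linarith) hfx hx0f
          have h7 := hMub ((x + x₀) / 2)
            ⟨by rcases hx with ⟨a1, _⟩; rcases hx0Ioo with ⟨b1, _⟩; linarith,
             by rcases hx with ⟨_, a2⟩; rcases hx0Ioo with ⟨_, b2⟩; linarith⟩
          rw [hM] at h7; linarith
        · have h6 : 0 < f ((x + x₀) / 2) :=
            hmid x₀ ((x + x₀) / 2) x (Ioo_subset_Icc_self hx0Ioo) (Ioo_subset_Icc_self hx)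
              (by linarith) (by linarith) hx0f hfx
          have h7 := hMub ((x + x₀) / 2)
            ⟨by rcases hx with ⟨a1, _⟩; rcases hx0Ioo with ⟨b1, _⟩; linarith,
             by rcases hx with ⟨_, a2⟩; rcases hx0Ioo with ⟨_, b2⟩; linarith⟩
          rw [hM] at h7; linarith
      · rintro rfl
        exact ⟨hx0Ioo, hx0f⟩
    rw [hSZcard, hZeq, encard_singleton]
  -- case M > 0
  have claim_pos : 0 < M → S.encard = 2 := by
    intro hM
    have hx0f : f x₀ = M := hx₀M
    have hx0Ioo : x₀ ∈ Ioo (Cm / c) (Cp / c) := by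
      obtain ⟨l, r⟩ := hx₀I
      constructor
      · rcases l.lt_or_eq with h5 | h5
        · exact h5
        · exfalso; rw [← h5] at hx0f; linarith
      · rcases r.lt_or_eq with h5 | h5
        · exact h5
        · exfalso; rw [h5] at hx0f; linarith
    have ivt1 : ∃ a1 ∈ Ioo (Cm / c) x₀, f a1 = 0 := by
      have hsub : Icc (Cm / c) x₀ ⊆ Icc (Cm / c) (Cp / c) := Icc_subset_Icc le_rfl hx₀I.2
      have h5 := intermediate_value_Ioo (le_of_lt hx0Ioo.1) (hfc.mono hsub)
      have h0 : (0:ℝ) ∈ Ioo (f (Cm / c)) (f x₀) := ⟨fm, by rw [hx0f]; exact hM⟩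
      obtain ⟨a1, ha1, hfa1⟩ := h5 h0
      exact ⟨a1, ha1, hfa1⟩
    have ivt2 : ∃ b1 ∈ Ioo x₀ (Cp / c), f b1 = 0 := by
      have hsub : Icc x₀ (Cp / c) ⊆ Icc (Cm / c) (Cp / c) := Icc_subset_Icc hx₀I.1 le_rfl
      have h5 := intermediate_value_Ioo' (le_of_lt hx0Ioo.2) (hfc.mono hsub)
      have h0 : (0:ℝ) ∈ Ioo (f (Cp / c)) (f x₀) := ⟨fp, by rw [hx0f]; exact hM⟩
      obtain ⟨b1, hb1, hfb1⟩ := h5 h0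
      exact ⟨b1, hb1, hfb1⟩
    obtain ⟨a1, ha1, hfa1⟩ := ivt1
    obtain ⟨b1, hb1, hfb1⟩ := ivt2
    have hab : a1 < b1 := ha1.2.trans hb1.1
    have ha1Z : a1 ∈ Z := ⟨⟨ha1.1, lt_trans ha1.2 hx0Ioo.2⟩, hfa1⟩
    have hb1Z : b1 ∈ Z := ⟨⟨lt_trans hx0Ioo.1 hb1.1, hb1.2⟩, hfb1⟩
    have hne : a1 ≠ b1 := ne_of_lt hab
    have hZeq : Z = {a1, b1} := by
      ext w
      simp only [mem_insert_iff, mem_singleton_iff]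
      constructor
      · intro hwZ
        obtain ⟨hw, hfw⟩ := hwZ
        by_contra hcon
        push_neg at hcon
        obtain ⟨hw1, hw2⟩ := hcon
        rcases lt_trichotomy w a1 with h5 | h5 | h5
        · have h6 := hmid w a1 b1 (Ioo_subset_Icc_self hw) (hZI hb1Z) h5 hab hfw hfb1
          rw [hfa1] at h6; linarith
        · exact hw1 h5
        · rcases lt_trichotomy w b1 with h7 | h7 | h7
          · have h6 := hmid a1 w b1 (hZI ha1Z) (hZI hb1Z) h5 h7 hfa1 hfb1
            rw [hfw] at h6; linarith
          · exact hw2 h7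
          · have h6 := hmid a1 b1 w (hZI ha1Z) (Ioo_subset_Icc_self hw) hab h7 hfa1 hfw
            rw [hfb1] at h6; linarith
      · rintro (rfl | rfl)
        · exact ha1Z
        · exact hb1Z
    rw [hSZcard, hZeq, encard_pair hne]
  refine ⟨claim_pos, claim_zero, claim_neg, ?_⟩
  rcases lt_trichotomy M 0 with hM | hM | hM
  · rw [claim_neg hM]; simp
  · rw [claim_zero hM]; exact one_le_two
  · rw [claim_pos hM]
end

section
/- Let g^P, g^A be the concrete growth-rate functions with positive parameters, let c, k, h > 0, and assume there exists r > 0 with g^P(r) > 0. Let C₀⁻ < C₀⁺ be the two zeros of g^P in (0,∞). Then the function f(x) = (1/h) g^A((c/k) g^P(c x)) − x satisfies f''(x) < 0 for every x ∈ (C₀⁻/c, C₀⁺/c); in particular f is strictly concave on the interval [C₀⁻/c, C₀⁺/c]. -/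
open Set

lemma aux_mobius_deriv (a b g R : ℝ) (hden : b + g * R ≠ 0) :
    HasDerivAt (fun R => a * R / (b + g * R)) (a * b / (b + g * R) ^ 2) R := by
  have hd : HasDerivAt (fun R : ℝ => b + g * R) g R := by
    simpa using ((hasDerivAt_id R).const_mul g).const_add b
  have hn : HasDerivAt (fun R : ℝ => a * R) a R := by
    simpa using (hasDerivAt_id R).const_mul a
  have := hn.fun_div hd hden
  refine this.congr_deriv ?_
  field_simp
  ring

lemma aux_inv_sq_deriv (K b g R : ℝ) (hden : b + g * R ≠ 0) :
    HasDerivAt (fun R => K / (b + g * R) ^ 2) (-2 * K * g / (b + g * R) ^ 3) R := by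
  have hd : HasDerivAt (fun R : ℝ => b + g * R) g R := by
    simpa using ((hasDerivAt_id R).const_mul g).const_add b
  have hd2 : HasDerivAt (fun R : ℝ => (b + g * R) ^ 2) (2 * (b + g * R) * g) R := by
    simpa using hd.fun_pow 2
  have := (hasDerivAt_const R K).fun_div hd2 (pow_ne_zero 2 hden)
  refine this.congr_deriv ?_
  field_simp
  ring

set_option maxHeartbeats 1000000 in
/-- The auxiliary function `f(x) = (1/h) gA((c/k) gP(c x)) − x` has a strictly
negative second derivative on `(C₀⁻/c, C₀⁺/c)`; in particular it is strictly
concave on `[C₀⁻/c, C₀⁺/c]`. -/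
theorem stmt_8 (αP βP γP dP δP αA βA γA dA c k h : ℝ)
    (hαP : 0 < αP) (hβP : 0 < βP) (hγP : 0 < γP) (hdP : 0 < dP) (hδP : 0 < δP)
    (hαA : 0 < αA) (hβA : 0 < βA) (hγA : 0 < γA) (hdA : 0 < dA)
    (hcpos : 0 < c) (hkpos : 0 < k) (hhpos : 0 < h)
    (gP gA f : ℝ → ℝ)
    (hgP : gP = fun R => αP * R / (βP + γP * R) - (dP + δP * R))
    (hgA : gA = fun R => αA * R / (βA + γA * R) - dA)
    (hr : ∃ r > (0:ℝ), 0 < gP r)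
    (Cm Cp : ℝ) (hCm : 0 < Cm) (hCmCp : Cm < Cp)
    (hzeros : ∀ x > (0:ℝ), (gP x = 0 ↔ x = Cm ∨ x = Cp))
    (hf : f = fun x => (1 / h) * gA ((c / k) * gP (c * x)) - x) :
    (∀ x ∈ Ioo (Cm / c) (Cp / c), deriv (deriv f) x < 0) ∧
    StrictConcaveOn ℝ (Icc (Cm / c) (Cp / c)) f := by
  obtain ⟨r, hrpos, hgr⟩ := hr
  have hdenpos : ∀ R : ℝ, 0 ≤ R → 0 < βP + γP * R := fun R hR => by nlinarith
  have hcont : ContinuousOn gP (Ici (0:ℝ)) := by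
    rw [hgP]
    apply ContinuousOn.sub
    · exact ContinuousOn.div (by fun_prop) (by fun_prop)
        (fun x hx => (hdenpos x hx).ne')
    · fun_prop
  have hsub : ∀ a b : ℝ, 0 ≤ a → Icc a b ⊆ Ici (0:ℝ) :=
    fun a b ha y hy => le_trans ha hy.1
  have h0 : gP 0 < 0 := by
    rw [hgP]; simp; positivity
  have hbig : ∀ R : ℝ, r < R → αP / (γP * δP) < R → gP R < 0 := by
    intro R h1 h2
    rw [hgP]
    have hRpos : 0 < R := lt_trans hrpos h1
    have hd := hdenpos R hRpos.le
    have h3 : αP < R * (γP * δP) := (div_lt_iff₀ (by positivity)).mp h2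
    rw [sub_neg, div_lt_iff₀ hd]
    nlinarith [mul_pos hdP hβP, mul_pos hdP (mul_pos hγP hRpos),
      mul_pos (mul_pos hδP hRpos) hβP]
  -- `r` is strictly between the two zeros
  have hrCm : Cm < r := by
    by_contra hle
    push_neg at hle
    rcases eq_or_lt_of_le hle with heq | hlt
    · exact hgr.ne' ((hzeros r hrpos).mpr (Or.inl heq))
    · obtain ⟨z, hz, hz0⟩ := intermediate_value_Ioo hrpos.le
        (hcont.mono (hsub 0 r le_rfl)) (Set.mem_Ioo.mpr ⟨h0, hgr⟩)
      rcases (hzeros z hz.1).mp hz0 with hh | hh <;> simp [hh] at hz <;> linarith [hz.2]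
  have hrCp : r < Cp := by
    by_contra hle
    push_neg at hle
    rcases eq_or_lt_of_le hle with heq | hlt
    · exact hgr.ne' ((hzeros r hrpos).mpr (Or.inr heq.symm))
    · set R0 := max (r + 1) (αP / (γP * δP) + 1) with hR0
      have hR1 : r < R0 := lt_of_lt_of_le (by linarith) (le_max_left _ _)
      have hR2 : αP / (γP * δP) < R0 := lt_of_lt_of_le (by linarith) (le_max_right _ _)
      have hneg := hbig R0 hR1 hR2
      obtain ⟨z, hz, hz0⟩ := intermediate_value_Ioo' hR1.le
        (hcont.mono (hsub r R0 hrpos.le)) (Set.mem_Ioo.mpr ⟨hneg, hgr⟩)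
      rcases (hzeros z (lt_trans hrpos hz.1)).mp hz0 with hh | hh <;>
        (subst hh; linarith [hz.1, hz.2])
  -- `gP` is positive strictly between the zeros
  have hgPpos : ∀ R ∈ Ioo Cm Cp, 0 < gP R := by
    intro R hR
    have hRpos : 0 < R := lt_trans hCm hR.1
    rcases lt_trichotomy (gP R) 0 with hneg | hzero | hpos
    · exfalso
      rcases lt_trichotomy R r with hh | hh | hh
      · obtain ⟨z, hz, hz0⟩ := intermediate_value_Ioo hh.le
          (hcont.mono (hsub R r hRpos.le)) (Set.mem_Ioo.mpr ⟨hneg, hgr⟩)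
        rcases (hzeros z (lt_trans hRpos hz.1)).mp hz0 with h3 | h3 <;>
          (subst h3; linarith [hz.1, hz.2, hR.1, hR.2])
      · subst hh; linarith
      · obtain ⟨z, hz, hz0⟩ := intermediate_value_Ioo' hh.le
          (hcont.mono (hsub r R hrpos.le)) (Set.mem_Ioo.mpr ⟨hneg, hgr⟩)
        rcases (hzeros z (lt_trans hrpos hz.1)).mp hz0 with h3 | h3 <;>
          (subst h3; linarith [hz.1, hz.2, hR.1, hR.2])
    · rcases (hzeros R hRpos).mp hzero with h3 | h3 <;>
        (subst h3; linarith [hR.1, hR.2])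
    · exact hpos
  -- `gP` is nonnegative on the closed interval between the zeros
  have hgPnn : ∀ R ∈ Icc Cm Cp, 0 ≤ gP R := by
    intro R hR
    rcases eq_or_lt_of_le hR.1 with hh | hh
    · exact le_of_eq (((hzeros R (by linarith)).mpr (Or.inl hh.symm))).symm
    rcases eq_or_lt_of_le hR.2 with hh2 | hh2
    · exact le_of_eq (((hzeros R (by linarith)).mpr (Or.inr hh2))).symm
    · exact (hgPpos R ⟨hh, hh2⟩).le
  -- membership facts
  have hmemo : ∀ x ∈ Ioo (Cm / c) (Cp / c), Cm < c * x ∧ c * x < Cp := by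
    intro x hx
    constructor
    · rw [mul_comm]; exact (div_lt_iff₀ hcpos).mp hx.1
    · rw [mul_comm]; exact (lt_div_iff₀ hcpos).mp hx.2
  have hmemc : ∀ x ∈ Icc (Cm / c) (Cp / c), Cm ≤ c * x ∧ c * x ≤ Cp := by
    intro x hx
    constructor
    · rw [mul_comm]; exact (div_le_iff₀ hcpos).mp hx.1
    · rw [mul_comm]; exact (le_div_iff₀ hcpos).mp hx.2
  -- denominators on the open interval
  have h1o : ∀ x ∈ Ioo (Cm / c) (Cp / c), 0 < βP + γP * (c * x) := by
    intro x hx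
    have := (hmemo x hx).1
    exact hdenpos _ (by linarith)
  have h2o : ∀ x ∈ Ioo (Cm / c) (Cp / c), 0 < βA + γA * (c / k * gP (c * x)) := by
    intro x hx
    have hg := hgPpos (c * x) ⟨(hmemo x hx).1, (hmemo x hx).2⟩
    have hck : 0 < c / k := by positivity
    nlinarith [mul_pos hγA (mul_pos hck hg)]
  -- derivative of gP
  have hgP' : ∀ R : ℝ, βP + γP * R ≠ 0 →
      HasDerivAt gP (αP * βP / (βP + γP * R) ^ 2 - δP) R := by
    intro R hR
    rw [hgP]
    exact (aux_mobius_deriv αP βP γP R hR).sub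
      (by simpa using ((hasDerivAt_id R).const_mul δP).const_add dP)
  -- first derivative of f on the open interval
  have hd1 : ∀ x ∈ Ioo (Cm / c) (Cp / c),
      HasDerivAt f (1 / h * (αA * βA / (βA + γA * (c / k * gP (c * x))) ^ 2 *
        (c / k * ((αP * βP / (βP + γP * (c * x)) ^ 2 - δP) * c))) - 1) x := by
    intro x hx
    have h1 := h1o x hx
    have h2 := h2o x hx
    have hcx : HasDerivAt (fun x : ℝ => c * x) c x := by
      simpa using (hasDerivAt_id x).const_mul c
    have hu : HasDerivAt (fun x => c / k * gP (c * x))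
        (c / k * ((αP * βP / (βP + γP * (c * x)) ^ 2 - δP) * c)) x := by
      have := ((hgP' (c * x) h1.ne').comp x hcx).const_mul (c / k)
      simpa [Function.comp] using this
    rw [hf]
    have hA : HasDerivAt gA (αA * βA / (βA + γA * (c / k * gP (c * x))) ^ 2)
        (c / k * gP (c * x)) := by
      rw [hgA]
      simpa using (aux_mobius_deriv αA βA γA (c / k * gP (c * x)) h2.ne').sub_const dA
    have := (((hA.comp x hu).const_mul (1 / h)).fun_sub (hasDerivAt_id x))
    simpa [Function.comp] using this
  -- second derivative of f on the open interval
  have hd2 : ∀ x ∈ Ioo (Cm / c) (Cp / c),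
      HasDerivAt (fun x => 1 / h * (αA * βA / (βA + γA * (c / k * gP (c * x))) ^ 2 *
        (c / k * ((αP * βP / (βP + γP * (c * x)) ^ 2 - δP) * c))) - 1)
        (1 / h * (-2 * (αA * βA) * γA / (βA + γA * (c / k * gP (c * x))) ^ 3 *
            (c / k * ((αP * βP / (βP + γP * (c * x)) ^ 2 - δP) * c)) *
            (c / k * ((αP * βP / (βP + γP * (c * x)) ^ 2 - δP) * c)) +
          αA * βA / (βA + γA * (c / k * gP (c * x))) ^ 2 *
            (c / k * ((-2 * (αP * βP) * γP / (βP + γP * (c * x)) ^ 3 * c) * c)))) x := by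
    intro x hx
    have h1 := h1o x hx
    have h2 := h2o x hx
    have hcx : HasDerivAt (fun x : ℝ => c * x) c x := by
      simpa using (hasDerivAt_id x).const_mul c
    have hu : HasDerivAt (fun x => c / k * gP (c * x))
        (c / k * ((αP * βP / (βP + γP * (c * x)) ^ 2 - δP) * c)) x := by
      have := ((hgP' (c * x) h1.ne').comp x hcx).const_mul (c / k)
      simpa [Function.comp] using this
    have hAu : HasDerivAt (fun x => αA * βA / (βA + γA * (c / k * gP (c * x))) ^ 2)
        (-2 * (αA * βA) * γA / (βA + γA * (c / k * gP (c * x))) ^ 3 *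
          (c / k * ((αP * βP / (βP + γP * (c * x)) ^ 2 - δP) * c))) x := by
      have := (aux_inv_sq_deriv (αA * βA) βA γA (c / k * gP (c * x)) h2.ne').comp x hu
      simpa [Function.comp_def] using this
    have hB : HasDerivAt (fun x => c / k * ((αP * βP / (βP + γP * (c * x)) ^ 2 - δP) * c))
        (c / k * ((-2 * (αP * βP) * γP / (βP + γP * (c * x)) ^ 3 * c) * c)) x := by
      have hP2 : HasDerivAt (fun R => αP * βP / (βP + γP * R) ^ 2 - δP)
          (-2 * (αP * βP) * γP / (βP + γP * (c * x)) ^ 3) (c * x) :=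
        (aux_inv_sq_deriv (αP * βP) βP γP (c * x) h1.ne').sub_const δP
      have := ((hP2.comp x hcx).mul_const c).const_mul (c / k)
      simpa [Function.comp] using this
    have := ((hAu.mul hB).const_mul (1 / h)).sub_const 1
    simpa using this
  -- the second derivative is negative
  have hneg2 : ∀ x ∈ Ioo (Cm / c) (Cp / c),
      1 / h * (-2 * (αA * βA) * γA / (βA + γA * (c / k * gP (c * x))) ^ 3 *
          (c / k * ((αP * βP / (βP + γP * (c * x)) ^ 2 - δP) * c)) *
          (c / k * ((αP * βP / (βP + γP * (c * x)) ^ 2 - δP) * c)) +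
        αA * βA / (βA + γA * (c / k * gP (c * x))) ^ 2 *
          (c / k * ((-2 * (αP * βP) * γP / (βP + γP * (c * x)) ^ 3 * c) * c))) < 0 := by
    intro x hx
    have h1 := h1o x hx
    have h2 := h2o x hx
    set B : ℝ := c / k * ((αP * βP / (βP + γP * (c * x)) ^ 2 - δP) * c) with hB
    have hA' : -2 * (αA * βA) * γA / (βA + γA * (c / k * gP (c * x))) ^ 3 < 0 :=
      div_neg_of_neg_of_pos (by nlinarith [mul_pos (mul_pos hαA hβA) hγA]) (pow_pos h2 3)
    have hT1 : -2 * (αA * βA) * γA / (βA + γA * (c / k * gP (c * x))) ^ 3 * B * B ≤ 0 := by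
      have hrw : -2 * (αA * βA) * γA / (βA + γA * (c / k * gP (c * x))) ^ 3 * B * B =
          -2 * (αA * βA) * γA / (βA + γA * (c / k * gP (c * x))) ^ 3 * B ^ 2 := by ring
      rw [hrw]
      exact mul_nonpos_iff.mpr (Or.inr ⟨hA'.le, sq_nonneg B⟩)
    have hApos : 0 < αA * βA / (βA + γA * (c / k * gP (c * x))) ^ 2 :=
      div_pos (by positivity) (pow_pos h2 2)
    have hP'' : -2 * (αP * βP) * γP / (βP + γP * (c * x)) ^ 3 < 0 :=
      div_neg_of_neg_of_pos (by nlinarith [mul_pos (mul_pos hαP hβP) hγP]) (pow_pos h1 3)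
    have hu'' : c / k * ((-2 * (αP * βP) * γP / (βP + γP * (c * x)) ^ 3 * c) * c) < 0 :=
      mul_neg_of_pos_of_neg (by positivity)
        (mul_neg_of_neg_of_pos (mul_neg_of_neg_of_pos hP'' hcpos) hcpos)
    have hT2 := mul_neg_of_pos_of_neg hApos hu''
    exact mul_neg_of_pos_of_neg (by positivity) (by linarith)
  -- conclusion, part one
  have part1 : ∀ x ∈ Ioo (Cm / c) (Cp / c), deriv (deriv f) x < 0 := by
    intro x hx
    have heq : deriv f =ᶠ[nhds x]
        (fun x => 1 / h * (αA * βA / (βA + γA * (c / k * gP (c * x))) ^ 2 *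
          (c / k * ((αP * βP / (βP + γP * (c * x)) ^ 2 - δP) * c))) - 1) :=
      Filter.eventuallyEq_of_mem (isOpen_Ioo.mem_nhds hx) (fun y hy => (hd1 y hy).deriv)
    rw [heq.deriv_eq, (hd2 x hx).deriv]
    exact hneg2 x hx
  refine ⟨part1, ?_⟩
  -- continuity of f on the closed interval
  have hcontf : ContinuousOn f (Icc (Cm / c) (Cp / c)) := by
    have h1c : ∀ x ∈ Icc (Cm / c) (Cp / c), 0 < βP + γP * (c * x) := by
      intro x hx
      have := (hmemc x hx).1
      exact hdenpos _ (by linarith)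
    have h2c : ∀ x ∈ Icc (Cm / c) (Cp / c), 0 < βA + γA * (c / k * gP (c * x)) := by
      intro x hx
      have hg := hgPnn (c * x) ⟨(hmemc x hx).1, (hmemc x hx).2⟩
      have hck : 0 < c / k := by positivity
      nlinarith [mul_nonneg hγA.le (mul_nonneg hck.le hg)]
    have hYcont : ContinuousOn (fun x => c / k * gP (c * x)) (Icc (Cm / c) (Cp / c)) := by
      rw [hgP]
      apply ContinuousOn.mul continuousOn_const
      apply ContinuousOn.sub _ (by fun_prop)
      apply ContinuousOn.div (by fun_prop) (by fun_prop)
      exact fun x hx => (h1c x hx).ne'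
    rw [hf, hgA]
    apply ContinuousOn.sub _ continuousOn_id
    apply ContinuousOn.mul continuousOn_const
    apply ContinuousOn.sub _ continuousOn_const
    apply ContinuousOn.div (continuousOn_const.mul hYcont)
      (continuousOn_const.add (continuousOn_const.mul hYcont))
    exact fun x hx => (h2c x hx).ne'
  refine strictConcaveOn_of_deriv2_neg (convex_Icc _ _) hcontf ?_
  intro x hx
  rw [interior_Icc] at hx
  have := part1 x hx
  simpa [Function.iterate_succ', Function.iterate_zero, Function.comp] using this
end

section
/- Let g^P, g^A be the concrete growth-rate functions with positive parameters, let c, k, h > 0, and let (P, A) ∈ (0,∞)² be a positive equilibrium, i.e. g^P(cA) = kP and g^A(cP) = hA. Let J be the 2×2 real matrix with rows (−kP, cP·(g^P)'(cA)) and (cA·(g^A)'(cP), −hA), and let f(x) = (1/h) g^A((c/k) g^P(c x)) − x. Then trace(J) = −(kP + hA) < 0 and det(J) = −P·A·h·k·f'(A). Consequently, if f'(A) < 0 then every complex root λ of the characteristic polynomial λ² − trace(J)·λ + det(J) has negative real part, while if f'(A) > 0 then this polynomial has one positive and one negative real root. -/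
open Set Matrix

lemma quad_neg_re (T D : ℝ) (hT : T < 0) (hD : 0 < D) :
    ∀ lam : ℂ, lam ^ 2 - (T : ℂ) * lam + (D : ℂ) = 0 → lam.re < 0 := by
  intro lam heq
  set x := lam.re with hx
  set y := lam.im with hy
  have h1 := congrArg Complex.re heq
  have h2 := congrArg Complex.im heq
  simp [pow_two, Complex.add_re, Complex.sub_re, Complex.mul_re, Complex.mul_im,
    Complex.add_im, Complex.sub_im, Complex.ofReal_re, Complex.ofReal_im] at h1 h2
  by_contra hxn
  push_neg at hxn
  have hy0 : y = 0 := by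
    rcases mul_eq_zero.mp (show y * (2 * x - T) = 0 by nlinarith) with h | h
    · exact h
    · nlinarith
  nlinarith [hy0, hxn, hD, hT]

lemma quad_two_roots (T D : ℝ) (hD : D < 0) :
    ∃ l₁ l₂ : ℝ, 0 < l₁ ∧ l₂ < 0 ∧
      l₁ ^ 2 - T * l₁ + D = 0 ∧ l₂ ^ 2 - T * l₂ + D = 0 := by
  set s := Real.sqrt (T ^ 2 - 4 * D) with hsdef
  have hs0 : 0 ≤ s := Real.sqrt_nonneg _
  have hs2 : s ^ 2 = T ^ 2 - 4 * D := Real.sq_sqrt (by nlinarith [sq_nonneg T])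
  refine ⟨(T + s) / 2, (T - s) / 2, ?_, ?_, ?_, ?_⟩
  · nlinarith
  · nlinarith
  · linear_combination hs2 / 4
  · linear_combination hs2 / 4

lemma diff_g (α β γ d δ R : ℝ) (hden : β + γ * R ≠ 0) :
    DifferentiableAt ℝ (fun R => α * R / (β + γ * R) - (d + δ * R)) R := by
  apply DifferentiableAt.sub
  · exact (differentiableAt_const α |>.mul differentiableAt_fun_id).div
      ((differentiableAt_const β).add ((differentiableAt_const γ).mul differentiableAt_fun_id)) hden
  · exact (differentiableAt_const d).add ((differentiableAt_const δ).mul differentiableAt_fun_id)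

/-- Trace and determinant of the Jacobian at a positive equilibrium of the
one-plant/one-pollinator system, and the induced stability dichotomy in terms
of the sign of `f'(A)`. -/
theorem stmt_9 (αP βP γP dP δP αA βA γA dA c k h : ℝ)
    (hαP : 0 < αP) (hβP : 0 < βP) (hγP : 0 < γP) (hdP : 0 < dP) (hδP : 0 < δP)
    (hαA : 0 < αA) (hβA : 0 < βA) (hγA : 0 < γA) (hdA : 0 < dA)
    (hcpos : 0 < c) (hkpos : 0 < k) (hhpos : 0 < h)
    (gP gA f : ℝ → ℝ)
    (hgP : gP = fun R => αP * R / (βP + γP * R) - (dP + δP * R))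
    (hgA : gA = fun R => αA * R / (βA + γA * R) - dA)
    (hf : f = fun x => (1 / h) * gA ((c / k) * gP (c * x)) - x)
    (P A : ℝ) (hP : 0 < P) (hA : 0 < A)
    (heqP : gP (c * A) = k * P) (heqA : gA (c * P) = h * A)
    (J : Matrix (Fin 2) (Fin 2) ℝ)
    (hJ : J = !![-(k * P), c * P * deriv gP (c * A);
                 c * A * deriv gA (c * P), -(h * A)]) :
    Matrix.trace J = -(k * P + h * A) ∧ Matrix.trace J < 0 ∧
    J.det = -(P * A * h * k * deriv f A) ∧
    (deriv f A < 0 →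
      ∀ lam : ℂ, lam ^ 2 - ((Matrix.trace J : ℝ) : ℂ) * lam + (J.det : ℂ) = 0 →
        lam.re < 0) ∧
    (0 < deriv f A →
      ∃ l₁ l₂ : ℝ, 0 < l₁ ∧ l₂ < 0 ∧
        l₁ ^ 2 - Matrix.trace J * l₁ + J.det = 0 ∧
        l₂ ^ 2 - Matrix.trace J * l₂ + J.det = 0) := by
  -- differentiability of gP at c*A and gA at c*P
  have hdP1 : DifferentiableAt ℝ gP (c * A) := by
    rw [hgP]; exact diff_g _ _ _ _ _ _ (by positivity)
  have hdA1 : DifferentiableAt ℝ gA (c * P) := by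
    rw [hgA]
    have := diff_g αA βA γA dA 0 (c * P) (show βA + γA * (c * P) ≠ 0 by positivity)
    simpa using this.add (differentiableAt_const dA)
  set p' := deriv gP (c * A) with hp'
  set a' := deriv gA (c * P) with ha'
  -- derivative of f at A
  have hinner : HasDerivAt (fun x : ℝ => c * x) c A := by
    simpa using (hasDerivAt_id A).const_mul c
  have h1 : HasDerivAt (fun x : ℝ => gP (c * x)) (p' * c) A :=
    (hdP1.hasDerivAt).comp A hinner
  have h2 : HasDerivAt (fun x : ℝ => (c / k) * gP (c * x)) ((c / k) * (p' * c)) A :=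
    h1.const_mul (c / k)
  have hpt : (c / k) * gP (c * A) = c * P := by
    rw [heqP]; field_simp
  have h3 : HasDerivAt (fun x : ℝ => gA ((c / k) * gP (c * x)))
      (a' * ((c / k) * (p' * c))) A := by
    have hA2 : HasDerivAt gA a' ((c / k) * gP (c * A)) := by
      rw [hpt]; exact hdA1.hasDerivAt
    exact hA2.comp A h2
  have h4 : HasDerivAt f ((1 / h) * (a' * ((c / k) * (p' * c))) - 1) A := by
    rw [hf]
    exact (h3.const_mul (1 / h)).sub (hasDerivAt_id A)
  have hderf : deriv f A = (1 / h) * (a' * ((c / k) * (p' * c))) - 1 := h4.deriv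
  have htr : Matrix.trace J = -(k * P + h * A) := by
    rw [hJ, Matrix.trace_fin_two]; simp; ring
  have hdet : J.det = -(P * A * h * k * deriv f A) := by
    rw [hJ, Matrix.det_fin_two_of, hderf]
    field_simp
    ring
  have htrneg : Matrix.trace J < 0 := by rw [htr]; nlinarith
  refine ⟨htr, htrneg, hdet, ?_, ?_⟩
  · intro hfneg lam heq
    have hPAhk : 0 < P * A * h * k := by positivity
    have hDpos : 0 < J.det := by
      rw [hdet]; nlinarith [mul_pos hPAhk (neg_pos.mpr hfneg)]
    exact quad_neg_re _ _ htrneg hDpos lam heq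
  · intro hfpos
    have hPAhk : 0 < P * A * h * k := by positivity
    have hDneg : J.det < 0 := by
      rw [hdet]; nlinarith [mul_pos hPAhk hfpos]
    exact quad_two_roots _ _ hDneg
end

section
/- Let ψ : [0,1]² → ℝ be continuous and strictly increasing in each variable (i.e. for each fixed y, x ↦ ψ(x,y) is strictly increasing, and for each fixed x, y ↦ ψ(x,y) is strictly increasing), let g^P, g^A : ℝ → ℝ be continuous with g^A strictly increasing, g^P(0) < 0 and g^A(0) < 0, and let k, h > 0. Suppose p, a : [0,1] → [0,∞) are Lebesgue-integrable functions such that for almost every x with p(x) > 0, g^P(∫₀¹ ψ(x,y) a(y) dy) = k ∫₀¹ p, and for almost every y with a(y) > 0, g^A(∫₀¹ ψ(x,y) p(x) dx) = h ∫₀¹ a. Then p = 0 almost everywhere and a = 0 almost everywhere. -/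
open Set MeasureTheory

private lemma exists_mem_of_ae {α : Type*} [MeasurableSpace α] {μ : Measure α}
    {S : Set α} {Q : α → Prop} (hS : μ S ≠ 0) (hQ : ∀ᵐ x ∂μ, Q x) :
    ∃ x ∈ S, Q x := by
  have := (frequently_ae_mem_iff.2 hS).and_eventually hQ
  obtain ⟨x, hx1, hx2⟩ := this.exists
  exact ⟨x, hx1, hx2⟩

/-- The kinetic plant–pollinator system with constant competition kernels and
an interaction function strictly increasing in each variable has no non-null
stationary state with densities. -/
theorem stmt_10 (ψ : ℝ → ℝ → ℝ)
    (hψc : ContinuousOn (fun q : ℝ × ℝ => ψ q.1 q.2) (Icc 0 1 ×ˢ Icc 0 1))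
    (hψx : ∀ y ∈ Icc (0:ℝ) 1, StrictMonoOn (fun x => ψ x y) (Icc (0:ℝ) 1))
    (hψy : ∀ x ∈ Icc (0:ℝ) 1, StrictMonoOn (fun y => ψ x y) (Icc (0:ℝ) 1))
    (gP gA : ℝ → ℝ) (hgPc : Continuous gP) (hgAc : Continuous gA)
    (hgAmono : StrictMono gA) (hgP0 : gP 0 < 0) (hgA0 : gA 0 < 0)
    (k h : ℝ) (hk : 0 < k) (hh : 0 < h)
    (p a : ℝ → ℝ)
    (hpint : IntegrableOn p (Icc 0 1)) (haint : IntegrableOn a (Icc 0 1))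
    (hpnn : ∀ x ∈ Icc (0:ℝ) 1, 0 ≤ p x) (hann : ∀ y ∈ Icc (0:ℝ) 1, 0 ≤ a y)
    (hstatP : ∀ᵐ x ∂(volume.restrict (Icc (0:ℝ) 1)), 0 < p x →
      gP (∫ y in Icc (0:ℝ) 1, ψ x y * a y) = k * ∫ x' in Icc (0:ℝ) 1, p x')
    (hstatA : ∀ᵐ y ∂(volume.restrict (Icc (0:ℝ) 1)), 0 < a y →
      gA (∫ x in Icc (0:ℝ) 1, ψ x y * p x) = h * ∫ y' in Icc (0:ℝ) 1, a y') :
    (∀ᵐ x ∂(volume.restrict (Icc (0:ℝ) 1)), p x = 0) ∧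
    (∀ᵐ y ∂(volume.restrict (Icc (0:ℝ) 1)), a y = 0) := by
  set μ := volume.restrict (Icc (0:ℝ) 1) with hμ
  have hmemae : ∀ᵐ x ∂μ, x ∈ Icc (0:ℝ) 1 := ae_restrict_mem measurableSet_Icc
  set P := ∫ x' in Icc (0:ℝ) 1, p x' with hP
  set A := ∫ y' in Icc (0:ℝ) 1, a y' with hA
  -- a.e. nonnegativity
  have hpnn' : 0 ≤ᵐ[μ] p := hmemae.mono fun x hx => hpnn x hx
  have hann' : 0 ≤ᵐ[μ] a := hmemae.mono fun y hy => hann y hy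
  -- if f is a.e. nonzero on a set of positive restricted measure, its set of
  -- positivity has nonzero measure
  have posmeas : ∀ f : ℝ → ℝ, (∀ x ∈ Icc (0:ℝ) 1, 0 ≤ f x) →
      ¬ (∀ᵐ x ∂μ, f x = 0) → μ {x | 0 < f x} ≠ 0 := by
    intro f hf hcon hzero
    apply hcon
    have : ∀ᵐ x ∂μ, x ∉ {x | 0 < f x} := by
      rw [ae_iff]
      simpa using hzero
    filter_upwards [this, hmemae] with x hx hxm
    simp only [mem_setOf_eq, not_lt] at hx
    exact le_antisymm hx (hf x hxm)
  -- integrability of ψ-weighted densities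
  obtain ⟨C, hC⟩ := (isCompact_Icc.prod isCompact_Icc).exists_bound_of_continuousOn hψc
  have hψmeas : ∀ y ∈ Icc (0:ℝ) 1, AEStronglyMeasurable (fun x => ψ x y) μ := by
    intro y hy
    have : ContinuousOn (fun x => ψ x y) (Icc (0:ℝ) 1) := by
      have hc : Continuous fun x : ℝ => (x, y) := continuous_id.prodMk continuous_const
      exact hψc.comp hc.continuousOn fun x hx => ⟨hx, hy⟩
    exact this.aestronglyMeasurable measurableSet_Icc
  have hintψp : ∀ y ∈ Icc (0:ℝ) 1, Integrable (fun x => ψ x y * p x) μ := by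
    intro y hy
    refine hpint.bdd_mul (c := C) (hψmeas y hy) ?_
    filter_upwards [hmemae] with x hx
    exact hC (x, y) ⟨hx, hy⟩
  -- Step 1: a = 0 a.e.
  have ha0 : ∀ᵐ y ∂μ, a y = 0 := by
    by_contra hcon
    have hSa : μ {y | 0 < a y} ≠ 0 := posmeas a hann hcon
    have hApos : 0 < A := by
      rw [hA, setIntegral_pos_iff_support_of_nonneg_ae hann' haint]
      rw [Measure.restrict_apply' measurableSet_Icc] at hSa
      refine lt_of_le_of_ne zero_le (Ne.symm ?_)
      intro hz
      apply hSa
      refine measure_mono_null (fun y hy => ?_) hz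
      exact ⟨hy.1.ne', hy.2⟩
    by_cases hp0 : ∀ᵐ x ∂μ, p x = 0
    · -- then the inner integral vanishes, contradiction with gA 0 < 0
      have hF0 : ∀ y, (∫ x in Icc (0:ℝ) 1, ψ x y * p x) = 0 := by
        intro y
        apply integral_eq_zero_of_ae
        filter_upwards [hp0] with x hx
        simp [hx]
      obtain ⟨y, hy, hQ⟩ := exists_mem_of_ae hSa hstatA
      have := hQ hy
      rw [hF0 y] at this
      nlinarith
    · -- p has positive mass: strict monotonicity of F gives a contradiction
      have hSp : μ {x | 0 < p x} ≠ 0 := posmeas p hpnn hp0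
      have hPpos : 0 < P := by
        rw [hP, setIntegral_pos_iff_support_of_nonneg_ae hpnn' hpint]
        refine lt_of_le_of_ne zero_le (Ne.symm ?_)
        rw [Measure.restrict_apply' measurableSet_Icc] at hSp
        intro hz
        apply hSp
        refine measure_mono_null (fun x hx => ?_) hz
        exact ⟨hx.1.ne', hx.2⟩
      set F : ℝ → ℝ := fun y => ∫ x in Icc (0:ℝ) 1, ψ x y * p x with hF
      have hFmono : StrictMonoOn F (Icc (0:ℝ) 1) := by
        intro y1 hy1 y2 hy2 hlt
        -- minimum of the difference over the compact interval
        have hgc : ContinuousOn (fun x => ψ x y2 - ψ x y1) (Icc (0:ℝ) 1) := by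
          have h1 : Continuous fun x : ℝ => (x, y1) := continuous_id.prodMk continuous_const
          have h2 : Continuous fun x : ℝ => (x, y2) := continuous_id.prodMk continuous_const
          exact (hψc.comp h2.continuousOn fun x hx => ⟨hx, hy2⟩).sub
            (hψc.comp h1.continuousOn fun x hx => ⟨hx, hy1⟩)
        obtain ⟨x0, hx0, hx0min⟩ := isCompact_Icc.exists_isMinOn
          (nonempty_Icc.mpr zero_le_one) hgc
        set δ := ψ x0 y2 - ψ x0 y1 with hδ
        have hδpos : 0 < δ := sub_pos.mpr (hψy x0 hx0 hy1 hy2 hlt)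
        have hkey : δ * P ≤ F y2 - F y1 := by
          have hsub : F y2 - F y1 = ∫ x in Icc (0:ℝ) 1,
              (ψ x y2 - ψ x y1) * p x := by
            rw [hF]
            rw [← integral_sub (hintψp y2 hy2) (hintψp y1 hy1)]
            congr 1
            ext x
            ring
          rw [hsub, hP, ← integral_const_mul]
          apply setIntegral_mono_on (hpint.const_mul δ)
            (((hintψp y2 hy2).sub (hintψp y1 hy1)).congr ?_) measurableSet_Icc ?_
          · filter_upwards with x
            simp only [Pi.sub_apply]
            ring
          · intro x hx
            exact mul_le_mul_of_nonneg_right (hx0min hx) (hpnn x hx)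
        linarith [mul_pos hδpos hPpos]
      -- a.e. points of positivity of a satisfy the stationarity equation
      have hTpos : μ {y | 0 < a y ∧ y ∈ Icc (0:ℝ) 1 ∧ gA (F y) = h * A} ≠ 0 := by
        intro hz
        apply hSa
        have hbad : μ {y | ¬ (y ∈ Icc (0:ℝ) 1 ∧ (0 < a y → gA (F y) = h * A))} = 0 := by
          rw [← ae_iff]
          filter_upwards [hmemae, hstatA] with y h1 h2
          exact ⟨h1, h2⟩
        have hsub : {y | 0 < a y} ⊆
            {y | 0 < a y ∧ y ∈ Icc (0:ℝ) 1 ∧ gA (F y) = h * A} ∪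
            {y | ¬ (y ∈ Icc (0:ℝ) 1 ∧ (0 < a y → gA (F y) = h * A))} := by
          intro y hy
          by_cases hgood : y ∈ Icc (0:ℝ) 1 ∧ (0 < a y → gA (F y) = h * A)
          · exact Or.inl ⟨hy, hgood.1, hgood.2 hy⟩
          · exact Or.inr hgood
        have := (measure_mono (μ := μ) hsub).trans (measure_union_le _ _)
        rw [hz, hbad, add_zero] at this
        exact le_antisymm this zero_le
      -- such a set cannot be a subsingleton
      have hnt : ({y | 0 < a y ∧ y ∈ Icc (0:ℝ) 1 ∧ gA (F y) = h * A}).Nontrivial := by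
        rw [← Set.not_subsingleton_iff]
        intro hss
        apply hTpos
        have h1 : μ _ ≤ volume {y | 0 < a y ∧ y ∈ Icc (0:ℝ) 1 ∧ gA (F y) = h * A} :=
          Measure.restrict_le_self _
        rw [hss.measure_zero volume] at h1
        exact le_antisymm h1 zero_le
      obtain ⟨y1, hy1, y2, hy2, hne⟩ := hnt
      apply hne
      apply hFmono.injOn hy1.2.1 hy2.2.1
      exact hgAmono.injective (hy1.2.2.trans hy2.2.2.symm)
  -- Step 2: p = 0 a.e., using a = 0 a.e.
  have hp0 : ∀ᵐ x ∂μ, p x = 0 := by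
    by_contra hcon
    have hSp : μ {x | 0 < p x} ≠ 0 := posmeas p hpnn hcon
    have hPpos : 0 < P := by
      rw [hP, setIntegral_pos_iff_support_of_nonneg_ae hpnn' hpint]
      refine lt_of_le_of_ne zero_le (Ne.symm ?_)
      rw [Measure.restrict_apply' measurableSet_Icc] at hSp
      intro hz
      apply hSp
      refine measure_mono_null (fun x hx => ?_) hz
      exact ⟨hx.1.ne', hx.2⟩
    have hG0 : ∀ x, (∫ y in Icc (0:ℝ) 1, ψ x y * a y) = 0 := by
      intro x
      apply integral_eq_zero_of_ae
      filter_upwards [ha0] with y hy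
      simp [hy]
    obtain ⟨x, hx, hQ⟩ := exists_mem_of_ae hSp hstatP
    have := hQ hx
    rw [hG0 x] at this
    nlinarith
  exact ⟨hp0, ha0⟩
end

section
/- Let ψ : [0,1]² → ℝ be continuous and strictly increasing in each variable, let g^A : ℝ → ℝ be strictly increasing, let g^P : ℝ → ℝ be continuous and strictly concave, and let k, h > 0. Suppose P and A are nonzero finite Borel measures on [0,1] such that for every x in the support of P, g^P(∫₀¹ ψ(x,y) dA(y)) = k·P([0,1]), and for every y in the support of A, g^A(∫₀¹ ψ(x,y) dP(x)) = h·A([0,1]). Then the support of A is a singleton {y₀} for some y₀ ∈ [0,1], and the support of P contains at most two points; in particular A = a₀·δ_{y₀} for some a₀ > 0 and P = p₁·δ_{x₁} + p₂·δ_{x₂} for some x₁, x₂ ∈ [0,1] and p₁ > 0, p₂ ≥ 0. -/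
open Set MeasureTheory

/-- The topological support of a Borel measure on `ℝ`: the set of points all of
whose open neighbourhoods have positive measure. -/
def msupport (μ : MeasureTheory.Measure ℝ) : Set ℝ :=
  {x | ∀ U : Set ℝ, IsOpen U → x ∈ U → 0 < μ U}

lemma msupport_compl_null (μ : Measure ℝ) : μ (msupport μ)ᶜ = 0 := by
  have h : (msupport μ)ᶜ = ⋃₀ {U : Set ℝ | IsOpen U ∧ μ U = 0} := by
    ext x
    simp only [mem_compl_iff, msupport, mem_setOf_eq, mem_sUnion]
    push_neg
    constructor
    · rintro ⟨U, hU, hxU, hμ⟩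
      exact ⟨U, ⟨hU, le_antisymm hμ zero_le⟩, hxU⟩
    · rintro ⟨U, ⟨hU, hμU⟩, hxU⟩
      exact ⟨U, hU, hxU, by simp [hμU]⟩
  obtain ⟨T, hTc, hTsub, hT⟩ :=
    TopologicalSpace.isOpen_sUnion_countable {U : Set ℝ | IsOpen U ∧ μ U = 0}
      (fun s hs => hs.1)
  rw [h, ← hT]
  exact (measure_sUnion_null_iff hTc).2 fun U hU => (hTsub hU).2

lemma msupport_subset (μ : Measure ℝ) (hμ : μ (Icc 0 1)ᶜ = 0) :
    msupport μ ⊆ Icc 0 1 := by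
  intro x hx
  by_contra hxI
  have := hx (Icc 0 1)ᶜ isClosed_Icc.isOpen_compl hxI
  simp [hμ] at this

lemma msupport_nonempty (μ : Measure ℝ) (hμ : μ ≠ 0) : (msupport μ).Nonempty := by
  by_contra hne
  rw [not_nonempty_iff_eq_empty] at hne
  have h := msupport_compl_null μ
  rw [hne, compl_empty] at h
  exact hμ (Measure.measure_univ_eq_zero.1 h)

lemma measure_inter_of_compl_null {μ : Measure ℝ} {t : Set ℝ} (ht : μ tᶜ = 0) (s : Set ℝ) :
    μ s = μ (s ∩ t) := by
  refine le_antisymm ?_ (measure_mono inter_subset_left)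
  calc μ s = μ ((s ∩ t) ∪ (s ∩ tᶜ)) := by rw [inter_union_compl]
    _ ≤ μ (s ∩ t) + μ (s ∩ tᶜ) := measure_union_le _ _
    _ ≤ μ (s ∩ t) + μ tᶜ := add_le_add le_rfl (measure_mono inter_subset_right)
    _ = μ (s ∩ t) := by rw [ht, add_zero]

lemma eq_dirac_of_null_compl (μ : Measure ℝ) (y : ℝ) (hμ : μ {y}ᶜ = 0) :
    μ = μ {y} • Measure.dirac y := by
  ext s hs
  rw [Measure.smul_apply, Measure.dirac_apply' y hs, smul_eq_mul,
      measure_inter_of_compl_null hμ s]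
  by_cases hy : y ∈ s
  · rw [inter_eq_right.2 (singleton_subset_iff.2 hy), indicator_of_mem hy, Pi.one_apply, mul_one]
  · rw [Set.inter_singleton_eq_empty.2 hy, measure_empty, indicator_of_notMem hy, mul_zero]

lemma eq_two_dirac (μ : Measure ℝ) {x1 x2 : ℝ} (h12 : x1 ≠ x2)
    (hμ : μ ({x1, x2} : Set ℝ)ᶜ = 0) :
    μ = μ {x1} • Measure.dirac x1 + μ {x2} • Measure.dirac x2 := by
  ext s hs
  rw [Measure.add_apply, Measure.smul_apply, Measure.smul_apply,
      Measure.dirac_apply' _ hs, Measure.dirac_apply' _ hs, smul_eq_mul, smul_eq_mul,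
      measure_inter_of_compl_null hμ s]
  have hsplit : s ∩ {x1, x2} = (s ∩ {x1}) ∪ (s ∩ {x2}) := by
    rw [← inter_union_distrib_left]
    rfl
  have hdisj : Disjoint (s ∩ {x1}) (s ∩ {x2}) := by
    refine Disjoint.inter_left' _ (Disjoint.inter_right' _ ?_)
    simpa [disjoint_singleton] using h12
  rw [hsplit, measure_union hdisj (hs.inter (measurableSet_singleton x2))]
  congr 1
  · by_cases h1 : x1 ∈ s
    · rw [inter_eq_right.2 (singleton_subset_iff.2 h1), indicator_of_mem h1, Pi.one_apply, mul_one]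
    · rw [Set.inter_singleton_eq_empty.2 h1, measure_empty, indicator_of_notMem h1, mul_zero]
  · by_cases h2 : x2 ∈ s
    · rw [inter_eq_right.2 (singleton_subset_iff.2 h2), indicator_of_mem h2, Pi.one_apply, mul_one]
    · rw [Set.inter_singleton_eq_empty.2 h2, measure_empty, indicator_of_notMem h2, mul_zero]

lemma concave_ordered (f : ℝ → ℝ) (hf : StrictConcaveOn ℝ univ f) {v a b c : ℝ}
    (hab : a < b) (hbc : b < c) (ha : f a = v) (hb : f b = v) (hc : f c = v) : False := by
  have hac : a < c := hab.trans hbc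
  set θ : ℝ := (c - b)/(c - a) with hθ
  have hca : (0:ℝ) < c - a := by linarith
  have h1 : 0 < θ := div_pos (by linarith) hca
  have h2 : 0 < 1 - θ := by
    have : θ < 1 := (div_lt_one hca).2 (by linarith)
    linarith
  have key := hf.2 (mem_univ a) (mem_univ c) (ne_of_lt hac) h1 h2 (by ring)
  have hco : θ • a + (1 - θ) • c = b := by
    simp only [smul_eq_mul, hθ]
    field_simp
    ring
  rw [hco, hb, ha, hc] at key
  simp only [smul_eq_mul] at key
  nlinarith [key]

lemma concave_three (f : ℝ → ℝ) (hf : StrictConcaveOn ℝ univ f) {v t1 t2 t3 : ℝ}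
    (h12 : t1 ≠ t2) (h13 : t1 ≠ t3) (h23 : t2 ≠ t3)
    (e1 : f t1 = v) (e2 : f t2 = v) (e3 : f t3 = v) : False := by
  rcases h12.lt_or_gt with h|h <;> rcases h13.lt_or_gt with h'|h' <;>
    rcases h23.lt_or_gt with h''|h''
  · exact concave_ordered f hf h h'' e1 e2 e3
  · exact concave_ordered f hf h' h'' e1 e3 e2
  · linarith
  · exact concave_ordered f hf h' h e3 e1 e2
  · exact concave_ordered f hf h h' e2 e1 e3
  · linarith
  · exact concave_ordered f hf h'' h' e2 e3 e1
  · exact concave_ordered f hf h'' h e3 e2 e1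

lemma key_mono (ψ : ℝ → ℝ → ℝ)
    (hψc : ContinuousOn (fun q : ℝ × ℝ => ψ q.1 q.2) (Icc 0 1 ×ˢ Icc 0 1))
    (hψy : ∀ x ∈ Icc (0:ℝ) 1, StrictMonoOn (fun y => ψ x y) (Icc (0:ℝ) 1))
    (μ : Measure ℝ) [IsFiniteMeasure μ] (hμ : μ ≠ 0) (hμc : μ (Icc 0 1)ᶜ = 0) :
    StrictMonoOn (fun y => ∫ x, ψ x y ∂μ) (Icc 0 1) := by
  obtain ⟨C, hC⟩ := (isCompact_Icc.prod isCompact_Icc).exists_bound_of_continuousOn hψc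
  set proj : ℝ → ℝ := fun x => min (max x 0) 1 with hproj
  have hprojc : Continuous proj := (continuous_id.max continuous_const).min continuous_const
  have hprojmem : ∀ x, proj x ∈ Icc (0:ℝ) 1 :=
    fun x => ⟨le_min (le_max_right x 0) zero_le_one, min_le_right _ _⟩
  have hg : ∀ y ∈ Icc (0:ℝ) 1, Continuous (fun x => ψ (proj x) y) := by
    intro y hy
    exact hψc.comp_continuous (hprojc.prodMk continuous_const) (fun x => ⟨hprojmem x, hy⟩)
  have hint : ∀ y ∈ Icc (0:ℝ) 1, Integrable (fun x => ψ (proj x) y) μ := by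
    intro y hy
    exact (integrable_const C).mono' (hg y hy).aestronglyMeasurable
      (ae_of_all _ fun x => hC (proj x, y) ⟨hprojmem x, hy⟩)
  have hae : ∀ᵐ x ∂μ, x ∈ Icc (0:ℝ) 1 := by
    rw [ae_iff]
    exact hμc
  have heq : ∀ y ∈ Icc (0:ℝ) 1, ∫ x, ψ x y ∂μ = ∫ x, ψ (proj x) y ∂μ := by
    intro y hy
    refine integral_congr_ae (hae.mono fun x hx => ?_)
    have : proj x = x := by
      simp only [hproj]
      rw [max_eq_left hx.1, min_eq_left hx.2]
    show ψ x y = ψ (proj x) y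
    rw [this]
  intro y1 hy1 y2 hy2 h12
  simp only
  rw [heq y1 hy1, heq y2 hy2]
  have hd : ∀ x, ψ (proj x) y1 < ψ (proj x) y2 :=
    fun x => hψy (proj x) (hprojmem x) hy1 hy2 h12
  have hpos : 0 < ∫ x, (ψ (proj x) y2 - ψ (proj x) y1) ∂μ := by
    rw [integral_pos_iff_support_of_nonneg (fun x => sub_nonneg.2 (hd x).le)
      ((hint y2 hy2).sub (hint y1 hy1))]
    have hsupp : Function.support (fun x => ψ (proj x) y2 - ψ (proj x) y1) = univ :=
      eq_univ_of_forall fun x => sub_ne_zero.2 (hd x).ne'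
    rw [hsupp]
    exact Measure.measure_univ_pos.2 hμ
  rw [integral_sub (hint y2 hy2) (hint y1 hy1)] at hpos
  linarith

/-- Any non-null stationary state of the kinetic plant–pollinator system with
constant competition kernels is a sum of at most two Dirac masses for the
plants and a single Dirac mass for the pollinators. -/
theorem stmt_11 (ψ : ℝ → ℝ → ℝ)
    (hψc : ContinuousOn (fun q : ℝ × ℝ => ψ q.1 q.2) (Icc 0 1 ×ˢ Icc 0 1))
    (hψx : ∀ y ∈ Icc (0:ℝ) 1, StrictMonoOn (fun x => ψ x y) (Icc (0:ℝ) 1))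
    (hψy : ∀ x ∈ Icc (0:ℝ) 1, StrictMonoOn (fun y => ψ x y) (Icc (0:ℝ) 1))
    (gP gA : ℝ → ℝ) (hgAmono : StrictMono gA)
    (hgPc : Continuous gP) (hgPconc : StrictConcaveOn ℝ univ gP)
    (k h : ℝ) (hk : 0 < k) (hh : 0 < h)
    (P A : Measure ℝ) [IsFiniteMeasure P] [IsFiniteMeasure A]
    (hPne : P ≠ 0) (hAne : A ≠ 0)
    (hPsupp : P (Icc 0 1)ᶜ = 0) (hAsupp : A (Icc 0 1)ᶜ = 0)
    (hstatP : ∀ x ∈ msupport P, gP (∫ y, ψ x y ∂A) = k * (P (Icc 0 1)).toReal)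
    (hstatA : ∀ y ∈ msupport A, gA (∫ x, ψ x y ∂P) = h * (A (Icc 0 1)).toReal) :
    (∃ y₀ ∈ Icc (0:ℝ) 1, msupport A = {y₀} ∧
      ∃ a₀ > (0:ℝ), A = ENNReal.ofReal a₀ • Measure.dirac y₀) ∧
    (msupport P).encard ≤ 2 ∧
    (∃ x₁ ∈ Icc (0:ℝ) 1, ∃ x₂ ∈ Icc (0:ℝ) 1, ∃ p₁ > (0:ℝ), ∃ p₂ ≥ (0:ℝ),
      P = ENNReal.ofReal p₁ • Measure.dirac x₁ + ENNReal.ofReal p₂ • Measure.dirac x₂) := by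
  -- Support of A is a singleton
  obtain ⟨y₀, hy₀⟩ := msupport_nonempty A hAne
  have hy₀I : y₀ ∈ Icc (0:ℝ) 1 := msupport_subset A hAsupp hy₀
  have hFmono := key_mono ψ hψc hψy P hPne hPsupp
  have hsuppA : msupport A = {y₀} := by
    ext y
    constructor
    · intro hy
      have hyI : y ∈ Icc (0:ℝ) 1 := msupport_subset A hAsupp hy
      have hFy : gA (∫ x, ψ x y ∂P) = gA (∫ x, ψ x y₀ ∂P) := by
        rw [hstatA y hy, hstatA y₀ hy₀]
      exact hFmono.injOn hyI hy₀I (hgAmono.injective hFy)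
    · rintro rfl
      exact hy₀
  have hA0 : A ({y₀} : Set ℝ)ᶜ = 0 := by
    have := msupport_compl_null A
    rwa [hsuppA] at this
  have hAeq : A = A {y₀} • Measure.dirac y₀ := eq_dirac_of_null_compl A y₀ hA0
  have hAy₀pos : 0 < A {y₀} := by
    have h1 : 0 < A univ := Measure.measure_univ_pos.2 hAne
    have h2 : A univ ≤ A {y₀} + A ({y₀} : Set ℝ)ᶜ := by
      calc A univ = A ({y₀} ∪ ({y₀} : Set ℝ)ᶜ) := by rw [union_compl_self]
        _ ≤ A {y₀} + A ({y₀} : Set ℝ)ᶜ := measure_union_le _ _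
    rw [hA0, add_zero] at h2
    exact lt_of_lt_of_le h1 h2
  set a₀ : ℝ := (A {y₀}).toReal with ha₀
  have ha₀pos : 0 < a₀ := ENNReal.toReal_pos hAy₀pos.ne' (measure_ne_top A _)
  have hofReal : ENNReal.ofReal a₀ = A {y₀} := ENNReal.ofReal_toReal (measure_ne_top A _)
  refine ⟨⟨y₀, hy₀I, hsuppA, a₀, ha₀pos, by rw [hofReal]; exact hAeq⟩, ?_⟩
  -- P side
  have hGint : ∀ x, (∫ y, ψ x y ∂A) = a₀ * ψ x y₀ := by
    intro x
    rw [hAeq, integral_smul_measure, integral_dirac, smul_eq_mul]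
  have hGmono : StrictMonoOn (fun x => a₀ * ψ x y₀) (Icc (0:ℝ) 1) := by
    intro x1 hx1 x2 hx2 hlt
    exact mul_lt_mul_of_pos_left (hψx y₀ hy₀I hx1 hx2 hlt) ha₀pos
  have hstatP' : ∀ x ∈ msupport P, gP (a₀ * ψ x y₀) = k * (P (Icc 0 1)).toReal := by
    intro x hx
    rw [← hGint x]
    exact hstatP x hx
  obtain ⟨x₁, hx₁⟩ := msupport_nonempty P hPne
  have hx₁I : x₁ ∈ Icc (0:ℝ) 1 := msupport_subset P hPsupp hx₁
  by_cases hsub : msupport P ⊆ {x₁}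
  · -- singleton case
    have hsuppP : msupport P = {x₁} := le_antisymm hsub (singleton_subset_iff.2 hx₁)
    have hP0 : P ({x₁} : Set ℝ)ᶜ = 0 := by
      have := msupport_compl_null P
      rwa [hsuppP] at this
    have hPeq : P = P {x₁} • Measure.dirac x₁ := eq_dirac_of_null_compl P x₁ hP0
    have hPx₁pos : 0 < P {x₁} := by
      have h1 : 0 < P univ := Measure.measure_univ_pos.2 hPne
      have h2 : P univ ≤ P {x₁} + P ({x₁} : Set ℝ)ᶜ := by
        calc P univ = P ({x₁} ∪ ({x₁} : Set ℝ)ᶜ) := by rw [union_compl_self]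
          _ ≤ P {x₁} + P ({x₁} : Set ℝ)ᶜ := measure_union_le _ _
      rw [hP0, add_zero] at h2
      exact lt_of_lt_of_le h1 h2
    refine ⟨by rw [hsuppP, Set.encard_singleton]; norm_num, x₁, hx₁I, x₁, hx₁I,
      (P {x₁}).toReal, ENNReal.toReal_pos hPx₁pos.ne' (measure_ne_top P _), 0, le_refl 0, ?_⟩
    rw [ENNReal.ofReal_toReal (measure_ne_top P _), ENNReal.ofReal_zero, zero_smul, add_zero]
    exact hPeq
  · -- two-point case
    obtain ⟨x₂, hx₂, hx₂ne⟩ : ∃ x₂ ∈ msupport P, x₂ ≠ x₁ := by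
      rw [not_subset] at hsub
      obtain ⟨x₂, hx₂, hne⟩ := hsub
      exact ⟨x₂, hx₂, hne⟩
    have hx₂I : x₂ ∈ Icc (0:ℝ) 1 := msupport_subset P hPsupp hx₂
    have hsub2 : msupport P ⊆ {x₁, x₂} := by
      intro x hx
      by_contra hxmem
      simp only [mem_insert_iff, mem_singleton_iff, not_or] at hxmem
      obtain ⟨hne1, hne2⟩ := hxmem
      have hxI : x ∈ Icc (0:ℝ) 1 := msupport_subset P hPsupp hx
      have hG1 : (fun x => a₀ * ψ x y₀) x ≠ (fun x => a₀ * ψ x y₀) x₁ :=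
        fun hEq => hne1 (hGmono.injOn hxI hx₁I hEq)
      have hG2 : (fun x => a₀ * ψ x y₀) x ≠ (fun x => a₀ * ψ x y₀) x₂ :=
        fun hEq => hne2 (hGmono.injOn hxI hx₂I hEq)
      have hG3 : (fun x => a₀ * ψ x y₀) x₁ ≠ (fun x => a₀ * ψ x y₀) x₂ :=
        fun hEq => hx₂ne.symm (hGmono.injOn hx₁I hx₂I hEq)
      exact concave_three gP hgPconc hG1 hG2 hG3
        (hstatP' x hx) (hstatP' x₁ hx₁) (hstatP' x₂ hx₂)
    have hP0 : P ({x₁, x₂} : Set ℝ)ᶜ = 0 := by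
      have h1 := msupport_compl_null P
      exact measure_mono_null (compl_subset_compl.2 hsub2) h1
    have hPeq : P = P {x₁} • Measure.dirac x₁ + P {x₂} • Measure.dirac x₂ :=
      eq_two_dirac P hx₂ne.symm hP0
    have hPx₁pos : 0 < P {x₁} := by
      have h1 : 0 < P ({x₂} : Set ℝ)ᶜ :=
        hx₁ _ isClosed_singleton.isOpen_compl (by simpa using hx₂ne.symm)
      have h2 : P ({x₂} : Set ℝ)ᶜ ≤ P {x₁} + P ({x₁, x₂} : Set ℝ)ᶜ := by
        refine le_trans (measure_mono ?_) (measure_union_le _ _)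
        intro z hz
        by_cases hz1 : z = x₁
        · left; exact hz1 ▸ rfl
        · right
          simp only [mem_compl_iff, mem_insert_iff, mem_singleton_iff, not_or]
          exact ⟨hz1, hz⟩
      rw [hP0, add_zero] at h2
      exact lt_of_lt_of_le h1 h2
    refine ⟨le_trans (Set.encard_mono hsub2) (le_of_eq (Set.encard_pair hx₂ne.symm)),
      x₁, hx₁I, x₂, hx₂I,
      (P {x₁}).toReal, ENNReal.toReal_pos hPx₁pos.ne' (measure_ne_top P _),
      (P {x₂}).toReal, ENNReal.toReal_nonneg, ?_⟩
    rw [ENNReal.ofReal_toReal (measure_ne_top P _), ENNReal.ofReal_toReal (measure_ne_top P _)]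
    exact hPeq
end

section
/- Let ψ : [0,1]² → ℝ be continuous with ψ(x₀,1) > 0 for a given x₀ ∈ [0,1], let k, h > 0, let g^P : [0,∞) → ℝ attain its maximum M* > 0 at a point r* > 0 (i.e. g^P(r*) = M* and g^P(R) ≤ M* for all R ≥ 0), and let g^A : ℝ → ℝ. Assume x₀ satisfies g^A((M*/k)·ψ(x₀,1))·ψ(x₀,1) = h·r*. Then the measures P = (M*/k)·δ_{x₀} and A = (r*/ψ(x₀,1))·δ_1 form a stationary state: for every x in the support of P, g^P(∫₀¹ ψ(x,y) dA(y)) = k·P([0,1]), and for every y in the support of A, g^A(∫₀¹ ψ(x,y) dP(x)) = h·A([0,1]). -/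
open Set MeasureTheory

lemma msupport_smul_dirac (c : ENNReal) (a : ℝ) :
    msupport (c • Measure.dirac a) ⊆ {a} := by
  intro x hx
  by_contra hxa
  have hU : IsOpen ({a}ᶜ : Set ℝ) := isOpen_compl_singleton
  have := hx _ hU (by simpa using hxa)
  simp [Measure.dirac_apply' _ hU.measurableSet, Set.indicator_apply] at this

/-- The pair `P = (M*/k)·δ_{x₀}`, `A = (r*/ψ(x₀,1))·δ_1` is a stationary state
of the kinetic plant–pollinator system with constant competition kernels. -/
theorem stmt_13 (ψ : ℝ → ℝ → ℝ)
    (hψc : ContinuousOn (fun q : ℝ × ℝ => ψ q.1 q.2) (Icc 0 1 ×ˢ Icc 0 1))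
    (x₀ : ℝ) (hx₀ : x₀ ∈ Icc (0:ℝ) 1) (hψpos : 0 < ψ x₀ 1)
    (k h : ℝ) (hk : 0 < k) (hh : 0 < h)
    (gP gA : ℝ → ℝ) (Mstar rstar : ℝ) (hMstar : 0 < Mstar) (hrstar : 0 < rstar)
    (hmax : gP rstar = Mstar) (hub : ∀ R : ℝ, 0 ≤ R → gP R ≤ Mstar)
    (hx₀eq : gA ((Mstar / k) * ψ x₀ 1) * ψ x₀ 1 = h * rstar) :
    let P : Measure ℝ := ENNReal.ofReal (Mstar / k) • Measure.dirac x₀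
    let A : Measure ℝ := ENNReal.ofReal (rstar / ψ x₀ 1) • Measure.dirac 1
    (∀ x ∈ msupport P, gP (∫ y, ψ x y ∂A) = k * (P (Icc 0 1)).toReal) ∧
    (∀ y ∈ msupport A, gA (∫ x, ψ x y ∂P) = h * (A (Icc 0 1)).toReal) := by
  intro P A
  have hMk : 0 < Mstar / k := div_pos hMstar hk
  have hrψ : 0 < rstar / ψ x₀ 1 := div_pos hrstar hψpos
  have hPIcc : (P (Icc 0 1)).toReal = Mstar / k := by
    simp [P, Measure.dirac_apply' _ measurableSet_Icc, Set.indicator_of_mem hx₀,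
      ENNReal.toReal_ofReal hMk.le]
  have hAIcc : (A (Icc 0 1)).toReal = rstar / ψ x₀ 1 := by
    have h1 : (1:ℝ) ∈ Icc (0:ℝ) 1 := by norm_num
    simp [A, Measure.dirac_apply' _ measurableSet_Icc, Set.indicator_of_mem h1,
      ENNReal.toReal_ofReal hrψ.le]
  constructor
  · intro x hx
    have hx' : x = x₀ := msupport_smul_dirac _ _ hx
    rw [hx']
    have : (∫ y, ψ x₀ y ∂A) = rstar := by
      rw [show A = ENNReal.ofReal (rstar / ψ x₀ 1) • Measure.dirac 1 from rfl,
        integral_smul_measure, integral_dirac, ENNReal.toReal_ofReal hrψ.le,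
        smul_eq_mul]
      field_simp
    rw [this, hmax, hPIcc]
    field_simp
  · intro y hy
    have hy' : y = 1 := msupport_smul_dirac _ _ hy
    subst hy'
    have : (∫ x, ψ x 1 ∂P) = (Mstar / k) * ψ x₀ 1 := by
      rw [show P = ENNReal.ofReal (Mstar / k) • Measure.dirac x₀ from rfl,
        integral_smul_measure, integral_dirac, ENNReal.toReal_ofReal hMk.le,
        smul_eq_mul]
    rw [this, hAIcc, show h * (rstar / ψ x₀ 1) = (h * rstar) / ψ x₀ 1 by ring,
      ← hx₀eq, mul_div_assoc, div_self hψpos.ne', mul_one]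
end

section
/- Let T > 0, let ψ, k, h : [0,1]² → ℝ be continuous, and let g^P, g^A : ℝ → ℝ be Lipschitz. Suppose (p¹, a¹) and (p², a²) are pairs of continuous functions [0,T] × [0,1] → [0,∞) each satisfying, for all (t,x) ∈ [0,T] × [0,1], the integral equations p(t,x) = p(0,x) + ∫₀ᵗ [g^P(∫₀¹ ψ(x,y) a(s,y) dy) − ∫₀¹ k(x,x') p(s,x') dx'] p(s,x) ds and a(t,y) = a(0,y) + ∫₀ᵗ [g^A(∫₀¹ ψ(x,y) p(s,x) dx) − ∫₀¹ h(y,y') a(s,y') dy'] a(s,y) ds. If p¹(0,·) = p²(0,·) and a¹(0,·) = a²(0,·), then p¹ = p² and a¹ = a² on [0,T] × [0,1]. -/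
open Set MeasureTheory

lemma pp_cont_param (T : ℝ) (w : ℝ → ℝ) (hw : ContinuousOn w (Icc 0 1))
    (G : ℝ → ℝ → ℝ)
    (hG : ContinuousOn (fun q : ℝ × ℝ => G q.1 q.2) (Icc 0 T ×ˢ Icc 0 1)) :
    ContinuousOn (fun s => ∫ y in Icc (0:ℝ) 1, w y * G s y) (Icc 0 T) := by
  obtain ⟨Cw, hCw⟩ := isCompact_Icc.exists_bound_of_continuousOn hw
  obtain ⟨CG, hCG⟩ := (isCompact_Icc.prod isCompact_Icc).exists_bound_of_continuousOn hG
  apply MeasureTheory.continuousOn_of_dominated (bound := fun _ => |Cw| * |CG|)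
  · intro s hs
    apply ContinuousOn.aestronglyMeasurable _ measurableSet_Icc
    have : ContinuousOn (fun y => G s y) (Icc (0:ℝ) 1) :=
      hG.comp (f := fun y => (s, y)) (by fun_prop) (fun y hy => ⟨hs, hy⟩)
    exact hw.mul this
  · intro s hs
    refine (ae_restrict_iff' measurableSet_Icc).2 (Filter.Eventually.of_forall ?_)
    intro y hy
    have h1 : ‖w y‖ ≤ |Cw| := (hCw y hy).trans (le_abs_self _)
    have h2 : ‖G s y‖ ≤ |CG| := (hCG (s, y) ⟨hs, hy⟩).trans (le_abs_self _)
    calc ‖w y * G s y‖ = ‖w y‖ * ‖G s y‖ := norm_mul _ _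
      _ ≤ |Cw| * |CG| := mul_le_mul h1 h2 (norm_nonneg _) (abs_nonneg _)
  · exact integrableOn_const (by simp [Real.volume_Icc])
  · refine (ae_restrict_iff' measurableSet_Icc).2 (Filter.Eventually.of_forall ?_)
    intro y hy
    have : ContinuousOn (fun s => G s y) (Icc (0:ℝ) T) :=
      hG.comp (f := fun s => (s, y)) (by fun_prop) (fun s hs => ⟨hs, hy⟩)
    exact continuousOn_const.mul this

lemma pp_int01_bound (f : ℝ → ℝ) (C : ℝ) (hf : ContinuousOn f (Icc 0 1))
    (hC : ∀ x ∈ Icc (0:ℝ) 1, |f x| ≤ C) : |∫ x in Icc (0:ℝ) 1, f x| ≤ C := by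
  have := norm_setIntegral_le_of_norm_le_const (μ := volume) (s := Icc (0:ℝ) 1)
    (f := f) (C := C) (by simp [Real.volume_Icc]) hC
  simpa [Real.volume_real_Icc] using this

lemma pp_step (T : ℝ) (ψ κ : ℝ → ℝ → ℝ)
    (hψ : ContinuousOn (fun q : ℝ × ℝ => ψ q.1 q.2) (Icc 0 1 ×ˢ Icc 0 1))
    (hκ : ContinuousOn (fun q : ℝ × ℝ => κ q.1 q.2) (Icc 0 1 ×ˢ Icc 0 1))
    (g : ℝ → ℝ) (L : NNReal) (hg : LipschitzWith L g)
    (K M : ℝ)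
    (hKψ : ∀ x ∈ Icc (0:ℝ) 1, ∀ y ∈ Icc (0:ℝ) 1, |ψ x y| ≤ K)
    (hKκ : ∀ x ∈ Icc (0:ℝ) 1, ∀ y ∈ Icc (0:ℝ) 1, |κ x y| ≤ K)
    (F₁ G₁ F₂ G₂ : ℝ → ℝ → ℝ)
    (hF₁c : ContinuousOn (fun q : ℝ × ℝ => F₁ q.1 q.2) (Icc 0 T ×ˢ Icc 0 1))
    (hG₁c : ContinuousOn (fun q : ℝ × ℝ => G₁ q.1 q.2) (Icc 0 T ×ˢ Icc 0 1))
    (hF₂c : ContinuousOn (fun q : ℝ × ℝ => F₂ q.1 q.2) (Icc 0 T ×ˢ Icc 0 1))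
    (hG₂c : ContinuousOn (fun q : ℝ × ℝ => G₂ q.1 q.2) (Icc 0 T ×ˢ Icc 0 1))
    (hMF₁ : ∀ t ∈ Icc (0:ℝ) T, ∀ x ∈ Icc (0:ℝ) 1, |F₁ t x| ≤ M)
    (hMG₁ : ∀ t ∈ Icc (0:ℝ) T, ∀ x ∈ Icc (0:ℝ) 1, |G₁ t x| ≤ M)
    (hMF₂ : ∀ t ∈ Icc (0:ℝ) T, ∀ x ∈ Icc (0:ℝ) 1, |F₂ t x| ≤ M)
    (hMG₂ : ∀ t ∈ Icc (0:ℝ) T, ∀ x ∈ Icc (0:ℝ) 1, |G₂ t x| ≤ M)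
    (heq₁ : ∀ t ∈ Icc (0:ℝ) T, ∀ x ∈ Icc (0:ℝ) 1,
      F₁ t x = F₁ 0 x + ∫ s in (0:ℝ)..t,
        (g (∫ y in Icc (0:ℝ) 1, ψ x y * G₁ s y)
          - ∫ x' in Icc (0:ℝ) 1, κ x x' * F₁ s x') * F₁ s x)
    (heq₂ : ∀ t ∈ Icc (0:ℝ) T, ∀ x ∈ Icc (0:ℝ) 1,
      F₂ t x = F₂ 0 x + ∫ s in (0:ℝ)..t,
        (g (∫ y in Icc (0:ℝ) 1, ψ x y * G₂ s y)
          - ∫ x' in Icc (0:ℝ) 1, κ x x' * F₂ s x') * F₂ s x)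
    (C : ℝ) (hC : |g 0| + L * K * M + K * M + M * (L * K + K) ≤ C)
    (b : ℝ → ℝ) (hbc : Continuous b) (hb0 : ∀ s ∈ Icc (0:ℝ) T, 0 ≤ b s)
    (hb : ∀ s ∈ Icc (0:ℝ) T, ∀ z ∈ Icc (0:ℝ) 1,
      |F₁ s z - F₂ s z| ≤ b s ∧ |G₁ s z - G₂ s z| ≤ b s)
    (hinit : ∀ x ∈ Icc (0:ℝ) 1, F₁ 0 x = F₂ 0 x) :
    ∀ t ∈ Icc (0:ℝ) T, ∀ x ∈ Icc (0:ℝ) 1,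
      |F₁ t x - F₂ t x| ≤ ∫ s in (0:ℝ)..t, C * b s := by
  -- basic nonnegativity facts
  have hK0 : 0 ≤ K := le_trans (abs_nonneg _) (hKψ 0 (by norm_num) 0 (by norm_num))
  intro t ht x hx
  have hL0 : (0:ℝ) ≤ L := L.coe_nonneg
  have hM0 : 0 ≤ M := le_trans (abs_nonneg _)
    (hMF₁ 0 (by constructor <;> [rfl; exact ht.1.trans ht.2]) x hx)
  have hT0 : (0:ℝ) ≤ T := ht.1.trans ht.2
  -- the coefficient functions
  set A₁ : ℝ → ℝ := fun s => ∫ y in Icc (0:ℝ) 1, ψ x y * G₁ s y with hA₁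
  set A₂ : ℝ → ℝ := fun s => ∫ y in Icc (0:ℝ) 1, ψ x y * G₂ s y with hA₂
  set K₁ : ℝ → ℝ := fun s => ∫ x' in Icc (0:ℝ) 1, κ x x' * F₁ s x' with hK₁
  set K₂ : ℝ → ℝ := fun s => ∫ x' in Icc (0:ℝ) 1, κ x x' * F₂ s x' with hK₂
  set E₁ : ℝ → ℝ := fun s => (g (A₁ s) - K₁ s) * F₁ s x with hE₁
  set E₂ : ℝ → ℝ := fun s => (g (A₂ s) - K₂ s) * F₂ s x with hE₂
  -- continuity of ψ x ·, κ x ·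
  have hψx : ContinuousOn (fun y => ψ x y) (Icc 0 1) :=
    hψ.comp (f := fun y => (x, y)) (by fun_prop) (fun y hy => ⟨hx, hy⟩)
  have hκx : ContinuousOn (fun y => κ x y) (Icc 0 1) :=
    hκ.comp (f := fun y => (x, y)) (by fun_prop) (fun y hy => ⟨hx, hy⟩)
  -- continuity of E₁, E₂ on [0,T]
  have hcontF : ∀ (F : ℝ → ℝ → ℝ), ContinuousOn (fun q : ℝ × ℝ => F q.1 q.2)
      (Icc 0 T ×ˢ Icc 0 1) → ContinuousOn (fun s => F s x) (Icc 0 T) := fun F hF =>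
    hF.comp (f := fun s => (s, x)) (by fun_prop) (fun s hs => ⟨hs, hx⟩)
  have hE₁cont : ContinuousOn E₁ (Icc 0 T) := by
    apply ContinuousOn.mul _ (hcontF F₁ hF₁c)
    exact ((hg.continuous.comp_continuousOn (pp_cont_param T _ hψx G₁ hG₁c)).sub
      (pp_cont_param T _ hκx F₁ hF₁c))
  have hE₂cont : ContinuousOn E₂ (Icc 0 T) := by
    apply ContinuousOn.mul _ (hcontF F₂ hF₂c)
    exact ((hg.continuous.comp_continuousOn (pp_cont_param T _ hψx G₂ hG₂c)).sub
      (pp_cont_param T _ hκx F₂ hF₂c))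
  have hsub : Icc (0:ℝ) t ⊆ Icc 0 T := Icc_subset_Icc le_rfl ht.2
  have hE₁int : IntervalIntegrable E₁ volume 0 t :=
    (hE₁cont.mono (by rw [uIcc_of_le ht.1]; exact hsub)).intervalIntegrable
  have hE₂int : IntervalIntegrable E₂ volume 0 t :=
    (hE₂cont.mono (by rw [uIcc_of_le ht.1]; exact hsub)).intervalIntegrable
  -- express the difference as an integral
  have hdiff : F₁ t x - F₂ t x = ∫ s in (0:ℝ)..t, (E₁ s - E₂ s) := by
    rw [intervalIntegral.integral_sub hE₁int hE₂int]
    rw [heq₁ t ht x hx, heq₂ t ht x hx, hinit x hx]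
    ring
  -- pointwise bound on the integrand
  have hptwise : ∀ s ∈ Icc (0:ℝ) t, |E₁ s - E₂ s| ≤ C * b s := by
    intro s hs
    have hsT : s ∈ Icc (0:ℝ) T := hsub hs
    have hbs : 0 ≤ b s := hb0 s hsT
    -- integrand continuity for integrability
    have hG₁s : ContinuousOn (fun y => G₁ s y) (Icc (0:ℝ) 1) :=
      hG₁c.comp (f := fun y => (s, y)) (by fun_prop) (fun y hy => ⟨hsT, hy⟩)
    have hG₂s : ContinuousOn (fun y => G₂ s y) (Icc (0:ℝ) 1) :=
      hG₂c.comp (f := fun y => (s, y)) (by fun_prop) (fun y hy => ⟨hsT, hy⟩)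
    have hF₁s : ContinuousOn (fun y => F₁ s y) (Icc (0:ℝ) 1) :=
      hF₁c.comp (f := fun y => (s, y)) (by fun_prop) (fun y hy => ⟨hsT, hy⟩)
    have hF₂s : ContinuousOn (fun y => F₂ s y) (Icc (0:ℝ) 1) :=
      hF₂c.comp (f := fun y => (s, y)) (by fun_prop) (fun y hy => ⟨hsT, hy⟩)
    -- bounds on the integrals
    have hA₁b : |A₁ s| ≤ K * M := by
      apply pp_int01_bound _ _ (hψx.mul hG₁s)
      intro y hy
      calc |ψ x y * G₁ s y| = |ψ x y| * |G₁ s y| := abs_mul _ _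
        _ ≤ K * M := mul_le_mul (hKψ x hx y hy) (hMG₁ s hsT y hy) (abs_nonneg _) hK0
    have hK₁b : |K₁ s| ≤ K * M := by
      apply pp_int01_bound _ _ (hκx.mul hF₁s)
      intro y hy
      calc |κ x y * F₁ s y| = |κ x y| * |F₁ s y| := abs_mul _ _
        _ ≤ K * M := mul_le_mul (hKκ x hx y hy) (hMF₁ s hsT y hy) (abs_nonneg _) hK0
    have hAdiff : |A₁ s - A₂ s| ≤ K * b s := by
      have hint : A₁ s - A₂ s = ∫ y in Icc (0:ℝ) 1, (ψ x y * G₁ s y - ψ x y * G₂ s y) := by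
        exact (MeasureTheory.integral_sub ((hψx.mul hG₁s).integrableOn_compact isCompact_Icc)
          ((hψx.mul hG₂s).integrableOn_compact isCompact_Icc)).symm
      rw [hint]
      apply pp_int01_bound _ _ ((hψx.mul hG₁s).sub (hψx.mul hG₂s))
      intro y hy
      have : ψ x y * G₁ s y - ψ x y * G₂ s y = ψ x y * (G₁ s y - G₂ s y) := by ring
      show |ψ x y * G₁ s y - ψ x y * G₂ s y| ≤ K * b s
      rw [this, abs_mul]
      exact mul_le_mul (hKψ x hx y hy) (hb s hsT y hy).2 (abs_nonneg _) hK0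
    have hKdiff : |K₁ s - K₂ s| ≤ K * b s := by
      have hint : K₁ s - K₂ s = ∫ y in Icc (0:ℝ) 1, (κ x y * F₁ s y - κ x y * F₂ s y) := by
        exact (MeasureTheory.integral_sub ((hκx.mul hF₁s).integrableOn_compact isCompact_Icc)
          ((hκx.mul hF₂s).integrableOn_compact isCompact_Icc)).symm
      rw [hint]
      apply pp_int01_bound _ _ ((hκx.mul hF₁s).sub (hκx.mul hF₂s))
      intro y hy
      have : κ x y * F₁ s y - κ x y * F₂ s y = κ x y * (F₁ s y - F₂ s y) := by ring
      show |κ x y * F₁ s y - κ x y * F₂ s y| ≤ K * b s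
      rw [this, abs_mul]
      exact mul_le_mul (hKκ x hx y hy) (hb s hsT y hy).1 (abs_nonneg _) hK0
    have hgA₁ : |g (A₁ s)| ≤ |g 0| + L * (K * M) := by
      have h1 : |g (A₁ s) - g 0| ≤ L * |A₁ s| := by
        have := hg.dist_le_mul (A₁ s) 0
        simpa [Real.dist_eq] using this
      have h2 : L * |A₁ s| ≤ L * (K * M) := mul_le_mul_of_nonneg_left hA₁b hL0
      calc |g (A₁ s)| ≤ |g (A₁ s) - g 0| + |g 0| := by
            have := abs_sub_abs_le_abs_sub (g (A₁ s)) (g 0)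
            linarith [abs_sub_abs_le_abs_sub (g (A₁ s)) (g 0)]
        _ ≤ |g 0| + L * (K * M) := by linarith
    have hgdiff : |g (A₁ s) - g (A₂ s)| ≤ L * (K * b s) := by
      have h1 : |g (A₁ s) - g (A₂ s)| ≤ L * |A₁ s - A₂ s| := by
        have := hg.dist_le_mul (A₁ s) (A₂ s)
        simpa [Real.dist_eq] using this
      exact h1.trans (mul_le_mul_of_nonneg_left hAdiff hL0)
    have hFd : |F₁ s x - F₂ s x| ≤ b s := (hb s hsT x hx).1
    have hF₂b : |F₂ s x| ≤ M := hMF₂ s hsT x hx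
    -- decompose
    have hdec : E₁ s - E₂ s =
        (g (A₁ s) - K₁ s) * (F₁ s x - F₂ s x)
        + ((g (A₁ s) - g (A₂ s)) - (K₁ s - K₂ s)) * F₂ s x := by
      simp only [hE₁, hE₂]; ring
    rw [hdec]
    calc |(g (A₁ s) - K₁ s) * (F₁ s x - F₂ s x)
          + ((g (A₁ s) - g (A₂ s)) - (K₁ s - K₂ s)) * F₂ s x|
        ≤ |g (A₁ s) - K₁ s| * |F₁ s x - F₂ s x|
          + |(g (A₁ s) - g (A₂ s)) - (K₁ s - K₂ s)| * |F₂ s x| := by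
          refine (abs_add_le _ _).trans ?_
          rw [abs_mul, abs_mul]
      _ ≤ (|g 0| + L * (K * M) + K * M) * b s + (L * (K * b s) + K * b s) * M := by
          apply add_le_add
          · apply mul_le_mul _ hFd (abs_nonneg _) (by positivity)
            calc |g (A₁ s) - K₁ s| ≤ |g (A₁ s)| + |K₁ s| := abs_sub _ _
              _ ≤ |g 0| + L * (K * M) + K * M := by linarith
          · apply mul_le_mul _ hF₂b (abs_nonneg _) (by positivity)
            calc |(g (A₁ s) - g (A₂ s)) - (K₁ s - K₂ s)|
                ≤ |g (A₁ s) - g (A₂ s)| + |K₁ s - K₂ s| := abs_sub _ _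
              _ ≤ L * (K * b s) + K * b s := by linarith
      _ ≤ C * b s := by nlinarith [mul_le_mul_of_nonneg_right hC hbs]
  -- conclude
  have hCb_int : IntervalIntegrable (fun s => C * b s) volume 0 t :=
    (continuous_const.mul hbc).intervalIntegrable 0 t
  have hbound := intervalIntegral.norm_integral_le_abs_of_norm_le (μ := volume)
    (f := fun s => E₁ s - E₂ s) (g := fun s => C * b s) (a := 0) (b := t) ?_ hCb_int
  · have hnn : 0 ≤ ∫ s in (0:ℝ)..t, C * b s := by
      apply intervalIntegral.integral_nonneg ht.1
      intro s hs
      have hbs : 0 ≤ b s := hb0 s (hsub hs)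
      have hC0 : 0 ≤ C := le_trans (by positivity) hC
      positivity
    rw [hdiff]
    calc |∫ s in (0:ℝ)..t, (E₁ s - E₂ s)| ≤ |∫ s in (0:ℝ)..t, C * b s| := hbound
      _ = ∫ s in (0:ℝ)..t, C * b s := abs_of_nonneg hnn
  · rw [uIoc_of_le ht.1]
    refine (ae_restrict_iff' measurableSet_Ioc).2 (Filter.Eventually.of_forall ?_)
    intro s hs
    exact hptwise s ⟨le_of_lt hs.1, hs.2⟩

/-- Uniqueness of nonnegative continuous solutions of the kinetic
plant–pollinator integral equations with given initial data. -/
theorem stmt_14 (T : ℝ) (hT : 0 < T)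
    (ψ k h : ℝ → ℝ → ℝ)
    (hψc : ContinuousOn (fun q : ℝ × ℝ => ψ q.1 q.2) (Icc 0 1 ×ˢ Icc 0 1))
    (hkc : ContinuousOn (fun q : ℝ × ℝ => k q.1 q.2) (Icc 0 1 ×ˢ Icc 0 1))
    (hhc : ContinuousOn (fun q : ℝ × ℝ => h q.1 q.2) (Icc 0 1 ×ˢ Icc 0 1))
    (gP gA : ℝ → ℝ) (LP LA : NNReal)
    (hgP : LipschitzWith LP gP) (hgA : LipschitzWith LA gA)
    (p₁ a₁ p₂ a₂ : ℝ → ℝ → ℝ)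
    (hcont : ∀ F ∈ ({p₁, a₁, p₂, a₂} : Set (ℝ → ℝ → ℝ)),
      ContinuousOn (fun q : ℝ × ℝ => F q.1 q.2) (Icc 0 T ×ˢ Icc 0 1))
    (hnn : ∀ F ∈ ({p₁, a₁, p₂, a₂} : Set (ℝ → ℝ → ℝ)),
      ∀ t ∈ Icc (0:ℝ) T, ∀ x ∈ Icc (0:ℝ) 1, 0 ≤ F t x)
    (hsol : ∀ pa ∈ ({(p₁, a₁), (p₂, a₂)} : Set ((ℝ → ℝ → ℝ) × (ℝ → ℝ → ℝ))),
      ∀ t ∈ Icc (0:ℝ) T,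
        (∀ x ∈ Icc (0:ℝ) 1,
          pa.1 t x = pa.1 0 x + ∫ s in (0:ℝ)..t,
            (gP (∫ y in Icc (0:ℝ) 1, ψ x y * pa.2 s y)
              - ∫ x' in Icc (0:ℝ) 1, k x x' * pa.1 s x') * pa.1 s x) ∧
        (∀ y ∈ Icc (0:ℝ) 1,
          pa.2 t y = pa.2 0 y + ∫ s in (0:ℝ)..t,
            (gA (∫ x in Icc (0:ℝ) 1, ψ x y * pa.1 s x)
              - ∫ y' in Icc (0:ℝ) 1, h y y' * pa.2 s y') * pa.2 s y))
    (hinitp : ∀ x ∈ Icc (0:ℝ) 1, p₁ 0 x = p₂ 0 x)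
    (hinita : ∀ y ∈ Icc (0:ℝ) 1, a₁ 0 y = a₂ 0 y) :
    ∀ t ∈ Icc (0:ℝ) T,
      (∀ x ∈ Icc (0:ℝ) 1, p₁ t x = p₂ t x) ∧
      (∀ y ∈ Icc (0:ℝ) 1, a₁ t y = a₂ t y) := by
  -- extract continuity and equations
  have hp₁c := hcont p₁ (by simp)
  have ha₁c := hcont a₁ (by simp)
  have hp₂c := hcont p₂ (by simp)
  have ha₂c := hcont a₂ (by simp)
  have heqP₁ := fun t ht x hx => (hsol (p₁, a₁) (mem_insert _ _) t ht).1 x hx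
  have heqA₁ := fun t ht y hy => (hsol (p₁, a₁) (mem_insert _ _) t ht).2 y hy
  have heqP₂ := fun t ht x hx =>
    (hsol (p₂, a₂) (mem_insert_of_mem _ rfl) t ht).1 x hx
  have heqA₂ := fun t ht y hy =>
    (hsol (p₂, a₂) (mem_insert_of_mem _ rfl) t ht).2 y hy
  -- bounds on kernels
  obtain ⟨K, hK0, hKψ, hKk, hKh⟩ : ∃ K : ℝ, 0 ≤ K ∧
      (∀ x ∈ Icc (0:ℝ) 1, ∀ y ∈ Icc (0:ℝ) 1, |ψ x y| ≤ K) ∧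
      (∀ x ∈ Icc (0:ℝ) 1, ∀ y ∈ Icc (0:ℝ) 1, |k x y| ≤ K) ∧
      (∀ x ∈ Icc (0:ℝ) 1, ∀ y ∈ Icc (0:ℝ) 1, |h x y| ≤ K) := by
    obtain ⟨Kψ, hKψb⟩ := (isCompact_Icc.prod isCompact_Icc).exists_bound_of_continuousOn hψc
    obtain ⟨Kk, hKkb⟩ := (isCompact_Icc.prod isCompact_Icc).exists_bound_of_continuousOn hkc
    obtain ⟨Kh, hKhb⟩ := (isCompact_Icc.prod isCompact_Icc).exists_bound_of_continuousOn hhc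
    have ha := abs_nonneg Kψ; have hb := abs_nonneg Kk; have hc := abs_nonneg Kh
    refine ⟨|Kψ| + |Kk| + |Kh|, by positivity, ?_, ?_, ?_⟩ <;> intro x hx y hy
    · have h1 : ‖ψ x y‖ ≤ |Kψ| := (hKψb (x, y) ⟨hx, hy⟩).trans (le_abs_self _)
      rw [Real.norm_eq_abs] at h1; linarith
    · have h1 : ‖k x y‖ ≤ |Kk| := (hKkb (x, y) ⟨hx, hy⟩).trans (le_abs_self _)
      rw [Real.norm_eq_abs] at h1; linarith
    · have h1 : ‖h x y‖ ≤ |Kh| := (hKhb (x, y) ⟨hx, hy⟩).trans (le_abs_self _)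
      rw [Real.norm_eq_abs] at h1; linarith
  -- bounds on solutions
  obtain ⟨M, hM0, hMp₁, hMa₁, hMp₂, hMa₂⟩ : ∃ M : ℝ, 0 ≤ M ∧
      (∀ t ∈ Icc (0:ℝ) T, ∀ x ∈ Icc (0:ℝ) 1, |p₁ t x| ≤ M) ∧
      (∀ t ∈ Icc (0:ℝ) T, ∀ x ∈ Icc (0:ℝ) 1, |a₁ t x| ≤ M) ∧
      (∀ t ∈ Icc (0:ℝ) T, ∀ x ∈ Icc (0:ℝ) 1, |p₂ t x| ≤ M) ∧
      (∀ t ∈ Icc (0:ℝ) T, ∀ x ∈ Icc (0:ℝ) 1, |a₂ t x| ≤ M) := by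
    obtain ⟨M₁, hM₁⟩ := (isCompact_Icc.prod isCompact_Icc).exists_bound_of_continuousOn hp₁c
    obtain ⟨M₂, hM₂⟩ := (isCompact_Icc.prod isCompact_Icc).exists_bound_of_continuousOn ha₁c
    obtain ⟨M₃, hM₃⟩ := (isCompact_Icc.prod isCompact_Icc).exists_bound_of_continuousOn hp₂c
    obtain ⟨M₄, hM₄⟩ := (isCompact_Icc.prod isCompact_Icc).exists_bound_of_continuousOn ha₂c
    have h1 := abs_nonneg M₁; have h2 := abs_nonneg M₂
    have h3 := abs_nonneg M₃; have h4 := abs_nonneg M₄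
    refine ⟨|M₁| + |M₂| + |M₃| + |M₄|, by positivity, ?_, ?_, ?_, ?_⟩ <;> intro t ht x hx
    · have hh : ‖p₁ t x‖ ≤ |M₁| := (hM₁ (t, x) ⟨ht, hx⟩).trans (le_abs_self _)
      rw [Real.norm_eq_abs] at hh; linarith
    · have hh : ‖a₁ t x‖ ≤ |M₂| := (hM₂ (t, x) ⟨ht, hx⟩).trans (le_abs_self _)
      rw [Real.norm_eq_abs] at hh; linarith
    · have hh : ‖p₂ t x‖ ≤ |M₃| := (hM₃ (t, x) ⟨ht, hx⟩).trans (le_abs_self _)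
      rw [Real.norm_eq_abs] at hh; linarith
    · have hh : ‖a₂ t x‖ ≤ |M₄| := (hM₄ (t, x) ⟨ht, hx⟩).trans (le_abs_self _)
      rw [Real.norm_eq_abs] at hh; linarith
  -- the constant
  have hLP0 : (0:ℝ) ≤ LP := LP.coe_nonneg
  have hLA0 : (0:ℝ) ≤ LA := LA.coe_nonneg
  obtain ⟨C, hC0, hCP, hCA⟩ : ∃ C : ℝ, 0 ≤ C ∧
      (|gP 0| + LP * K * M + K * M + M * (LP * K + K) ≤ C) ∧
      (|gA 0| + LA * K * M + K * M + M * (LA * K + K) ≤ C) := by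
    have h1 : (0:ℝ) ≤ |gP 0| + LP * K * M + K * M + M * (LP * K + K) := by positivity
    have h2 : (0:ℝ) ≤ |gA 0| + LA * K * M + K * M + M * (LA * K + K) := by positivity
    exact ⟨(|gP 0| + LP * K * M + K * M + M * (LP * K + K))
      + (|gA 0| + LA * K * M + K * M + M * (LA * K + K)),
      by linarith, by linarith, by linarith⟩
  -- the swapped kernel for the a-equation
  have hψ'c : ContinuousOn (fun q : ℝ × ℝ => ψ q.2 q.1) (Icc 0 1 ×ˢ Icc 0 1) :=
    hψc.comp (f := Prod.swap) continuous_swap.continuousOn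
      (fun q hq => ⟨hq.2, hq.1⟩)
  have hKψ' : ∀ y ∈ Icc (0:ℝ) 1, ∀ x ∈ Icc (0:ℝ) 1, |ψ x y| ≤ K :=
    fun y hy x hx => hKψ x hx y hy
  -- the integral computation
  have hintcomp : ∀ (n : ℕ) (t : ℝ),
      (∫ s in (0:ℝ)..t, C * (2 * M * (C * s) ^ n / (n.factorial : ℝ)))
        = 2 * M * (C * t) ^ (n + 1) / ((n + 1).factorial : ℝ) := by
    intro n t
    have hre : ∀ s : ℝ, C * (2 * M * (C * s) ^ n / (n.factorial : ℝ))
        = (C * (2 * M) * C ^ n / (n.factorial : ℝ)) * s ^ n := by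
      intro s; rw [mul_pow]; ring
    simp_rw [hre]
    rw [intervalIntegral.integral_const_mul, integral_pow, mul_pow]
    have hfac : ((n.factorial : ℝ)) ≠ 0 := Nat.cast_ne_zero.2 n.factorial_ne_zero
    have hn1 : ((n:ℝ) + 1) ≠ 0 := by positivity
    rw [Nat.factorial_succ]
    push_cast
    field_simp
    ring
  -- the key induction
  have key : ∀ n : ℕ, ∀ s ∈ Icc (0:ℝ) T, ∀ z ∈ Icc (0:ℝ) 1,
      |p₁ s z - p₂ s z| ≤ 2 * M * (C * s) ^ n / (n.factorial : ℝ) ∧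
      |a₁ s z - a₂ s z| ≤ 2 * M * (C * s) ^ n / (n.factorial : ℝ) := by
    intro n
    induction n with
    | zero =>
      intro s hs z hz
      simp only [pow_zero, Nat.factorial_zero, Nat.cast_one, mul_one, div_one]
      constructor
      · calc |p₁ s z - p₂ s z| ≤ |p₁ s z| + |p₂ s z| := abs_sub _ _
          _ ≤ 2 * M := by
            have := hMp₁ s hs z hz; have := hMp₂ s hs z hz; linarith
      · calc |a₁ s z - a₂ s z| ≤ |a₁ s z| + |a₂ s z| := abs_sub _ _
          _ ≤ 2 * M := by
            have := hMa₁ s hs z hz; have := hMa₂ s hs z hz; linarith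
    | succ n ih =>
      have hbc : Continuous (fun s : ℝ => 2 * M * (C * s) ^ n / (n.factorial : ℝ)) := by
        fun_prop
      have hb0 : ∀ s ∈ Icc (0:ℝ) T,
          0 ≤ 2 * M * (C * s) ^ n / (n.factorial : ℝ) := by
        intro s hs
        have h1 : 0 ≤ (C * s) ^ n := pow_nonneg (mul_nonneg hC0 hs.1) n
        positivity
      have hstepP := pp_step T ψ k hψc hkc gP LP hgP K M hKψ hKk
        p₁ a₁ p₂ a₂ hp₁c ha₁c hp₂c ha₂c hMp₁ hMa₁ hMp₂ hMa₂
        heqP₁ heqP₂ C hCP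
        (fun s : ℝ => 2 * M * (C * s) ^ n / (n.factorial : ℝ)) hbc hb0 ih hinitp
      have hstepA := pp_step T (fun y x => ψ x y) h hψ'c hhc gA LA hgA K M hKψ' hKh
        a₁ p₁ a₂ p₂ ha₁c hp₁c ha₂c hp₂c hMa₁ hMp₁ hMa₂ hMp₂
        heqA₁ heqA₂ C hCA
        (fun s : ℝ => 2 * M * (C * s) ^ n / (n.factorial : ℝ)) hbc hb0
        (fun s hs z hz => ⟨(ih s hs z hz).2, (ih s hs z hz).1⟩) hinita
      intro s hs z hz
      constructor
      · have := hstepP s hs z hz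
        rwa [hintcomp n s] at this
      · have := hstepA s hs z hz
        rwa [hintcomp n s] at this
  -- conclusion
  intro t ht
  have hlim : Filter.Tendsto (fun n : ℕ => 2 * M * ((C * t) ^ n / (n.factorial : ℝ)))
      Filter.atTop (nhds 0) := by
    have := (FloorSemiring.tendsto_pow_div_factorial_atTop (C * t)).const_mul (2 * M)
    simpa using this
  have hconc : ∀ (F₁ F₂ : ℝ → ℝ → ℝ) (z : ℝ),
      (∀ n : ℕ, |F₁ t z - F₂ t z| ≤ 2 * M * (C * t) ^ n / (n.factorial : ℝ)) →
      F₁ t z = F₂ t z := by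
    intro F₁ F₂ z hn
    have h1 : ∀ n : ℕ, |F₁ t z - F₂ t z| ≤ 2 * M * ((C * t) ^ n / (n.factorial : ℝ)) := by
      intro n; rw [← mul_div_assoc]; exact hn n
    have h2 : |F₁ t z - F₂ t z| ≤ 0 := ge_of_tendsto' hlim h1
    have := le_antisymm h2 (abs_nonneg _)
    exact sub_eq_zero.1 (abs_eq_zero.1 this)
  exact ⟨fun x hx => hconc p₁ p₂ x (fun n => (key n t ht x hx).1),
    fun y hy => hconc a₁ a₂ y (fun n => (key n t ht y hy).2)⟩
end
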